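/- arXiv:1211.5126 — 7 statements merged into one kernel-verified Lean document; each statement's English description precedes it below -/
import Mathlib

section
/- Let q ∈ [1,∞], m > 0, and let h : ℝ₊ → ℝ₊ be a nonnegative measurable function belonging to L^q(ℝ₊, ℝ) such that h(r) ≤ m h(t) for all t ≥ 0 and all r ∈ [t, t+1]. Then h ∈ L^∞(ℝ₊, ℝ) and h(r) ≤ m h(0) + m ‖h‖_q for every r ≥ 0 (so ‖h‖_∞ ≤ m h(0) + m ‖h‖_q). -/
open MeasureTheory Real Set
open scoped ENNReal NNReal

/-- If `h ∈ L^q(ℝ₊, ℝ)` is nonnegative and satisfies `h(r) ≤ m h(t)` for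
all `t ≥ 0` and `r ∈ [t, t+1]`, then `h ∈ L^∞(ℝ₊, ℝ)` and
`h(r) ≤ m h(0) + m ‖h‖_q` for every `r ≥ 0`. -/
theorem pointwise_bound_of_Lq_and_one_step_control
    (q : ℝ≥0∞) (hq : 1 ≤ q) (m : ℝ) (hm : 0 < m)
    (h : ℝ → ℝ) (hmeas : Measurable h) (hnonneg : ∀ t : ℝ, 0 ≤ t → 0 ≤ h t)
    (hLq : MemLp h q (MeasureTheory.volume.restrict (Set.Ici (0:ℝ))))
    (hstep : ∀ t : ℝ, 0 ≤ t → ∀ r : ℝ, r ∈ Set.Icc t (t + 1) → h r ≤ m * h t) :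
    MemLp h ⊤ (MeasureTheory.volume.restrict (Set.Ici (0:ℝ))) ∧
      ∀ r : ℝ, 0 ≤ r →
        h r ≤ m * h 0 +
          m * (eLpNorm h q (MeasureTheory.volume.restrict (Set.Ici (0:ℝ)))).toReal := by
  set μ := MeasureTheory.volume.restrict (Set.Ici (0:ℝ)) with hμ
  set N := (eLpNorm h q μ).toReal with hN
  have hN0 : 0 ≤ N := ENNReal.toReal_nonneg
  -- main pointwise bound
  have key : ∀ r : ℝ, 0 ≤ r → h r ≤ m * h 0 + m * N := by
    intro r hr
    rcases le_or_gt r 1 with hr1 | hr1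
    · have := hstep 0 le_rfl r ⟨hr, by linarith⟩
      nlinarith
    · -- r > 1 : use the interval I = Icc (r-1) r
      have hrm : ∀ t ∈ Set.Icc (r - 1) r, ENNReal.ofReal (h r / m) ≤ ‖h t‖ₑ := by
        intro t ht
        have ht0 : (0:ℝ) ≤ t := by linarith [ht.1]
        have hb := hstep t ht0 r ⟨ht.2, by linarith [ht.1]⟩
        have : h r / m ≤ h t := (div_le_iff₀' hm).2 hb
        calc ENNReal.ofReal (h r / m) ≤ ENNReal.ofReal (h t) := ENNReal.ofReal_le_ofReal this
          _ = ‖h t‖ₑ := by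
              rw [Real.enorm_eq_ofReal (hnonneg t ht0)]
      set ν := MeasureTheory.volume.restrict (Set.Icc (r - 1) r) with hν
      have hνuniv : ν Set.univ = 1 := by
        simp [hν, Real.volume_Icc]
      have h1 : ENNReal.ofReal (h r / m) ≤ eLpNorm h 1 ν := by
        rw [eLpNorm_one_eq_lintegral_enorm]
        calc ENNReal.ofReal (h r / m)
            = ENNReal.ofReal (h r / m) * ν Set.univ := by rw [hνuniv, mul_one]
          _ = ∫⁻ _, ENNReal.ofReal (h r / m) ∂ν := by rw [lintegral_const]
          _ ≤ ∫⁻ t, ‖h t‖ₑ ∂ν := by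
              rw [hν]
              refine lintegral_mono_ae ?_
              filter_upwards [ae_restrict_mem measurableSet_Icc] with t ht
              exact hrm t ht
      have h2 : eLpNorm h 1 ν ≤ eLpNorm h q ν := by
        have := eLpNorm_le_eLpNorm_mul_rpow_measure_univ (μ := ν) hq
          hmeas.aestronglyMeasurable
        simpa [hνuniv] using this
      have h3 : eLpNorm h q ν ≤ eLpNorm h q μ := by
        refine eLpNorm_mono_measure _ ?_
        rw [hν, hμ]
        exact Measure.restrict_mono (fun t ht => by exact le_trans (by linarith) ht.1) le_rfl
      have hfin : eLpNorm h q μ ≠ ⊤ := hLq.2.ne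
      have : h r / m ≤ N := by
        have hle : ENNReal.ofReal (h r / m) ≤ eLpNorm h q μ := h1.trans (h2.trans h3)
        have := ENNReal.toReal_mono hfin hle
        rwa [ENNReal.toReal_ofReal (div_nonneg (hnonneg r hr) hm.le)] at this
      have hmr : h r ≤ m * N := (div_le_iff₀' hm).1 this
      nlinarith [hnonneg 0 le_rfl]
  refine ⟨?_, key⟩
  refine memLp_top_of_bound hmeas.aestronglyMeasurable (m * h 0 + m * N) ?_
  rw [hμ]
  filter_upwards [ae_restrict_mem measurableSet_Ici] with r hr
  rw [Real.norm_eq_abs, abs_of_nonneg (hnonneg r hr)]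
  exact key r hr
end

section
/- Let 𝕏 be a Banach space, {X(t,s)}_{(t,s)∈Δ} a continuous evolution family on 𝕏, and p, q ∈ [1,∞] with (p,q) ≠ (1,∞). If the pair (L^p(ℝ₊,𝕏), L^q(ℝ₊,𝕏)) is admissible to {X(t,s)}_{(t,s)∈Δ}, then {X(t,s)}_{(t,s)∈Δ} is uniformly exponentially stable, i.e., there exist N, ν > 0 such that ‖X(t,s)x − X(t,s)y‖ ≤ N e^{−ν(t−s)} ‖x − y‖ for all (t,s) ∈ Δ and all x, y ∈ 𝕏. -/
open MeasureTheory Real Set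
open scoped ENNReal NNReal

set_option linter.unusedSectionVars false

section Aux

variable {𝕏 : Type*} [NormedAddCommGroup 𝕏] [NormedSpace ℝ 𝕏] [CompleteSpace 𝕏]

lemma evol_cont_slice (X : ℝ → ℝ → 𝕏 → 𝕏)
    (hX_cont : ContinuousOn (fun p : ℝ × ℝ × 𝕏 => X p.1 p.2.1 p.2.2)
      {p : ℝ × ℝ × 𝕏 | 0 ≤ p.2.1 ∧ p.2.1 ≤ p.1}) (r : ℝ) (z : 𝕏) :
    ContinuousOn (fun τ => X r τ z) (Icc 0 r) := by
  have h : (fun τ : ℝ => X r τ z)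
      = (fun p : ℝ × ℝ × 𝕏 => X p.1 p.2.1 p.2.2) ∘ (fun τ : ℝ => (r, τ, z)) := rfl
  rw [h]
  apply hX_cont.comp
  · exact (continuous_const.prodMk (continuous_id.prodMk continuous_const)).continuousOn
  · intro τ hτ
    exact ⟨hτ.1, hτ.2⟩

lemma evol_cont_slice2 (X : ℝ → ℝ → 𝕏 → 𝕏)
    (hX_cont : ContinuousOn (fun p : ℝ × ℝ × 𝕏 => X p.1 p.2.1 p.2.2)
      {p : ℝ × ℝ × 𝕏 | 0 ≤ p.2.1 ∧ p.2.1 ≤ p.1}) {a : ℝ} (ha : 0 ≤ a) (x : 𝕏) :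
    ContinuousOn (fun τ => X τ a x) (Ici a) := by
  have h : (fun τ : ℝ => X τ a x)
      = (fun p : ℝ × ℝ × 𝕏 => X p.1 p.2.1 p.2.2) ∘ (fun τ : ℝ => (τ, a, x)) := rfl
  rw [h]
  apply hX_cont.comp
  · exact (continuous_id.prodMk (continuous_const.prodMk continuous_const)).continuousOn
  · intro τ hτ
    exact ⟨ha, hτ⟩

lemma evol_ptwise (X : ℝ → ℝ → 𝕏 → 𝕏)
    (hX_cocycle : ∀ s r t : ℝ, 0 ≤ s → s ≤ r → r ≤ t →
      ∀ x : 𝕏, X t s x = X t r (X r s x))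
    {a b r : ℝ} (ha : 0 ≤ a) (x : 𝕏) :
    ∀ τ ∈ Ioc (0:ℝ) r,
      X r τ ((Ioc a b).indicator (fun τ' => X τ' a x) τ)
        = X r τ 0 + (Ioc a b).indicator (fun τ' => X r a x - X r τ' 0) τ := by
  intro τ hτ
  by_cases hm : τ ∈ Ioc a b
  · rw [indicator_of_mem hm, indicator_of_mem hm]
    rw [← hX_cocycle a τ r ha hm.1.le hτ.2]
    abel
  · rw [indicator_of_notMem hm, indicator_of_notMem hm, add_zero]

lemma evol_integrableOn (X : ℝ → ℝ → 𝕏 → 𝕏)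
    (hX_cocycle : ∀ s r t : ℝ, 0 ≤ s → s ≤ r → r ≤ t →
      ∀ x : 𝕏, X t s x = X t r (X r s x))
    (hX_cont : ContinuousOn (fun p : ℝ × ℝ × 𝕏 => X p.1 p.2.1 p.2.2)
      {p : ℝ × ℝ × 𝕏 | 0 ≤ p.2.1 ∧ p.2.1 ≤ p.1})
    {a b r : ℝ} (ha : 0 ≤ a) (hr : 0 ≤ r) (x : 𝕏) :
    IntegrableOn (fun τ => X r τ ((Ioc a b).indicator (fun τ' => X τ' a x) τ))
      (Ioc 0 r) volume := by
  have hcont0 : ContinuousOn (fun τ => X r τ (0:𝕏)) (Icc 0 r) :=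
    evol_cont_slice X hX_cont r 0
  have h1 : IntegrableOn (fun τ => X r τ (0:𝕏)) (Ioc 0 r) volume :=
    (hcont0.integrableOn_Icc).mono_set Ioc_subset_Icc_self
  have h2 : IntegrableOn ((Ioc a b).indicator (fun τ' => X r a x - X r τ' 0))
      (Ioc 0 r) volume := by
    rw [IntegrableOn, integrable_indicator_iff measurableSet_Ioc, IntegrableOn,
      Measure.restrict_restrict measurableSet_Ioc]
    have : IntegrableOn (fun τ' => X r a x - X r τ' 0) (Icc 0 r) volume :=
      (continuousOn_const.sub hcont0).integrableOn_Icc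
    exact this.mono_set (inter_subset_right.trans Ioc_subset_Icc_self)
  exact IntegrableOn.congr_fun (h1.add h2)
    (fun τ hτ => (evol_ptwise X hX_cocycle ha x τ hτ).symm) measurableSet_Ioc

lemma evol_green_diff (X : ℝ → ℝ → 𝕏 → 𝕏)
    (hX_cocycle : ∀ s r t : ℝ, 0 ≤ s → s ≤ r → r ≤ t →
      ∀ x : 𝕏, X t s x = X t r (X r s x))
    (hX_cont : ContinuousOn (fun p : ℝ × ℝ × 𝕏 => X p.1 p.2.1 p.2.2)
      {p : ℝ × ℝ × 𝕏 | 0 ≤ p.2.1 ∧ p.2.1 ≤ p.1})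
    {a b r : ℝ} (ha : 0 ≤ a) (hr : 0 ≤ r) (x y : 𝕏) :
    (∫ τ in (0:ℝ)..r, X r τ ((Ioc a b).indicator (fun τ' => X τ' a x) τ)) -
      (∫ τ in (0:ℝ)..r, X r τ ((Ioc a b).indicator (fun τ' => X τ' a y) τ)) =
      (volume (Ioc a b ∩ Ioc 0 r)).toReal • (X r a x - X r a y) := by
  rw [intervalIntegral.integral_of_le hr, intervalIntegral.integral_of_le hr]
  rw [← integral_sub (evol_integrableOn X hX_cocycle hX_cont ha hr x)
    (evol_integrableOn X hX_cocycle hX_cont ha hr y)]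
  have heq : EqOn
      (fun τ => X r τ ((Ioc a b).indicator (fun τ' => X τ' a x) τ)
        - X r τ ((Ioc a b).indicator (fun τ' => X τ' a y) τ))
      ((Ioc a b).indicator (fun _ => X r a x - X r a y)) (Ioc 0 r) := by
    intro τ hτ
    simp only [evol_ptwise X hX_cocycle ha x τ hτ, evol_ptwise X hX_cocycle ha y τ hτ]
    by_cases hm : τ ∈ Ioc a b
    · simp only [indicator_of_mem hm]
      abel
    · simp only [indicator_of_notMem hm]
      abel
  rw [setIntegral_congr_fun measurableSet_Ioc heq]
  rw [integral_indicator measurableSet_Ioc, Measure.restrict_restrict measurableSet_Ioc,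
    setIntegral_const]
  rfl

end Aux

section Aux2

variable {𝕏 : Type*} [NormedAddCommGroup 𝕏] [NormedSpace ℝ 𝕏] [CompleteSpace 𝕏]

lemma evol_memLp (X : ℝ → ℝ → 𝕏 → 𝕏)
    (hX_cont : ContinuousOn (fun p : ℝ × ℝ × 𝕏 => X p.1 p.2.1 p.2.2)
      {p : ℝ × ℝ × 𝕏 | 0 ≤ p.2.1 ∧ p.2.1 ≤ p.1})
    {a b : ℝ} (ha : 0 ≤ a) (x : 𝕏) (p : ℝ≥0∞) :
    MemLp ((Ioc a b).indicator (fun τ => X τ a x)) p (volume.restrict (Ici (0:ℝ))) := by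
  rw [memLp_indicator_iff_restrict measurableSet_Ioc,
    Measure.restrict_restrict measurableSet_Ioc]
  have hsub : Ioc a b ∩ Ici 0 ⊆ Icc a b := fun τ hτ => ⟨hτ.1.1.le, hτ.1.2⟩
  have hcont : ContinuousOn (fun τ => X τ a x) (Icc a b) :=
    (evol_cont_slice2 X hX_cont ha x).mono (fun τ hτ => hτ.1)
  obtain ⟨C0, hC0⟩ := (isCompact_Icc).exists_bound_of_continuousOn hcont
  haveI : IsFiniteMeasure (volume.restrict (Ioc a b ∩ Ici (0:ℝ))) := by
    constructor
    rw [Measure.restrict_apply_univ]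
    exact lt_of_le_of_lt (measure_mono hsub)
      (by rw [Real.volume_Icc]; exact ENNReal.ofReal_lt_top)
  refine MemLp.of_bound ?_ C0 ?_
  · exact (hcont.aestronglyMeasurable measurableSet_Icc).mono_measure
      (Measure.restrict_mono hsub le_rfl)
  · exact (ae_restrict_mem (measurableSet_Ioc.inter measurableSet_Ici)).mono
      (fun τ hτ => hC0 τ (hsub hτ))

lemma evol_eLpNorm_sub_le {h1 h2 : ℝ → 𝕏} {a b c : ℝ} (hc : 0 ≤ c)
    (hbd : ∀ τ ∈ Ioc a b, ‖h1 τ - h2 τ‖ ≤ c) (p : ℝ≥0∞) :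
    eLpNorm ((Ioc a b).indicator h1 - (Ioc a b).indicator h2) p (volume.restrict (Ici (0:ℝ)))
      ≤ ENNReal.ofReal c * (volume (Ioc a b)) ^ (1 / p.toReal) := by
  have hmono : ∀ τ, ‖((Ioc a b).indicator h1 - (Ioc a b).indicator h2) τ‖
      ≤ ‖(Ioc a b).indicator (fun _ => c) τ‖ := by
    intro τ
    simp only [Pi.sub_apply]
    by_cases hm : τ ∈ Ioc a b
    · simp only [indicator_of_mem hm]
      rw [Real.norm_of_nonneg hc]
      exact hbd τ hm
    · simp [indicator_of_notMem hm]
  calc eLpNorm ((Ioc a b).indicator h1 - (Ioc a b).indicator h2) p (volume.restrict (Ici (0:ℝ)))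
      ≤ eLpNorm ((Ioc a b).indicator (fun _ => c)) p (volume.restrict (Ici (0:ℝ))) :=
        eLpNorm_mono hmono
    _ ≤ (‖c‖₊ : ℝ≥0∞) * ((volume.restrict (Ici (0:ℝ))) (Ioc a b)) ^ (1 / p.toReal) :=
        eLpNorm_indicator_const_le _ _
    _ ≤ ENNReal.ofReal c * (volume (Ioc a b)) ^ (1 / p.toReal) := by
        apply mul_le_mul
        · rw [← Real.enorm_eq_ofReal hc]
          exact le_of_eq (enorm_eq_nnnorm c).symm
        · apply ENNReal.rpow_le_rpow _ (by positivity)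
          rw [Measure.restrict_apply measurableSet_Ioc]
          exact measure_mono inter_subset_left
        · exact zero_le
        · exact zero_le

lemma evol_eLpNorm_lower {F : ℝ → 𝕏} {A : Set ℝ} (hA : MeasurableSet A) (hA0 : A ⊆ Ici (0:ℝ))
    (hApos : volume A ≠ 0) {c : ℝ} (hc : 0 ≤ c) (hbd : ∀ t ∈ A, c ≤ ‖F t‖)
    {q : ℝ≥0∞} (hq : q ≠ 0) :
    ENNReal.ofReal c * (volume A) ^ (1 / q.toReal) ≤ eLpNorm F q (volume.restrict (Ici (0:ℝ))) := by
  have h1 : eLpNorm F q (volume.restrict A) ≤ eLpNorm F q (volume.restrict (Ici (0:ℝ))) :=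
    eLpNorm_mono_measure _ (Measure.restrict_mono hA0 le_rfl)
  refine le_trans ?_ h1
  have h2 : eLpNorm (fun _ => c) q (volume.restrict A) ≤ eLpNorm F q (volume.restrict A) := by
    apply eLpNorm_mono_ae
    exact (ae_restrict_mem hA).mono (fun t ht => by
      rw [Real.norm_of_nonneg hc]; exact hbd t ht)
  rw [eLpNorm_const c hq (by
    simp only [ne_eq, Measure.restrict_eq_zero]; exact hApos)] at h2
  rw [Measure.restrict_apply_univ] at h2
  refine le_trans (le_of_eq ?_) h2
  rw [← Real.enorm_eq_ofReal hc]

end Aux2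

section Step1

variable {𝕏 : Type*} [NormedAddCommGroup 𝕏] [NormedSpace ℝ 𝕏] [CompleteSpace 𝕏]

lemma evol_step1 (X : ℝ → ℝ → 𝕏 → 𝕏)
    (hX_cocycle : ∀ s r t : ℝ, 0 ≤ s → s ≤ r → r ≤ t →
      ∀ x : 𝕏, X t s x = X t r (X r s x))
    (M ω : ℝ) (hM : 0 < M) (hω : 0 < ω)
    (hX_lip : ∀ s t : ℝ, 0 ≤ s → s ≤ t → ∀ x y : 𝕏,
      ‖X t s x - X t s y‖ ≤ M * Real.exp (ω * (t - s)) * ‖x - y‖)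
    (hX_cont : ContinuousOn (fun p : ℝ × ℝ × 𝕏 => X p.1 p.2.1 p.2.2)
      {p : ℝ × ℝ × 𝕏 | 0 ≤ p.2.1 ∧ p.2.1 ≤ p.1})
    (p q : ℝ≥0∞) (hq : 1 ≤ q)
    (K : ℝ) (hK : 0 < K)
    (hKlip : ∀ f g : ℝ → 𝕏,
      MemLp f p (MeasureTheory.volume.restrict (Set.Ici (0:ℝ))) →
      MemLp g p (MeasureTheory.volume.restrict (Set.Ici (0:ℝ))) →
      eLpNorm (fun t : ℝ =>
          (∫ s in (0:ℝ)..t, X t s (f s)) - ∫ s in (0:ℝ)..t, X t s (g s)) q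
        (MeasureTheory.volume.restrict (Set.Ici (0:ℝ))) ≤
      ENNReal.ofReal K *
        eLpNorm (f - g) p (MeasureTheory.volume.restrict (Set.Ici (0:ℝ)))) :
    ∃ C : ℝ, 0 < C ∧ ∀ s t : ℝ, 0 ≤ s → s ≤ t → ∀ x y : 𝕏,
      ‖X t s x - X t s y‖ ≤ C * ‖x - y‖ := by
  refine ⟨M * Real.exp (2*ω) * (1 + K * M), by positivity, ?_⟩
  intro s t hs hst x y
  have hexp := Real.exp_pos ω
  have hnn := norm_nonneg (x - y)
  by_cases hcase : t ≤ s + 2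
  · have h1 := hX_lip s t hs hst x y
    have h2 : Real.exp (ω * (t - s)) ≤ Real.exp (2*ω) :=
      Real.exp_le_exp.2 (by nlinarith)
    have h3 : (1:ℝ) ≤ 1 + K * M := by nlinarith
    have h4 := Real.exp_pos (2*ω)
    calc ‖X t s x - X t s y‖ ≤ M * Real.exp (ω * (t - s)) * ‖x - y‖ := h1
      _ ≤ M * Real.exp (2*ω) * ‖x - y‖ := by
          nlinarith [mul_le_mul_of_nonneg_right (mul_le_mul_of_nonneg_left h2 hM.le) hnn]
      _ = M * Real.exp (2*ω) * ‖x - y‖ * 1 := by ring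
      _ ≤ M * Real.exp (2*ω) * ‖x - y‖ * (1 + K * M) := by
          nlinarith [mul_le_mul_of_nonneg_left h3
            (by positivity : (0:ℝ) ≤ M * Real.exp (2*ω) * ‖x - y‖)]
      _ = M * Real.exp (2*ω) * (1 + K * M) * ‖x - y‖ := by ring
  · push_neg at hcase
    set f : ℝ → 𝕏 := (Ioc s (s+1)).indicator (fun τ => X τ s x) with hf
    set g : ℝ → 𝕏 := (Ioc s (s+1)).indicator (fun τ => X τ s y) with hg
    have hup := hKlip f g (evol_memLp X hX_cont hs x p) (evol_memLp X hX_cont hs y p)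
    -- lower bound on the Green function difference
    have hlow : ∀ r ∈ Ioc (t-1) t,
        ‖X t s x - X t s y‖ / (M * Real.exp ω) ≤
        ‖(fun t : ℝ => (∫ s' in (0:ℝ)..t, X t s' (f s')) -
          ∫ s' in (0:ℝ)..t, X t s' (g s')) r‖ := by
      intro r hr
      have hsr : s ≤ r := by cases hr; linarith
      have hr0 : (0:ℝ) ≤ r := le_trans hs hsr
      have hgreen := evol_green_diff X hX_cocycle hX_cont hs hr0 x y (b := s+1)
      have hinter : Ioc s (s+1) ∩ Ioc (0:ℝ) r = Ioc s (s+1) := by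
        apply inter_eq_left.2
        intro τ hτ
        cases hτ; constructor <;> [linarith; linarith [hr.1]]
      rw [hinter] at hgreen
      have hvol : (volume (Ioc s (s+1))).toReal = 1 := by
        rw [Real.volume_Ioc]
        norm_num
      rw [hvol, one_smul] at hgreen
      simp only [hf, hg]
      rw [hgreen]
      -- ‖X t s x - X t s y‖ ≤ M e^{ω(t-r)} ‖X r s x - X r s y‖ ≤ M e^ω ‖...‖
      have hcoc : X t s x = X t r (X r s x) := hX_cocycle s r t hs hsr hr.2 x
      have hcoc' : X t s y = X t r (X r s y) := hX_cocycle s r t hs hsr hr.2 y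
      have hl := hX_lip r t hr0 hr.2 (X r s x) (X r s y)
      rw [← hcoc, ← hcoc'] at hl
      have he : Real.exp (ω * (t - r)) ≤ Real.exp ω :=
        Real.exp_le_exp.2 (by nlinarith [hr.1])
      rw [div_le_iff₀ (by positivity)]
      calc ‖X t s x - X t s y‖ ≤ M * Real.exp (ω * (t-r)) * ‖X r s x - X r s y‖ := hl
        _ ≤ ‖X r s x - X r s y‖ * (M * Real.exp ω) := by
            nlinarith [norm_nonneg (X r s x - X r s y),
              mul_le_mul_of_nonneg_left he hM.le]
    have hlower := evol_eLpNorm_lower (F := fun t : ℝ =>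
        (∫ s' in (0:ℝ)..t, X t s' (f s')) - ∫ s' in (0:ℝ)..t, X t s' (g s'))
      measurableSet_Ioc (fun r hr => by simp only [mem_Ici]; cases hr; linarith)
      (by rw [Real.volume_Ioc]; simp) (by positivity) hlow
      ((zero_lt_one.trans_le hq).ne')
    have hvol1 : volume (Ioc (t-1) t) = 1 := by
      rw [Real.volume_Ioc]; norm_num
    rw [hvol1, ENNReal.one_rpow, mul_one] at hlower
    -- upper bound
    have hbd : ∀ τ ∈ Ioc s (s+1), ‖X τ s x - X τ s y‖ ≤ M * Real.exp ω * ‖x - y‖ := by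
      intro τ hτ
      have := hX_lip s τ hs hτ.1.le x y
      have he : Real.exp (ω * (τ - s)) ≤ Real.exp ω :=
        Real.exp_le_exp.2 (by nlinarith [hτ.2])
      nlinarith [mul_le_mul_of_nonneg_right (mul_le_mul_of_nonneg_left he hM.le) hnn]
    have hupper := evol_eLpNorm_sub_le (by positivity) hbd p
    have hvol2 : volume (Ioc s (s+1)) = 1 := by
      rw [Real.volume_Ioc]; norm_num
    rw [hvol2, ENNReal.one_rpow, mul_one] at hupper
    have hchain := le_trans hlower (le_trans hup
      (mul_le_mul_right hupper (ENNReal.ofReal K)))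
    rw [← ENNReal.ofReal_mul hK.le] at hchain
    have hreal : ‖X t s x - X t s y‖ / (M * Real.exp ω) ≤ K * (M * Real.exp ω * ‖x - y‖) :=
      (ENNReal.ofReal_le_ofReal_iff (by positivity)).1 hchain
    rw [div_le_iff₀ (by positivity)] at hreal
    have hexp2 : Real.exp (2*ω) = Real.exp ω * Real.exp ω := by
      rw [two_mul, Real.exp_add]
    rw [hexp2]
    nlinarith [hreal, mul_nonneg (mul_nonneg (mul_nonneg hM.le hexp.le) hexp.le) hnn]

end Step1

section Step2

lemma evol_gamma_pos (p q : ℝ≥0∞) (hp : 1 ≤ p) (hq : 1 ≤ q) (hpq : ¬(p = 1 ∧ q = ∞)) :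
    0 < 1 + 1/q.toReal - 1/p.toReal := by
  have hαq : 0 ≤ 1/q.toReal := by positivity
  by_cases hp1 : p = 1
  · have hqtop : q ≠ ∞ := fun h => hpq ⟨hp1, h⟩
    have hq0 : q ≠ 0 := (zero_lt_one.trans_le hq).ne'
    have : 0 < q.toReal := ENNReal.toReal_pos hq0 hqtop
    have : 0 < 1/q.toReal := by positivity
    rw [hp1]
    simp only [ENNReal.toReal_one]
    linarith
  · by_cases hptop : p = ∞
    · rw [hptop]
      simp only [ENNReal.toReal_top, div_zero]
      linarith
    · have h1 : (1:ℝ≥0∞) < p := lt_of_le_of_ne hp (Ne.symm hp1)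
      have h2 : (1:ℝ) < p.toReal := by
        have := (ENNReal.toReal_lt_toReal (by simp) hptop).2 h1
        simpa using this
      have h3 : 1/p.toReal < 1 := by
        rw [div_lt_one (by linarith)]
        exact h2
      linarith

end Step2

section Step2b

variable {𝕏 : Type*} [NormedAddCommGroup 𝕏] [NormedSpace ℝ 𝕏] [CompleteSpace 𝕏]

lemma evol_step2 (X : ℝ → ℝ → 𝕏 → 𝕏)
    (hX_cocycle : ∀ s r t : ℝ, 0 ≤ s → s ≤ r → r ≤ t →
      ∀ x : 𝕏, X t s x = X t r (X r s x))
    (hX_cont : ContinuousOn (fun p : ℝ × ℝ × 𝕏 => X p.1 p.2.1 p.2.2)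
      {p : ℝ × ℝ × 𝕏 | 0 ≤ p.2.1 ∧ p.2.1 ≤ p.1})
    (p q : ℝ≥0∞) (hp : 1 ≤ p) (hq : 1 ≤ q) (hpq : ¬(p = 1 ∧ q = ∞))
    (K : ℝ) (hK : 0 < K)
    (hKlip : ∀ f g : ℝ → 𝕏,
      MemLp f p (MeasureTheory.volume.restrict (Set.Ici (0:ℝ))) →
      MemLp g p (MeasureTheory.volume.restrict (Set.Ici (0:ℝ))) →
      eLpNorm (fun t : ℝ =>
          (∫ s in (0:ℝ)..t, X t s (f s)) - ∫ s in (0:ℝ)..t, X t s (g s)) q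
        (MeasureTheory.volume.restrict (Set.Ici (0:ℝ))) ≤
      ENNReal.ofReal K *
        eLpNorm (f - g) p (MeasureTheory.volume.restrict (Set.Ici (0:ℝ))))
    (C : ℝ) (hC : 0 < C)
    (hCbd : ∀ s t : ℝ, 0 ≤ s → s ≤ t → ∀ x y : 𝕏, ‖X t s x - X t s y‖ ≤ C * ‖x - y‖) :
    ∃ T : ℝ, 1 ≤ T ∧ ∀ s : ℝ, 0 ≤ s → ∀ x y : 𝕏,
      ‖X (s+T) s x - X (s+T) s y‖ ≤ (1/2) * ‖x - y‖ := by
  have hq0 : q ≠ 0 := (zero_lt_one.trans_le hq).ne'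
  set αp := 1 / p.toReal with hαp
  set αq := 1 / q.toReal with hαq
  have hαq0 : 0 ≤ αq := by positivity
  have hαq1 : αq ≤ 1 := by
    by_cases hqtop : q = ∞
    · rw [hαq, hqtop]; simp
    · have : 1 ≤ q.toReal := by
        have := ENNReal.toReal_mono hqtop hq
        simpa using this
      rw [hαq]
      rw [div_le_one (by linarith)]
      linarith
  have hγpos : 0 < 1 + αq - αp := evol_gamma_pos p q hp hq hpq
  set γ := 1 + αq - αp with hγ
  set T := max 1 ((8*K*C^2) ^ (1/γ) : ℝ) with hT
  have hT1 : (1:ℝ) ≤ T := le_max_left _ _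
  have hTpos : (0:ℝ) < T := lt_of_lt_of_le zero_lt_one hT1
  have hTγ : 8*K*C^2 ≤ T ^ γ := by
    have h8 : (0:ℝ) < 8*K*C^2 := by positivity
    have heq : ((8*K*C^2) ^ (1/γ)) ^ γ = 8*K*C^2 := by
      rw [← Real.rpow_mul h8.le, one_div_mul_cancel hγpos.ne', Real.rpow_one]
    calc 8*K*C^2 = ((8*K*C^2) ^ (1/γ)) ^ γ := heq.symm
      _ ≤ T ^ γ := Real.rpow_le_rpow (Real.rpow_nonneg h8.le _) (le_max_right _ _) hγpos.le
  refine ⟨T, hT1, ?_⟩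
  intro s hs x y
  set t := s + T with ht
  have hst : s ≤ t := by rw [ht]; linarith
  set f : ℝ → 𝕏 := (Ioc s t).indicator (fun τ => X τ s x) with hf
  set g : ℝ → 𝕏 := (Ioc s t).indicator (fun τ => X τ s y) with hg
  have hup := hKlip f g (evol_memLp X hX_cont hs x p) (evol_memLp X hX_cont hs y p)
  set d := ‖X t s x - X t s y‖ with hd
  have hd0 : 0 ≤ d := norm_nonneg _
  have hnn : (0:ℝ) ≤ ‖x - y‖ := norm_nonneg _
  -- lower bound on the Green difference on Ioc (s+T/2) t
  have hlow : ∀ r ∈ Ioc (s + T/2) t,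
      (T/2) * (d / C) ≤
      ‖(fun t' : ℝ => (∫ s' in (0:ℝ)..t', X t' s' (f s')) -
        ∫ s' in (0:ℝ)..t', X t' s' (g s')) r‖ := by
    intro r hr
    have hsr : s ≤ r := by cases hr; linarith
    have hr0 : (0:ℝ) ≤ r := le_trans hs hsr
    have hgreen := evol_green_diff X hX_cocycle hX_cont hs hr0 x y (b := t)
    have hinter : Ioc s t ∩ Ioc (0:ℝ) r = Ioc s r := by
      rw [Set.Ioc_inter_Ioc, max_eq_left hs, min_eq_right hr.2]
    rw [hinter] at hgreen
    simp only [hf, hg]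
    rw [hgreen]
    rw [Real.volume_Ioc, ENNReal.toReal_ofReal (by linarith)]
    rw [norm_smul, Real.norm_of_nonneg (by linarith : (0:ℝ) ≤ r - s)]
    have hcoc : X t s x = X t r (X r s x) := hX_cocycle s r t hs hsr hr.2 x
    have hcoc' : X t s y = X t r (X r s y) := hX_cocycle s r t hs hsr hr.2 y
    have hdr : d ≤ C * ‖X r s x - X r s y‖ := by
      rw [hd, hcoc, hcoc']
      exact hCbd r t hr0 hr.2 (X r s x) (X r s y)
    have h1 : d / C ≤ ‖X r s x - X r s y‖ := by
      rw [div_le_iff₀ hC]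
      linarith [hdr]
    exact mul_le_mul (by linarith [hr.1]) h1 (by positivity) (by linarith)
  have hlower := evol_eLpNorm_lower (F := fun t' : ℝ =>
      (∫ s' in (0:ℝ)..t', X t' s' (f s')) - ∫ s' in (0:ℝ)..t', X t' s' (g s'))
    measurableSet_Ioc (fun r hr => by simp only [mem_Ici]; cases hr; linarith)
    (by rw [Real.volume_Ioc, ne_eq, ENNReal.ofReal_eq_zero]; push_neg; rw [ht]; linarith)
    (by positivity) hlow hq0
  have hvolA : volume (Ioc (s + T/2) t) = ENNReal.ofReal (T/2) := by
    rw [Real.volume_Ioc]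
    congr 1
    rw [ht]; ring
  rw [hvolA] at hlower
  -- upper bound
  have hbd : ∀ τ ∈ Ioc s t, ‖X τ s x - X τ s y‖ ≤ C * ‖x - y‖ :=
    fun τ hτ => hCbd s τ hs hτ.1.le x y
  have hupper := evol_eLpNorm_sub_le (by positivity) hbd p
  have hvolB : volume (Ioc s t) = ENNReal.ofReal T := by
    rw [Real.volume_Ioc]
    congr 1
    rw [ht]; ring
  rw [hvolB] at hupper
  have hchain := le_trans hlower (le_trans hup
    (mul_le_mul_right hupper (ENNReal.ofReal K)))
  -- convert to a real inequality
  rw [ENNReal.ofReal_rpow_of_pos (by linarith : (0:ℝ) < T/2),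
    ENNReal.ofReal_rpow_of_pos hTpos,
    ← ENNReal.ofReal_mul (by positivity : (0:ℝ) ≤ (T/2) * (d/C)),
    ← ENNReal.ofReal_mul (by positivity : (0:ℝ) ≤ C * ‖x - y‖),
    ← ENNReal.ofReal_mul hK.le] at hchain
  have hreal : (T/2) * (d/C) * (T/2)^αq ≤ K * (C * ‖x - y‖ * T^αp) :=
    (ENNReal.ofReal_le_ofReal_iff (by positivity)).1 hchain
  -- algebraic manipulation
  set a := T ^ αp with ha
  set b := T ^ γ with hb
  have hapos : 0 < a := Real.rpow_pos_of_pos hTpos _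
  have hbpos : 0 < b := Real.rpow_pos_of_pos hTpos _
  set c2 := (2:ℝ) ^ (1 + αq) with hc2
  have hc2pos : 0 < c2 := Real.rpow_pos_of_pos (by norm_num) _
  have hc2le : c2 ≤ 4 := by
    have h24 : (2:ℝ) ^ (2:ℝ) = 4 := by
      rw [show (2:ℝ) = ((2:ℕ):ℝ) from by norm_num]
      rw [Real.rpow_natCast]
      norm_num
    calc c2 ≤ (2:ℝ) ^ (2:ℝ) :=
          Real.rpow_le_rpow_of_exponent_le (by norm_num) (by linarith)
      _ = 4 := h24
  have hkey : (T/2) * (T/2)^αq = a * b / c2 := by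
    have e1 : (T/2) * (T/2)^αq = (T/2) ^ (1 + αq) := by
      rw [Real.rpow_add (by linarith : (0:ℝ) < T/2), Real.rpow_one]
    have e2 : ((T:ℝ)/2) ^ (1 + αq) = T ^ (1 + αq) / c2 := by
      rw [Real.div_rpow hTpos.le (by norm_num : (0:ℝ) ≤ 2)]
    have e3 : (T:ℝ) ^ (1 + αq) = a * b := by
      rw [ha, hb, ← Real.rpow_add hTpos]
      congr 1
      rw [hγ]; ring
    rw [e1, e2, e3]
  have hreal2 : d / C * (a * b / c2) ≤ K * (C * ‖x - y‖ * a) := by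
    calc d / C * (a * b / c2) = (T/2) * (d/C) * (T/2)^αq := by rw [← hkey]; ring
      _ ≤ K * (C * ‖x - y‖ * a) := hreal
  have hreal3 : d * b ≤ K * C^2 * ‖x - y‖ * c2 := by
    have hmul := mul_le_mul_of_nonneg_right hreal2
      (by positivity : (0:ℝ) ≤ C * c2)
    have hL : d / C * (a * b / c2) * (C * c2) = d * b * a := by
      field_simp
    have hR : K * (C * ‖x - y‖ * a) * (C * c2) = K * C^2 * ‖x - y‖ * c2 * a := by
      ring
    rw [hL, hR] at hmul
    exact le_of_mul_le_mul_right hmul hapos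
  have hreal4 : d * b ≤ 4 * (K * C^2 * ‖x - y‖) := by
    calc d * b ≤ K * C^2 * ‖x - y‖ * c2 := hreal3
      _ ≤ K * C^2 * ‖x - y‖ * 4 := by
          exact mul_le_mul_of_nonneg_left hc2le (by positivity)
      _ = 4 * (K * C^2 * ‖x - y‖) := by ring
  have hfin : 8*K*C^2 * d ≤ 4 * (K * C^2 * ‖x - y‖) := by
    calc 8*K*C^2 * d ≤ b * d := mul_le_mul_of_nonneg_right hTγ hd0
      _ = d * b := by ring
      _ ≤ 4 * (K * C^2 * ‖x - y‖) := hreal4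
  have hKC : 0 < K * C^2 := by positivity
  nlinarith [hfin, hKC, hd0, hnn]

end Step2b

section Iter

variable {𝕏 : Type*} [NormedAddCommGroup 𝕏] [NormedSpace ℝ 𝕏] [CompleteSpace 𝕏]

lemma evol_iterate (X : ℝ → ℝ → 𝕏 → 𝕏)
    (hX_id : ∀ t : ℝ, 0 ≤ t → ∀ x : 𝕏, X t t x = x)
    (hX_cocycle : ∀ s r t : ℝ, 0 ≤ s → s ≤ r → r ≤ t →
      ∀ x : 𝕏, X t s x = X t r (X r s x))
    (T : ℝ) (hT1 : 1 ≤ T)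
    (hhalf : ∀ s : ℝ, 0 ≤ s → ∀ x y : 𝕏,
      ‖X (s+T) s x - X (s+T) s y‖ ≤ (1/2) * ‖x - y‖) :
    ∀ n : ℕ, ∀ s : ℝ, 0 ≤ s → ∀ x y : 𝕏,
      ‖X (s + n*T) s x - X (s + n*T) s y‖ ≤ (1/2)^n * ‖x - y‖ := by
  intro n
  induction n with
  | zero =>
    intro s hs x y
    simp only [Nat.cast_zero, zero_mul, add_zero, pow_zero, one_mul]
    rw [hX_id s hs x, hX_id s hs y]
  | succ n ih =>
    intro s hs x y
    have h1 : s + ((n:ℕ)+1 : ℕ)*T = (s + n*T) + T := by push_cast; ring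
    have hsu : s ≤ s + n*T := by
      have : (0:ℝ) ≤ (n:ℝ)*T := by positivity
      linarith
    have hu0 : (0:ℝ) ≤ s + n*T := le_trans hs hsu
    have hut : s + n*T ≤ (s + n*T) + T := by linarith
    have hcoc : X ((s + n*T) + T) s x = X ((s + n*T) + T) (s + n*T) (X (s + n*T) s x) :=
      hX_cocycle s (s + n*T) ((s + n*T) + T) hs hsu hut x
    have hcoc' : X ((s + n*T) + T) s y = X ((s + n*T) + T) (s + n*T) (X (s + n*T) s y) :=
      hX_cocycle s (s + n*T) ((s + n*T) + T) hs hsu hut y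
    rw [h1, hcoc, hcoc']
    calc ‖X ((s + n*T) + T) (s + n*T) (X (s + n*T) s x)
          - X ((s + n*T) + T) (s + n*T) (X (s + n*T) s y)‖
        ≤ (1/2) * ‖X (s + n*T) s x - X (s + n*T) s y‖ := hhalf (s + n*T) hu0 _ _
      _ ≤ (1/2) * ((1/2)^n * ‖x - y‖) := by
          have := ih s hs x y
          linarith
      _ = (1/2)^(n+1) * ‖x - y‖ := by ring

end Iter

/-- If the pair `(L^p(ℝ₊,𝕏), L^q(ℝ₊,𝕏))`, with `(p,q) ≠ (1,∞)`, is admissible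
to a continuous evolution family `X`, then `X` is uniformly exponentially stable. -/
theorem uniformly_exponentially_stable_of_admissible
    {𝕏 : Type*} [NormedAddCommGroup 𝕏] [NormedSpace ℝ 𝕏] [CompleteSpace 𝕏]
    (X : ℝ → ℝ → 𝕏 → 𝕏)
    (hX_id : ∀ t : ℝ, 0 ≤ t → ∀ x : 𝕏, X t t x = x)
    (hX_cocycle : ∀ s r t : ℝ, 0 ≤ s → s ≤ r → r ≤ t →
      ∀ x : 𝕏, X t s x = X t r (X r s x))
    (M ω : ℝ) (hM : 0 < M) (hω : 0 < ω)
    (hX_lip : ∀ s t : ℝ, 0 ≤ s → s ≤ t → ∀ x y : 𝕏,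
      ‖X t s x - X t s y‖ ≤ M * Real.exp (ω * (t - s)) * ‖x - y‖)
    (hX_cont : ContinuousOn (fun p : ℝ × ℝ × 𝕏 => X p.1 p.2.1 p.2.2)
      {p : ℝ × ℝ × 𝕏 | 0 ≤ p.2.1 ∧ p.2.1 ≤ p.1})
    (p q : ℝ≥0∞) (hp : 1 ≤ p) (hq : 1 ≤ q) (hpq : ¬(p = 1 ∧ q = ∞))
    (hadm_mem : ∀ f : ℝ → 𝕏,
      MemLp f p (MeasureTheory.volume.restrict (Set.Ici (0:ℝ))) →
      MemLp (fun t : ℝ => ∫ s in (0:ℝ)..t, X t s (f s)) q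
        (MeasureTheory.volume.restrict (Set.Ici (0:ℝ))))
    (hadm_lip : ∃ K : ℝ, 0 < K ∧ ∀ f g : ℝ → 𝕏,
      MemLp f p (MeasureTheory.volume.restrict (Set.Ici (0:ℝ))) →
      MemLp g p (MeasureTheory.volume.restrict (Set.Ici (0:ℝ))) →
      eLpNorm (fun t : ℝ =>
          (∫ s in (0:ℝ)..t, X t s (f s)) - ∫ s in (0:ℝ)..t, X t s (g s)) q
        (MeasureTheory.volume.restrict (Set.Ici (0:ℝ))) ≤
      ENNReal.ofReal K *
        eLpNorm (f - g) p (MeasureTheory.volume.restrict (Set.Ici (0:ℝ)))) :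
    ∃ N ν : ℝ, 0 < N ∧ 0 < ν ∧ ∀ s t : ℝ, 0 ≤ s → s ≤ t → ∀ x y : 𝕏,
      ‖X t s x - X t s y‖ ≤ N * Real.exp (-ν * (t - s)) * ‖x - y‖ := by
  obtain ⟨K, hK, hKlip⟩ := hadm_lip
  obtain ⟨C, hC, hCbd⟩ := evol_step1 X hX_cocycle M ω hM hω hX_lip hX_cont p q hq K hK hKlip
  obtain ⟨T, hT1, hhalf⟩ := evol_step2 X hX_cocycle hX_cont p q hp hq hpq K hK hKlip C hC hCbd
  have hTpos : (0:ℝ) < T := lt_of_lt_of_le zero_lt_one hT1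
  have hlog2 : (0:ℝ) < Real.log 2 := Real.log_pos one_lt_two
  refine ⟨2*C, Real.log 2 / T, by positivity, by positivity, ?_⟩
  intro s t hs hst x y
  set n := ⌊(t - s)/T⌋₊ with hn
  have hts0 : (0:ℝ) ≤ (t - s)/T := div_nonneg (by linarith) hTpos.le
  have hn1 : (n:ℝ) ≤ (t-s)/T := Nat.floor_le hts0
  have hn2 : (t-s)/T < n+1 := Nat.lt_floor_add_one _
  set u := s + n*T with hu
  have hsu : s ≤ u := by
    have : (0:ℝ) ≤ (n:ℝ)*T := by positivity
    rw [hu]; linarith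
  have hut : u ≤ t := by
    have : (n:ℝ)*T ≤ (t-s)/T*T := mul_le_mul_of_nonneg_right hn1 hTpos.le
    rw [div_mul_cancel₀ _ hTpos.ne'] at this
    rw [hu]; linarith
  have hu0 : (0:ℝ) ≤ u := le_trans hs hsu
  have hiter := evol_iterate X hX_id hX_cocycle T hT1 hhalf n s hs x y
  have hcoc : X t s x = X t u (X u s x) := hX_cocycle s u t hs hsu hut x
  have hcoc' : X t s y = X t u (X u s y) := hX_cocycle s u t hs hsu hut y
  have h1 : ‖X t s x - X t s y‖ ≤ C * ‖X u s x - X u s y‖ := by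
    rw [hcoc, hcoc']
    exact hCbd u t hu0 hut _ _
  -- (1/2)^n ≤ 2 * exp (-(log 2 / T) * (t - s))
  have hhalfpow : ((1:ℝ)/2)^n = Real.exp (-(n:ℝ) * Real.log 2) := by
    rw [show (-(n:ℝ) * Real.log 2) = (n:ℝ) * (-Real.log 2) by ring]
    rw [Real.exp_nat_mul]
    rw [Real.exp_neg, Real.exp_log two_pos]
    rw [one_div, inv_pow]
  have hexpineq : Real.exp (-(n:ℝ) * Real.log 2)
      ≤ 2 * Real.exp (-(Real.log 2 / T) * (t - s)) := by
    have hkey : -(Real.log 2 / T) * (t - s) + Real.log 2 ≥ -(n:ℝ) * Real.log 2 := by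
      have h2 : ((t-s)/T) * Real.log 2 < ((n:ℝ)+1) * Real.log 2 :=
        mul_lt_mul_of_pos_right hn2 hlog2
      have h3 : (Real.log 2 / T) * (t - s) = ((t-s)/T) * Real.log 2 := by ring
      nlinarith
    calc Real.exp (-(n:ℝ) * Real.log 2)
        ≤ Real.exp (-(Real.log 2 / T) * (t - s) + Real.log 2) := Real.exp_le_exp.2 hkey
      _ = Real.exp (-(Real.log 2 / T) * (t - s)) * 2 := by
          rw [Real.exp_add, Real.exp_log two_pos]
      _ = 2 * Real.exp (-(Real.log 2 / T) * (t - s)) := by ring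
  calc ‖X t s x - X t s y‖ ≤ C * ‖X u s x - X u s y‖ := h1
    _ ≤ C * ((1/2)^n * ‖x - y‖) := by
        have hC' := hC.le
        exact mul_le_mul_of_nonneg_left hiter hC'
    _ = C * ((1/2)^n) * ‖x - y‖ := by ring
    _ ≤ C * (2 * Real.exp (-(Real.log 2 / T) * (t - s))) * ‖x - y‖ := by
        apply mul_le_mul_of_nonneg_right _ (norm_nonneg _)
        apply mul_le_mul_of_nonneg_left _ hC.le
        rw [hhalfpow]
        exact hexpineq
    _ = 2*C * Real.exp (-(Real.log 2 / T) * (t - s)) * ‖x - y‖ := by ring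
end

section
/- Let 𝕏 be a Banach space, {X(t,s)}_{(t,s)∈Δ} a continuous evolution family on 𝕏, and p, q ∈ [1,∞] arbitrary. If the pair (L^p(ℝ₊,𝕏), L^q(ℝ₊,𝕏)) is admissible to {X(t,s)}_{(t,s)∈Δ}, then {X(t,s)}_{(t,s)∈Δ} is uniformly stable: there exists C > 0 such that ‖X(t,s)x − X(t,s)y‖ ≤ C ‖x − y‖ for all (t,s) ∈ Δ and all x, y ∈ 𝕏. -/
set_option maxHeartbeats 1000000

open MeasureTheory Real Set
open scoped ENNReal NNReal

/-- If the pair `(L^p(ℝ₊,𝕏), L^q(ℝ₊,𝕏))` (for arbitrary `p, q ∈ [1,∞]`) is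
admissible to a continuous evolution family `X`, then `X` is uniformly stable. -/
theorem uniformly_stable_of_admissible
    {𝕏 : Type*} [NormedAddCommGroup 𝕏] [NormedSpace ℝ 𝕏] [CompleteSpace 𝕏]
    (X : ℝ → ℝ → 𝕏 → 𝕏)
    (hX_id : ∀ t : ℝ, 0 ≤ t → ∀ x : 𝕏, X t t x = x)
    (hX_cocycle : ∀ s r t : ℝ, 0 ≤ s → s ≤ r → r ≤ t →
      ∀ x : 𝕏, X t s x = X t r (X r s x))
    (M ω : ℝ) (hM : 0 < M) (hω : 0 < ω)
    (hX_lip : ∀ s t : ℝ, 0 ≤ s → s ≤ t → ∀ x y : 𝕏,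
      ‖X t s x - X t s y‖ ≤ M * Real.exp (ω * (t - s)) * ‖x - y‖)
    (hX_cont : ContinuousOn (fun p : ℝ × ℝ × 𝕏 => X p.1 p.2.1 p.2.2)
      {p : ℝ × ℝ × 𝕏 | 0 ≤ p.2.1 ∧ p.2.1 ≤ p.1})
    (p q : ℝ≥0∞) (hp : 1 ≤ p) (hq : 1 ≤ q)
    (hadm_mem : ∀ f : ℝ → 𝕏,
      MemLp f p (MeasureTheory.volume.restrict (Set.Ici (0:ℝ))) →
      MemLp (fun t : ℝ => ∫ s in (0:ℝ)..t, X t s (f s)) q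
        (MeasureTheory.volume.restrict (Set.Ici (0:ℝ))))
    (hadm_lip : ∃ K : ℝ, 0 < K ∧ ∀ f g : ℝ → 𝕏,
      MemLp f p (MeasureTheory.volume.restrict (Set.Ici (0:ℝ))) →
      MemLp g p (MeasureTheory.volume.restrict (Set.Ici (0:ℝ))) →
      eLpNorm (fun t : ℝ =>
          (∫ s in (0:ℝ)..t, X t s (f s)) - ∫ s in (0:ℝ)..t, X t s (g s)) q
        (MeasureTheory.volume.restrict (Set.Ici (0:ℝ))) ≤
      ENNReal.ofReal K *
        eLpNorm (f - g) p (MeasureTheory.volume.restrict (Set.Ici (0:ℝ)))) :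
    ∃ C : ℝ, 0 < C ∧ ∀ s t : ℝ, 0 ≤ s → s ≤ t → ∀ x y : 𝕏,
      ‖X t s x - X t s y‖ ≤ C * ‖x - y‖ := by
  obtain ⟨K, hK, hlip⟩ := hadm_lip
  refine ⟨M * Real.exp (2*ω) * (K * M + 1), by positivity, ?_⟩
  intro s t hs hst x y
  have hexpω := Real.exp_pos ω
  have hexp2ω := Real.exp_pos (2*ω)
  have hexp_sq : Real.exp (2*ω) = Real.exp ω * Real.exp ω := by
    rw [← Real.exp_add]; ring_nf
  by_cases hcase : t ≤ s + 2
  · -- easy case: t - s ≤ 2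
    have h1 := hX_lip s t hs hst x y
    have h2 : Real.exp (ω*(t-s)) ≤ Real.exp (2*ω) := by
      apply Real.exp_le_exp.2; nlinarith
    calc ‖X t s x - X t s y‖ ≤ M * Real.exp (ω*(t-s)) * ‖x-y‖ := h1
      _ ≤ M * Real.exp (2*ω) * (K * M + 1) * ‖x-y‖ := by
        apply mul_le_mul_of_nonneg_right _ (norm_nonneg _)
        have h4 : M * Real.exp (ω*(t-s)) ≤ M * Real.exp (2*ω) :=
          mul_le_mul_of_nonneg_left h2 hM.le
        nlinarith [mul_pos (mul_pos hM hexp2ω) (mul_pos hK hM)]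
  · push_neg at hcase
    have hAm : MeasurableSet (Icc s (s+1)) := measurableSet_Icc
    have hvolA : volume (Icc s (s+1)) = 1 := by
      rw [Real.volume_Icc]; norm_num
    -- continuity in first variable
    have hcontF : ∀ z : 𝕏, ContinuousOn (fun τ => X τ s z) (Ici s) := by
      intro z
      have : ContinuousOn ((fun r : ℝ × ℝ × 𝕏 => X r.1 r.2.1 r.2.2) ∘
          (fun τ => (τ, s, z))) (Ici s) := by
        apply hX_cont.comp (Continuous.continuousOn (by fun_prop))
        intro τ hτ; exact ⟨hs, hτ⟩
      exact this
    have hμA : ((volume.restrict (Ici (0:ℝ))).restrict (Icc s (s+1))) univ ≤ 1 := by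
      rw [Measure.restrict_apply_univ, Measure.restrict_apply hAm, ← hvolA]
      exact measure_mono inter_subset_left
    -- Memℒp of the indicator test functions
    have hmem : ∀ z : 𝕏, MemLp ((Icc s (s+1)).indicator (fun τ => X τ s z)) p
        (volume.restrict (Ici (0:ℝ))) := by
      intro z
      have hcont : ContinuousOn (fun τ => X τ s z) (Icc s (s+1)) :=
        (hcontF z).mono Icc_subset_Ici_self
      have hmeas : AEStronglyMeasurable ((Icc s (s+1)).indicator (fun τ => X τ s z))
          (volume.restrict (Ici (0:ℝ))) := by
        rw [aestronglyMeasurable_indicator_iff hAm]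
        have h0 : AEStronglyMeasurable (fun τ => X τ s z)
            (volume.restrict (Icc s (s+1))) := hcont.aestronglyMeasurable hAm
        refine h0.mono_measure ?_
        rw [Measure.restrict_restrict hAm]
        exact Measure.restrict_mono inter_subset_left le_rfl
      obtain ⟨B, hB⟩ := isCompact_Icc.exists_bound_of_continuousOn hcont
      refine ⟨hmeas, ?_⟩
      rw [eLpNorm_indicator_eq_eLpNorm_restrict hAm]
      calc eLpNorm (fun τ => X τ s z) p ((volume.restrict (Ici (0:ℝ))).restrict (Icc s (s+1)))
          ≤ ((volume.restrict (Ici (0:ℝ))).restrict (Icc s (s+1))) univ ^ p.toReal⁻¹ *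
              ENNReal.ofReal B := by
            apply eLpNorm_le_of_ae_bound
            filter_upwards [ae_restrict_mem hAm] with τ hτ using hB τ hτ
        _ < ⊤ := by
            refine ENNReal.mul_lt_top ?_ ENNReal.ofReal_lt_top
            exact lt_of_le_of_lt (ENNReal.rpow_le_one hμA (by positivity)) ENNReal.one_lt_top
    set f : ℝ → 𝕏 := (Icc s (s+1)).indicator (fun τ => X τ s x) with hfdef
    set g : ℝ → 𝕏 := (Icc s (s+1)).indicator (fun τ => X τ s y) with hgdef
    -- upper bound on ‖f - g‖_p
    have hfg : f - g = (Icc s (s+1)).indicator (fun τ => X τ s x - X τ s y) := by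
      funext τ
      simp only [Pi.sub_apply, hfdef, hgdef]
      by_cases hτ : τ ∈ Icc s (s+1) <;> simp [hτ]
    have hupper : eLpNorm (f - g) p (volume.restrict (Ici (0:ℝ))) ≤
        ENNReal.ofReal (M * Real.exp ω * ‖x - y‖) := by
      rw [hfg, eLpNorm_indicator_eq_eLpNorm_restrict hAm]
      calc eLpNorm (fun τ => X τ s x - X τ s y) p
            ((volume.restrict (Ici (0:ℝ))).restrict (Icc s (s+1)))
          ≤ ((volume.restrict (Ici (0:ℝ))).restrict (Icc s (s+1))) univ ^ p.toReal⁻¹ *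
              ENNReal.ofReal (M * Real.exp ω * ‖x - y‖) := by
            apply eLpNorm_le_of_ae_bound
            filter_upwards [ae_restrict_mem hAm] with τ hτ
            have hτ' := mem_Icc.1 hτ
            calc ‖X τ s x - X τ s y‖ ≤ M * Real.exp (ω*(τ-s)) * ‖x-y‖ :=
                  hX_lip s τ hs hτ'.1 x y
              _ ≤ M * Real.exp ω * ‖x-y‖ := by
                  have h3 : Real.exp (ω*(τ-s)) ≤ Real.exp ω := by
                    apply Real.exp_le_exp.2
                    nlinarith [hτ'.2]
                  nlinarith [norm_nonneg (x-y), mul_le_mul_of_nonneg_left h3 hM.le]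
        _ ≤ 1 * ENNReal.ofReal (M * Real.exp ω * ‖x - y‖) := by
            gcongr
            exact ENNReal.rpow_le_one hμA (by positivity)
        _ = ENNReal.ofReal (M * Real.exp ω * ‖x - y‖) := one_mul _
    -- value of the Green operator difference for t' ≥ s + 1
    have hval : ∀ t' : ℝ, s + 1 ≤ t' →
        (∫ σ in (0:ℝ)..t', X t' σ (f σ)) - (∫ σ in (0:ℝ)..t', X t' σ (g σ)) =
          X t' s x - X t' s y := by
      intro t' ht'
      have ht'0 : (0:ℝ) ≤ t' := by linarith
      -- splitting lemma
      have hsplit : ∀ z : 𝕏, ∀ σ ∈ Icc (0:ℝ) t',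
          X t' σ ((Icc s (s+1)).indicator (fun τ => X τ s z) σ) =
            (Icc s (s+1)).indicator (fun _ => X t' s z) σ +
              ((Icc s (s+1))ᶜ).indicator (fun σ => X t' σ 0) σ := by
        intro z σ _
        by_cases hσA : σ ∈ Icc s (s+1)
        · have hσA' := mem_Icc.1 hσA
          simp only [indicator_of_mem hσA, indicator_of_notMem (show σ ∉ (Icc s (s+1))ᶜ by
            simp [hσA]), add_zero]
          exact (hX_cocycle s σ t' hs hσA'.1 (le_trans hσA'.2 ht') z).symm
        · simp only [indicator_of_notMem hσA, indicator_of_mem (show σ ∈ (Icc s (s+1))ᶜ by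
            simp [hσA]), zero_add]
      have hcont0 : ContinuousOn (fun σ => X t' σ (0:𝕏)) (Icc 0 t') := by
        have : ContinuousOn ((fun r : ℝ × ℝ × 𝕏 => X r.1 r.2.1 r.2.2) ∘
            (fun σ => (t', σ, (0:𝕏)))) (Icc 0 t') := by
          apply hX_cont.comp (Continuous.continuousOn (by fun_prop))
          intro σ hσ; exact ⟨hσ.1, hσ.2⟩
        exact this
      -- integrability
      have hint : ∀ z : 𝕏, IntervalIntegrable
          (fun σ => X t' σ ((Icc s (s+1)).indicator (fun τ => X τ s z) σ)) volume 0 t' := by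
        intro z
        rw [intervalIntegrable_iff_integrableOn_Ioc_of_le ht'0]
        have h1 : IntegrableOn (fun σ => (Icc s (s+1)).indicator (fun _ => X t' s z) σ +
            ((Icc s (s+1))ᶜ).indicator (fun σ => X t' σ 0) σ) (Ioc 0 t') volume := by
          apply Integrable.add
          · exact (integrableOn_const measure_Ioc_lt_top.ne).indicator hAm
          · exact ((hcont0.integrableOn_Icc).mono_set Ioc_subset_Icc_self).indicator
              hAm.compl
        exact h1.congr_fun (fun σ hσ => (hsplit z σ ⟨hσ.1.le, hσ.2⟩).symm) measurableSet_Ioc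
      have hDint : IntervalIntegrable
          ((Icc s (s+1)).indicator (fun _ => X t' s x - X t' s y)) volume 0 t' := by
        rw [intervalIntegrable_iff_integrableOn_Ioc_of_le ht'0]
        exact (integrableOn_const measure_Ioc_lt_top.ne).indicator hAm
      -- pointwise identity
      have hEq : EqOn (fun σ => X t' σ (f σ))
          (fun σ => X t' σ (g σ) +
            (Icc s (s+1)).indicator (fun _ => X t' s x - X t' s y) σ)
          (uIcc 0 t') := by
        intro σ hσ
        rw [uIcc_of_le ht'0] at hσ
        simp only [hfdef, hgdef]
        rw [hsplit x σ hσ, hsplit y σ hσ]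
        by_cases hσA : σ ∈ Icc s (s+1)
        · simp only [indicator_of_mem hσA]; abel
        · simp only [indicator_of_notMem hσA]; abel
      rw [intervalIntegral.integral_congr hEq]
      rw [intervalIntegral.integral_add (by simpa [hgdef] using hint y) hDint]
      have hDval : (∫ σ in (0:ℝ)..t',
          (Icc s (s+1)).indicator (fun _ => X t' s x - X t' s y) σ) =
          X t' s x - X t' s y := by
        rw [intervalIntegral.integral_of_le ht'0, integral_indicator_const _ hAm,
          measureReal_restrict_apply hAm]
        have hinter : volume (Icc s (s+1) ∩ Ioc 0 t') = 1 := by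
          apply le_antisymm
          · rw [← hvolA]; exact measure_mono inter_subset_left
          · have hsub : Ioc s (s+1) ⊆ Icc s (s+1) ∩ Ioc 0 t' := by
              intro σ hσ
              exact ⟨⟨hσ.1.le, hσ.2⟩, lt_of_le_of_lt hs hσ.1, le_trans hσ.2 ht'⟩
            calc (1:ℝ≥0∞) = volume (Ioc s (s+1)) := by
                  rw [Real.volume_Ioc]; norm_num
              _ ≤ volume (Icc s (s+1) ∩ Ioc 0 t') := measure_mono hsub
        rw [measureReal_def, hinter]
        simp
      rw [hDval]
      abel
    -- lower bound for values on [t-1, t]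
    set r : ℝ := ‖X t s x - X t s y‖ / (M * Real.exp ω) with hrdef
    have hr0 : 0 ≤ r := by rw [hrdef]; positivity
    have hnorm : ∀ t' : ℝ, s + 1 ≤ t' → t - 1 ≤ t' → t' ≤ t →
        r ≤ ‖X t' s x - X t' s y‖ := by
      intro t' ht'1 ht'2 ht'3
      have ht'0 : (0:ℝ) ≤ t' := by linarith
      have hco : X t s x = X t t' (X t' s x) :=
        hX_cocycle s t' t hs (by linarith) ht'3 x
      have hco' : X t s y = X t t' (X t' s y) :=
        hX_cocycle s t' t hs (by linarith) ht'3 y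
      have h1 : ‖X t s x - X t s y‖ ≤
          M * Real.exp (ω*(t-t')) * ‖X t' s x - X t' s y‖ := by
        rw [hco, hco']
        exact hX_lip t' t ht'0 ht'3 _ _
      have h2 : Real.exp (ω*(t-t')) ≤ Real.exp ω := by
        apply Real.exp_le_exp.2; nlinarith
      have h3 : ‖X t s x - X t s y‖ ≤ M * Real.exp ω * ‖X t' s x - X t' s y‖ := by
        nlinarith [norm_nonneg (X t' s x - X t' s y),
          mul_le_mul_of_nonneg_left h2 hM.le]
      rw [hrdef, div_le_iff₀ (by positivity)]
      nlinarith
    have hν_univ : (volume.restrict (Icc (t-1) t)) univ = 1 := by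
      rw [Measure.restrict_apply_univ, Real.volume_Icc]; norm_num
    have hν_ne : volume.restrict (Icc (t-1) t) ≠ 0 := by
      rw [← Measure.measure_univ_ne_zero, hν_univ]; exact one_ne_zero
    have hq0 : q ≠ 0 := (lt_of_lt_of_le zero_lt_one hq).ne'
    have hlow : ENNReal.ofReal r ≤
        eLpNorm (fun t' : ℝ =>
          (∫ σ in (0:ℝ)..t', X t' σ (f σ)) - ∫ σ in (0:ℝ)..t', X t' σ (g σ)) q
          (volume.restrict (Ici (0:ℝ))) := by
      calc ENNReal.ofReal r
          = eLpNorm (fun _ : ℝ => r) q (volume.restrict (Icc (t-1) t)) := by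
            rw [eLpNorm_const r hq0 hν_ne, hν_univ, ENNReal.one_rpow, mul_one,
              Real.enorm_eq_ofReal hr0]
        _ ≤ eLpNorm (fun t' : ℝ =>
              (∫ σ in (0:ℝ)..t', X t' σ (f σ)) - ∫ σ in (0:ℝ)..t', X t' σ (g σ)) q
              (volume.restrict (Icc (t-1) t)) := by
            apply eLpNorm_mono_ae
            filter_upwards [ae_restrict_mem measurableSet_Icc] with t' ht'
            have ht'' := mem_Icc.1 ht'
            have ht'1 : s + 1 ≤ t' := by linarith [ht''.1]
            simp only [Real.norm_of_nonneg hr0]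
            rw [hval t' ht'1]
            exact hnorm t' ht'1 ht''.1 ht''.2
        _ ≤ eLpNorm (fun t' : ℝ =>
              (∫ σ in (0:ℝ)..t', X t' σ (f σ)) - ∫ σ in (0:ℝ)..t', X t' σ (g σ)) q
              (volume.restrict (Ici (0:ℝ))) := by
            apply eLpNorm_mono_measure
            refine Measure.restrict_mono ?_ le_rfl
            intro τ hτ
            have := mem_Icc.1 hτ
            simp only [mem_Ici]
            linarith [this.1]
    -- combine everything
    have hchain : ENNReal.ofReal r ≤
        ENNReal.ofReal (K * (M * Real.exp ω * ‖x - y‖)) := by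
      calc ENNReal.ofReal r
          ≤ eLpNorm (fun t' : ℝ =>
              (∫ σ in (0:ℝ)..t', X t' σ (f σ)) - ∫ σ in (0:ℝ)..t', X t' σ (g σ)) q
              (volume.restrict (Ici (0:ℝ))) := hlow
        _ ≤ ENNReal.ofReal K * eLpNorm (f - g) p (volume.restrict (Ici (0:ℝ))) :=
            hlip f g (hmem x) (hmem y)
        _ ≤ ENNReal.ofReal K * ENNReal.ofReal (M * Real.exp ω * ‖x - y‖) := by gcongr
        _ = ENNReal.ofReal (K * (M * Real.exp ω * ‖x - y‖)) := by
            rw [ENNReal.ofReal_mul hK.le]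
    have hfinal : r ≤ K * (M * Real.exp ω * ‖x - y‖) :=
      (ENNReal.ofReal_le_ofReal_iff (by positivity)).1 hchain
    rw [hrdef, div_le_iff₀ (by positivity)] at hfinal
    calc ‖X t s x - X t s y‖
        ≤ K * M * M * (Real.exp ω * Real.exp ω) * ‖x - y‖ := by nlinarith
      _ ≤ M * Real.exp (2*ω) * (K * M + 1) * ‖x - y‖ := by
          apply mul_le_mul_of_nonneg_right _ (norm_nonneg _)
          rw [hexp_sq]
          nlinarith [mul_pos (mul_pos hM hexpω) hexpω]
end

section
/- Let 𝕏 be a Banach space and {X(t,s)}_{(t,s)∈Δ} a continuous evolution family on 𝕏. The pair (L^1(ℝ₊,𝕏), L^∞(ℝ₊,𝕏)) is admissible to {X(t,s)}_{(t,s)∈Δ} if and only if the following two statements hold: (i) there exists ψ ∈ L^1(ℝ₊,𝕏) such that Gψ ∈ L^∞(ℝ₊,𝕏); and (ii) there exists N > 0 such that ‖X(t,s)x − X(t,s)y‖ ≤ N ‖x − y‖ for all (t,s) ∈ Δ and x, y ∈ 𝕏. -/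
open MeasureTheory Real Set Filter
open scoped ENNReal NNReal Topology

lemma aesm_G_comp {α 𝕏 : Type*} [MeasurableSpace α] [NormedAddCommGroup 𝕏]
    {μ : Measure α} {G : α → 𝕏 → 𝕏} {S : Set α}
    (hG : ∀ c : 𝕏, AEStronglyMeasurable (fun a => G a c) μ)
    (hGc : ∀ a ∈ S, Continuous (G a))
    (hmem : ∀ᵐ a ∂μ, a ∈ S)
    {φ : α → 𝕏} (hφ : AEStronglyMeasurable φ μ) :
    AEStronglyMeasurable (fun a => G a (φ a)) μ := by
  have hφm : StronglyMeasurable (hφ.mk φ) := hφ.stronglyMeasurable_mk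
  apply aestronglyMeasurable_of_tendsto_ae (f := fun n a => G a (hφm.approx n a))
      (g := fun a => G a (φ a)) Filter.atTop
  · intro n
    have hrange : (fun a => G a (hφm.approx n a)) = fun a =>
        ∑ c ∈ (hφm.approx n).range, ((hφm.approx n) ⁻¹' {c}).indicator (fun a => G a c) a := by
      funext a
      rw [Finset.sum_eq_single_of_mem ((hφm.approx n) a) (SimpleFunc.mem_range_self _ a)]
      · rw [Set.indicator_of_mem (by simp : a ∈ (hφm.approx n) ⁻¹' {(hφm.approx n) a})]
      · intro b _ hb
        refine Set.indicator_of_notMem ?_ _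
        intro h
        rw [Set.mem_preimage, Set.mem_singleton_iff] at h
        exact hb h.symm
    rw [hrange]
    exact Finset.aestronglyMeasurable_fun_sum _ fun c _ =>
      (hG c).indicator (SimpleFunc.measurableSet_fiber _ c)
  · filter_upwards [hmem, hφ.ae_eq_mk] with a haS haeq
    have h1 := hφm.tendsto_approx a
    have h2 := ((hGc a haS).tendsto (hφ.mk φ a)).comp h1
    rw [← haeq] at h2
    exact h2

set_option maxHeartbeats 1000000 in
/-- The pair `(L^1(ℝ₊,𝕏), L^∞(ℝ₊,𝕏))` is admissible to a continuous evolution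
family `X` if and only if (i) there exists `ψ ∈ L^1` with `Gψ ∈ L^∞`, and (ii) `X` is
uniformly stable, i.e. `‖X(t,s)x − X(t,s)y‖ ≤ N ‖x − y‖` on `Δ` for some `N > 0`. -/
theorem admissible_L1_Linfty_iff
    {𝕏 : Type*} [NormedAddCommGroup 𝕏] [NormedSpace ℝ 𝕏] [CompleteSpace 𝕏]
    (X : ℝ → ℝ → 𝕏 → 𝕏)
    (hX_id : ∀ t : ℝ, 0 ≤ t → ∀ x : 𝕏, X t t x = x)
    (hX_cocycle : ∀ s r t : ℝ, 0 ≤ s → s ≤ r → r ≤ t →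
      ∀ x : 𝕏, X t s x = X t r (X r s x))
    (M ω : ℝ) (hM : 0 < M) (hω : 0 < ω)
    (hX_lip : ∀ s t : ℝ, 0 ≤ s → s ≤ t → ∀ x y : 𝕏,
      ‖X t s x - X t s y‖ ≤ M * Real.exp (ω * (t - s)) * ‖x - y‖)
    (hX_cont : ContinuousOn (fun p : ℝ × ℝ × 𝕏 => X p.1 p.2.1 p.2.2)
      {p : ℝ × ℝ × 𝕏 | 0 ≤ p.2.1 ∧ p.2.1 ≤ p.1}) :
    ((∀ f : ℝ → 𝕏,
        MemLp f 1 (MeasureTheory.volume.restrict (Set.Ici (0:ℝ))) →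
        MemLp (fun t : ℝ => ∫ s in (0:ℝ)..t, X t s (f s)) ⊤
          (MeasureTheory.volume.restrict (Set.Ici (0:ℝ)))) ∧
      (∃ K : ℝ, 0 < K ∧ ∀ f g : ℝ → 𝕏,
        MemLp f 1 (MeasureTheory.volume.restrict (Set.Ici (0:ℝ))) →
        MemLp g 1 (MeasureTheory.volume.restrict (Set.Ici (0:ℝ))) →
        eLpNorm (fun t : ℝ =>
            (∫ s in (0:ℝ)..t, X t s (f s)) - ∫ s in (0:ℝ)..t, X t s (g s)) ⊤
          (MeasureTheory.volume.restrict (Set.Ici (0:ℝ))) ≤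
        ENNReal.ofReal K *
          eLpNorm (f - g) 1 (MeasureTheory.volume.restrict (Set.Ici (0:ℝ))))) ↔
    ((∃ ψ : ℝ → 𝕏,
        MemLp ψ 1 (MeasureTheory.volume.restrict (Set.Ici (0:ℝ))) ∧
        MemLp (fun t : ℝ => ∫ s in (0:ℝ)..t, X t s (ψ s)) ⊤
          (MeasureTheory.volume.restrict (Set.Ici (0:ℝ)))) ∧
      (∃ N : ℝ, 0 < N ∧ ∀ s t : ℝ, 0 ≤ s → s ≤ t → ∀ x y : 𝕏,
        ‖X t s x - X t s y‖ ≤ N * ‖x - y‖)) := by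
  set μ : Measure ℝ := MeasureTheory.volume.restrict (Set.Ici (0:ℝ)) with hμdef
  -- continuity of various slices
  have hcont1 : ∀ (t : ℝ) (c : 𝕏), ContinuousOn (fun r : ℝ => X t r c) (Icc 0 t) := by
    intro t c
    have hmap : Continuous (fun r : ℝ => ((t, r, c) : ℝ × ℝ × 𝕏)) := by continuity
    exact hX_cont.comp hmap.continuousOn (fun r hr => ⟨hr.1, hr.2⟩)
  have hcont2 : ∀ (s : ℝ) (z : 𝕏), 0 ≤ s → ContinuousOn (fun r : ℝ => X r s z) (Ici s) := by
    intro s z hs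
    have hmap : Continuous (fun r : ℝ => ((r, s, z) : ℝ × ℝ × 𝕏)) := by continuity
    exact hX_cont.comp hmap.continuousOn (fun r hr => ⟨hs, hr⟩)
  have hcont3 : ∀ (t s : ℝ), 0 ≤ s → s ≤ t → Continuous (fun v : 𝕏 => X t s v) := by
    intro t s hs hst
    rw [← continuousOn_univ]
    have hmap : Continuous (fun v : 𝕏 => ((t, s, v) : ℝ × ℝ × 𝕏)) := by continuity
    exact hX_cont.comp hmap.continuousOn (fun v _ => ⟨hs, hst⟩)
  have hcontJ : ∀ c : 𝕏, ContinuousOn (fun p : ℝ × ℝ => X p.1 p.2 c)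
      {p : ℝ × ℝ | 0 ≤ p.2 ∧ p.2 ≤ p.1} := by
    intro c
    have hmap : Continuous (fun p : ℝ × ℝ => ((p.1, p.2, c) : ℝ × ℝ × 𝕏)) := by continuity
    exact hX_cont.comp hmap.continuousOn (fun p hp => ⟨hp.1, hp.2⟩)
  have hres : ∀ t : ℝ, μ.restrict (Ioc 0 t) = MeasureTheory.volume.restrict (Ioc 0 t) := by
    intro t
    rw [hμdef, Measure.restrict_restrict measurableSet_Ioc,
      inter_eq_self_of_subset_left (fun r hr => hr.1.le)]
  -- interval integrability of the integrand for any L¹ function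
  have intg : ∀ (f : ℝ → 𝕏), Integrable f μ → ∀ t : ℝ, 0 ≤ t →
      IntervalIntegrable (fun r => X t r (f r)) MeasureTheory.volume 0 t := by
    intro f hf t ht
    have hfI : Integrable f (MeasureTheory.volume.restrict (Ioc 0 t)) := by
      rw [← hres t]; exact hf.restrict
    have hmeas : AEStronglyMeasurable (fun r => X t r (f r))
        (MeasureTheory.volume.restrict (Ioc 0 t)) := by
      apply aesm_G_comp (S := Icc (0:ℝ) t)
      · intro c
        exact ((hcont1 t c).aestronglyMeasurable measurableSet_Icc).mono_measure
          (Measure.restrict_mono Ioc_subset_Icc_self le_rfl)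
      · exact fun r hr => hcont3 t r hr.1 hr.2
      · exact (ae_restrict_mem measurableSet_Ioc).mono fun r hr => Ioc_subset_Icc_self hr
      · exact hfI.1
    obtain ⟨C, hC⟩ := isCompact_Icc.exists_bound_of_continuousOn (hcont1 t (0:𝕏))
    rw [intervalIntegrable_iff_integrableOn_Ioc_of_le ht]
    refine Integrable.mono' (g := fun r => M * Real.exp (ω * t) * ‖f r‖ + C)
      ((hfI.norm.const_mul _).add ?_) hmeas ?_
    · exact integrableOn_const measure_Ioc_lt_top.ne
    · filter_upwards [ae_restrict_mem measurableSet_Ioc] with r hr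
      have h1 := hX_lip r t hr.1.le hr.2 (f r) 0
      have h2 : ‖X t r (f r)‖ ≤ ‖X t r (f r) - X t r 0‖ + ‖X t r 0‖ := by
        have h3 := norm_add_le (X t r (f r) - X t r 0) (X t r 0)
        rwa [sub_add_cancel] at h3
      have h4 : Real.exp (ω * (t - r)) ≤ Real.exp (ω * t) := by
        apply Real.exp_le_exp.2; nlinarith [hr.1.le]
      have h5 : ‖X t r 0‖ ≤ C := hC _ ⟨hr.1.le, hr.2⟩
      rw [sub_zero] at h1
      nlinarith [norm_nonneg (f r), norm_nonneg (X t r (f r)), hM.le,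
        mul_le_mul_of_nonneg_right h4 (norm_nonneg (f r))]
  -- the joint measurability of the Green operator
  have hGmeas : ∀ f : ℝ → 𝕏, AEStronglyMeasurable f μ →
      AEStronglyMeasurable (fun t : ℝ => ∫ s in (0:ℝ)..t, X t s (f s)) μ := by
    intro f hfm
    have hf'm : StronglyMeasurable (hfm.mk f) := hfm.stronglyMeasurable_mk
    set f' : ℝ → 𝕏 := hfm.mk f with hf'def
    set S : Set (ℝ × ℝ) := {p : ℝ × ℝ | 0 < p.2 ∧ p.2 ≤ p.1} with hSdef
    have hS : MeasurableSet S := by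
      rw [hSdef, setOf_and]
      exact (measurableSet_lt measurable_const measurable_snd).inter
        (measurableSet_le measurable_snd measurable_fst)
    have hH : AEStronglyMeasurable (S.indicator (fun p : ℝ × ℝ => X p.1 p.2 (f' p.2)))
        (μ.prod MeasureTheory.volume) := by
      rw [aestronglyMeasurable_indicator_iff hS]
      apply aesm_G_comp (G := fun (p : ℝ × ℝ) v => X p.1 p.2 v) (S := S)
      · intro c
        have hSc : MeasurableSet {p : ℝ × ℝ | 0 ≤ p.2 ∧ p.2 ≤ p.1} := by
          rw [setOf_and]
          exact (measurableSet_le measurable_const measurable_snd).inter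
            (measurableSet_le measurable_snd measurable_fst)
        have h1 : AEStronglyMeasurable (fun p : ℝ × ℝ => X p.1 p.2 c)
            ((μ.prod MeasureTheory.volume).restrict {p : ℝ × ℝ | 0 ≤ p.2 ∧ p.2 ≤ p.1}) :=
          (hcontJ c).aestronglyMeasurable hSc
        have h2 := h1.restrict (s := S)
        have hSsub : S ∩ {p : ℝ × ℝ | 0 ≤ p.2 ∧ p.2 ≤ p.1} = S :=
          inter_eq_self_of_subset_left (fun p hp => ⟨hp.1.le, hp.2⟩)
        rwa [Measure.restrict_restrict hS, hSsub] at h2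
      · exact fun p hp => hcont3 p.1 p.2 hp.1.le hp.2
      · exact ae_restrict_mem hS
      · exact (hf'm.comp_measurable measurable_snd).aestronglyMeasurable
    have hJ := hH.integral_prod_right'
    apply hJ.congr
    have haefe : ∀ᵐ s ∂(MeasureTheory.volume : Measure ℝ), s ∈ Ici (0:ℝ) → f s = f' s :=
      (ae_restrict_iff' measurableSet_Ici).mp hfm.ae_eq_mk
    have haemem0 : ∀ᵐ t ∂μ, t ∈ Ici (0:ℝ) := by
      rw [hμdef]; exact ae_restrict_mem measurableSet_Ici
    filter_upwards [haemem0] with t ht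
    have hind_eq : (fun s : ℝ => S.indicator (fun p : ℝ × ℝ => X p.1 p.2 (f' p.2)) (t, s))
        = fun s : ℝ => (Ioc (0:ℝ) t).indicator (fun s => X t s (f' s)) s := by
      funext s
      by_cases hmem : s ∈ Ioc (0:ℝ) t
      · rw [Set.indicator_of_mem hmem,
          Set.indicator_of_mem (show (t, s) ∈ S from ⟨hmem.1, hmem.2⟩)]
      · rw [Set.indicator_of_notMem hmem,
          Set.indicator_of_notMem (fun hc => hmem ⟨hc.1, hc.2⟩)]
    calc ∫ s, S.indicator (fun p : ℝ × ℝ => X p.1 p.2 (f' p.2)) (t, s) ∂MeasureTheory.volume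
        = ∫ s, (Ioc (0:ℝ) t).indicator (fun s => X t s (f' s)) s ∂MeasureTheory.volume := by
          rw [hind_eq]
      _ = ∫ s in Ioc (0:ℝ) t, X t s (f' s) ∂MeasureTheory.volume :=
          integral_indicator measurableSet_Ioc
      _ = ∫ s in (0:ℝ)..t, X t s (f' s) := (intervalIntegral.integral_of_le ht).symm
      _ = ∫ s in (0:ℝ)..t, X t s (f s) := by
          apply intervalIntegral.integral_congr_ae
          filter_upwards [haefe] with s hs hsmem
          rw [uIoc_of_le ht] at hsmem
          rw [hs hsmem.1.le]
  constructor
  · -- forward direction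
    rintro ⟨adm1, K, hK, adm2⟩
    have hMe : 0 < M * Real.exp ω := mul_pos hM (Real.exp_pos ω)
    refine ⟨⟨fun _ => 0, MemLp.zero', adm1 _ MemLp.zero'⟩,
      ⟨(K + 1) * (M * Real.exp ω), by positivity, ?_⟩⟩
    intro s t hs hst x y
    by_cases hcase : t ≤ s + 1
    · have h1 := hX_lip s t hs hst x y
      have h2 : Real.exp (ω * (t - s)) ≤ Real.exp ω := by
        apply Real.exp_le_exp.2; nlinarith
      calc ‖X t s x - X t s y‖ ≤ M * Real.exp (ω * (t - s)) * ‖x - y‖ := h1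
        _ ≤ M * Real.exp ω * ‖x - y‖ := by
            apply mul_le_mul_of_nonneg_right _ (norm_nonneg _)
            exact mul_le_mul_of_nonneg_left h2 hM.le
        _ ≤ (K + 1) * (M * Real.exp ω) * ‖x - y‖ := by
            apply mul_le_mul_of_nonneg_right _ (norm_nonneg _)
            nlinarith
    · push_neg at hcase
      set f : ℝ → 𝕏 := (Ioc s (s+1)).indicator (fun r => X r s x) with hfdef
      set g : ℝ → 𝕏 := (Ioc s (s+1)).indicator (fun r => X r s y) with hgdef
      have hsub : Ioc s (s+1) ⊆ Ici (0:ℝ) := fun r hr => hs.trans hr.1.le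
      have hmeaseq : (MeasureTheory.volume.restrict (Ici (0:ℝ))).restrict (Ioc s (s+1))
          = MeasureTheory.volume.restrict (Ioc s (s+1)) := by
        rw [Measure.restrict_restrict measurableSet_Ioc, inter_eq_self_of_subset_left hsub]
      have hmemℒ : ∀ z : 𝕏, MemLp ((Ioc s (s+1)).indicator (fun r => X r s z)) 1 μ := by
        intro z
        rw [memLp_one_iff_integrable, hμdef, integrable_indicator_iff measurableSet_Ioc]
        show Integrable _ ((MeasureTheory.volume.restrict (Ici (0:ℝ))).restrict (Ioc s (s+1)))
        rw [hmeaseq]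
        exact (((hcont2 s z hs).mono (fun r hr => hr.1)).integrableOn_compact
          isCompact_Icc).mono_set Ioc_subset_Icc_self
      have hmemf : MemLp f 1 μ := hmemℒ x
      have hmemg : MemLp g 1 μ := hmemℒ y
      have hKey := adm2 f g hmemf hmemg
      have hsn : eLpNorm (f - g) 1 μ ≤ ENNReal.ofReal (M * Real.exp ω * ‖x - y‖) := by
        rw [eLpNorm_one_eq_lintegral_enorm]
        have hb : ∀ r : ℝ, ‖(f - g) r‖ₑ ≤
            (Ioc s (s+1)).indicator (fun _ => ENNReal.ofReal (M * Real.exp ω * ‖x - y‖)) r := by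
          intro r
          by_cases hr : r ∈ Ioc s (s+1)
          · rw [Set.indicator_of_mem hr]
            have h1 : (f - g) r = X r s x - X r s y := by
              simp [hfdef, hgdef, Set.indicator_of_mem hr]
            rw [h1, ← ofReal_norm_eq_enorm]
            apply ENNReal.ofReal_le_ofReal
            have h2 := hX_lip s r hs hr.1.le x y
            have h3 : Real.exp (ω * (r - s)) ≤ Real.exp ω := by
              apply Real.exp_le_exp.2; nlinarith [hr.2]
            nlinarith [norm_nonneg (x - y), hM,
              mul_le_mul_of_nonneg_right h3 (norm_nonneg (x - y))]
          · rw [Set.indicator_of_notMem hr]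
            have h1 : (f - g) r = 0 := by
              simp [hfdef, hgdef, Set.indicator_of_notMem hr]
            simp [h1]
        calc ∫⁻ r, ‖(f - g) r‖ₑ ∂μ
            ≤ ∫⁻ r, (Ioc s (s+1)).indicator
                (fun _ => ENNReal.ofReal (M * Real.exp ω * ‖x - y‖)) r ∂μ := lintegral_mono hb
          _ = ENNReal.ofReal (M * Real.exp ω * ‖x - y‖) * μ (Ioc s (s+1)) :=
              lintegral_indicator_const measurableSet_Ioc _
          _ = ENNReal.ofReal (M * Real.exp ω * ‖x - y‖) := by
              rw [hμdef, Measure.restrict_apply measurableSet_Ioc,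
                inter_eq_self_of_subset_left hsub, Real.volume_Ioc]
              norm_num
      have heq : ∀ τ : ℝ, s + 1 ≤ τ →
          (∫ r in (0:ℝ)..τ, X τ r (f r)) - (∫ r in (0:ℝ)..τ, X τ r (g r))
            = X τ s x - X τ s y := by
        intro τ hτ
        have hτ0 : (0:ℝ) ≤ τ := by linarith
        have hb_int : IntervalIntegrable (fun r => X τ r (0:𝕏)) MeasureTheory.volume 0 τ := by
          apply ContinuousOn.intervalIntegrable
          rw [uIcc_of_le hτ0]; exact hcont1 τ 0
        have hIccsub : Icc s (s+1) ⊆ Icc 0 τ := fun r hr => ⟨hs.trans hr.1, hr.2.trans hτ⟩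
        have hcont4 : ∀ z : 𝕏, ContinuousOn (fun r => X τ r (X r s z)) (Icc s (s+1)) := by
          intro z
          have hin : ContinuousOn (fun r : ℝ => ((τ, r, X r s z) : ℝ × ℝ × 𝕏)) (Icc s (s+1)) := by
            apply ContinuousOn.prodMk continuousOn_const
            exact ContinuousOn.prodMk continuousOn_id
              (((hcont2 s z hs)).mono (fun r hr => hr.1))
          exact hX_cont.comp hin (fun r hr => ⟨hs.trans hr.1, hr.2.trans hτ⟩)
        have hFint : ∀ z : 𝕏, IntervalIntegrable
            (fun r => X τ r ((Ioc s (s+1)).indicator (fun r' => X r' s z) r))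
            MeasureTheory.volume 0 τ := by
          intro z
          have hind : Integrable ((Ioc s (s+1)).indicator
              (fun r => X τ r (X r s z) - X τ r 0)) MeasureTheory.volume := by
            rw [integrable_indicator_iff measurableSet_Ioc]
            exact (((hcont4 z).sub ((hcont1 τ 0).mono hIccsub)).integrableOn_compact
              isCompact_Icc).mono_set Ioc_subset_Icc_self
          have hfx_eq : (fun r => X τ r ((Ioc s (s+1)).indicator (fun r' => X r' s z) r)) =
              fun r => X τ r (0:𝕏) +
                (Ioc s (s+1)).indicator (fun r => X τ r (X r s z) - X τ r 0) r := by
            funext r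
            by_cases hr : r ∈ Ioc s (s+1)
            · rw [Set.indicator_of_mem hr, Set.indicator_of_mem hr]; abel
            · rw [Set.indicator_of_notMem hr, Set.indicator_of_notMem hr]; abel
          rw [hfx_eq]
          exact hb_int.add hind.intervalIntegrable
        rw [← intervalIntegral.integral_sub (hFint x) (hFint y)]
        have hEq : ∀ r ∈ uIcc (0:ℝ) τ, X τ r (f r) - X τ r (g r)
            = (Ioc s (s+1)).indicator (fun _ => X τ s x - X τ s y) r := by
          intro r _
          by_cases hmem : r ∈ Ioc s (s+1)
          · rw [Set.indicator_of_mem hmem]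
            have h1 : f r = X r s x := Set.indicator_of_mem hmem _
            have h2 : g r = X r s y := Set.indicator_of_mem hmem _
            rw [h1, h2, ← hX_cocycle s r τ hs hmem.1.le (hmem.2.trans hτ) x,
              ← hX_cocycle s r τ hs hmem.1.le (hmem.2.trans hτ) y]
          · rw [Set.indicator_of_notMem hmem]
            have h1 : f r = 0 := Set.indicator_of_notMem hmem _
            have h2 : g r = 0 := Set.indicator_of_notMem hmem _
            rw [h1, h2]; simp
        have hsub2 : Ioc s (s+1) ∩ Ioc 0 τ = Ioc s (s+1) :=
          inter_eq_self_of_subset_left (fun r hr => ⟨hs.trans_lt hr.1, hr.2.trans hτ⟩)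
        rw [intervalIntegral.integral_congr hEq, intervalIntegral.integral_of_le hτ0,
          integral_indicator measurableSet_Ioc, setIntegral_const,
          measureReal_restrict_apply measurableSet_Ioc, hsub2, Real.volume_real_Ioc]
        norm_num
      set B : ℝ := K * (M * Real.exp ω * ‖x - y‖) with hBdef
      have hB0 : 0 ≤ B := by positivity
      have hae : ∀ᵐ τ ∂μ,
          ‖(∫ r in (0:ℝ)..τ, X τ r (f r)) - ∫ r in (0:ℝ)..τ, X τ r (g r)‖ ≤ B := by
        have h1 : eLpNorm (fun τ : ℝ =>
            (∫ r in (0:ℝ)..τ, X τ r (f r)) - ∫ r in (0:ℝ)..τ, X τ r (g r)) ⊤ μ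
            ≤ ENNReal.ofReal B := by
          refine le_trans hKey ?_
          rw [hBdef, ENNReal.ofReal_mul hK.le]
          exact mul_le_mul_right hsn _
        filter_upwards [enorm_ae_le_eLpNormEssSup (fun τ : ℝ =>
          (∫ r in (0:ℝ)..τ, X τ r (f r)) - ∫ r in (0:ℝ)..τ, X τ r (g r)) μ] with τ hτ
        rw [← eLpNorm_exponent_top] at hτ
        have h2 := le_trans hτ h1
        rw [← ofReal_norm_eq_enorm] at h2
        exact (ENNReal.ofReal_le_ofReal_iff hB0).mp h2
      have hfinal : ‖X t s x - X t s y‖ ≤ B := by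
        by_contra hgt
        push_neg at hgt
        have hst' : s < t := by linarith
        have hDcont : ContinuousAt (fun τ => X τ s x - X τ s y) t := by
          have hmk : ∀ z : 𝕏, ContinuousAt (fun τ => X τ s z) t := by
            intro z
            have h2 := hX_cont (t, s, z) ⟨hs, hst⟩
            have h3 : ContinuousWithinAt (fun τ : ℝ => ((τ, s, z) : ℝ × ℝ × 𝕏)) (Ici s) t :=
              (Continuous.continuousWithinAt (by continuity))
            have h4 : ContinuousWithinAt (fun τ : ℝ => X τ s z) (Ici s) t :=
              ContinuousWithinAt.comp (g := fun p : ℝ × ℝ × 𝕏 => X p.1 p.2.1 p.2.2)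
                (f := fun τ : ℝ => ((τ, s, z) : ℝ × ℝ × 𝕏)) h2 h3
                (fun τ (hτ : τ ∈ Ici s) => ⟨hs, hτ⟩)
            exact h4.continuousAt (Ici_mem_nhds hst')
          exact (hmk x).sub (hmk y)
        have hev : (fun τ => ‖X τ s x - X τ s y‖) ⁻¹' (Ioi B) ∈ 𝓝 t :=
          hDcont.norm (Ioi_mem_nhds hgt)
        obtain ⟨ε, hε, hball⟩ := Metric.mem_nhds_iff.mp hev
        have hIco : Ico t (t + ε) ⊆ Metric.ball t ε := by
          intro τ hτ
          rw [Real.ball_eq_Ioo]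
          exact ⟨by linarith [hτ.1], hτ.2⟩
        have hnull : μ {τ : ℝ | ¬ ‖(∫ r in (0:ℝ)..τ, X τ r (f r))
            - ∫ r in (0:ℝ)..τ, X τ r (g r)‖ ≤ B} = 0 := ae_iff.mp hae
        have hexists : ∃ τ ∈ Ico t (t + ε),
            ‖(∫ r in (0:ℝ)..τ, X τ r (f r)) - ∫ r in (0:ℝ)..τ, X τ r (g r)‖ ≤ B := by
          by_contra hno
          push_neg at hno
          have hsubbad : Ico t (t + ε) ⊆ {τ : ℝ | ¬ ‖(∫ r in (0:ℝ)..τ, X τ r (f r))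
              - ∫ r in (0:ℝ)..τ, X τ r (g r)‖ ≤ B} :=
            fun τ hτ => not_le.2 (hno τ hτ)
          have hzero := measure_mono_null hsubbad hnull
          have hico_sub : Ico t (t + ε) ∩ Ici (0:ℝ) = Ico t (t + ε) :=
            inter_eq_self_of_subset_left
              (fun τ hτ => le_trans (by linarith : (0:ℝ) ≤ t) hτ.1)
          have hpos : 0 < μ (Ico t (t + ε)) := by
            rw [hμdef, Measure.restrict_apply measurableSet_Ico, hico_sub, Real.volume_Ico]
            rw [ENNReal.ofReal_pos]
            linarith
          rw [hzero] at hpos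
          exact lt_irrefl _ hpos
        obtain ⟨τ, hτmem, hτle⟩ := hexists
        have hτs1 : s + 1 ≤ τ := le_trans hcase.le hτmem.1
        rw [heq τ hτs1] at hτle
        have hgt2 : B < ‖X τ s x - X τ s y‖ := hball (hIco hτmem)
        exact absurd hτle (not_le.2 hgt2)
      calc ‖X t s x - X t s y‖ ≤ B := hfinal
        _ ≤ (K + 1) * (M * Real.exp ω) * ‖x - y‖ := by
            rw [hBdef]
            nlinarith [norm_nonneg (x - y), hMe, hK.le]
  · -- reverse direction
    rintro ⟨⟨ψ, hψ1, hψ2⟩, N, hN, hstab⟩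
    have hψ' : Integrable ψ μ := memLp_one_iff_integrable.mp hψ1
    have key : ∀ f g : ℝ → 𝕏, Integrable f μ → Integrable g μ → ∀ t : ℝ, 0 ≤ t →
        ‖(∫ s in (0:ℝ)..t, X t s (f s)) - ∫ s in (0:ℝ)..t, X t s (g s)‖
          ≤ N * ∫ r, ‖f r - g r‖ ∂μ := by
      intro f g hf hg t ht
      have hFf := intg f hf t ht
      have hFg := intg g hg t ht
      have hfgI : Integrable (fun r => ‖f r - g r‖) (MeasureTheory.volume.restrict (Ioc 0 t)) := by
        rw [← hres t]
        exact ((hf.sub hg).norm.congr (Filter.Eventually.of_forall fun r => rfl)).restrict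
      rw [← intervalIntegral.integral_sub hFf hFg]
      calc ‖∫ r in (0:ℝ)..t, (X t r (f r) - X t r (g r))‖
          ≤ ∫ r in (0:ℝ)..t, ‖X t r (f r) - X t r (g r)‖ :=
            intervalIntegral.norm_integral_le_integral_norm ht
        _ ≤ ∫ r in (0:ℝ)..t, N * ‖f r - g r‖ := by
            apply intervalIntegral.integral_mono_on ht ((hFf.sub hFg).norm) ?_ ?_
            · rw [intervalIntegrable_iff_integrableOn_Ioc_of_le ht]
              exact hfgI.const_mul N
            · intro r hr
              exact hstab r t hr.1 hr.2 (f r) (g r)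
        _ = N * ∫ r in (0:ℝ)..t, ‖f r - g r‖ := intervalIntegral.integral_const_mul N _
        _ ≤ N * ∫ r, ‖f r - g r‖ ∂μ := by
            apply mul_le_mul_of_nonneg_left _ hN.le
            rw [intervalIntegral.integral_of_le ht, hμdef]
            have hint : IntegrableOn (fun r => ‖f r - g r‖) (Ici 0) MeasureTheory.volume := by
              show Integrable _ (MeasureTheory.volume.restrict (Ici (0:ℝ)))
              rw [← hμdef]
              exact (hf.sub hg).norm.congr (Filter.Eventually.of_forall fun r => rfl)
            refine setIntegral_mono_set hint ?_ ?_
            · exact Filter.Eventually.of_forall fun r => norm_nonneg _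
            · exact HasSubset.Subset.eventuallyLE (fun r hr => hr.1.le)
    have hsnorm : ∀ f g : ℝ → 𝕏, Integrable f μ → Integrable g μ →
        eLpNorm (f - g) 1 μ = ENNReal.ofReal (∫ r, ‖f r - g r‖ ∂μ) := by
      intro f g hf hg
      rw [eLpNorm_one_eq_lintegral_enorm, ← ofReal_integral_norm_eq_lintegral_enorm (hf.sub hg)]
      simp only [Pi.sub_apply]
    constructor
    · -- condition 1
      intro f hf
      have hf' : Integrable f μ := memLp_one_iff_integrable.mp hf
      refine ⟨hGmeas f hf.1, ?_⟩
      set Iψ : ℝ := ∫ r, ‖f r - ψ r‖ ∂μ with hIψdef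
      have hGψfin : eLpNorm (fun t : ℝ => ∫ s in (0:ℝ)..t, X t s (ψ s)) ⊤ μ ≠ ⊤ := hψ2.2.ne
      have hGψb : ∀ᵐ t ∂μ, ‖∫ s in (0:ℝ)..t, X t s (ψ s)‖
          ≤ (eLpNorm (fun t : ℝ => ∫ s in (0:ℝ)..t, X t s (ψ s)) ⊤ μ).toReal := by
        filter_upwards [enorm_ae_le_eLpNormEssSup
          (fun t : ℝ => ∫ s in (0:ℝ)..t, X t s (ψ s)) μ] with t h
        rw [← eLpNorm_exponent_top] at h
        have h2 := ENNReal.toReal_mono hGψfin h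
        simpa using h2
      have haemem : ∀ᵐ t ∂μ, t ∈ Ici (0:ℝ) := by
        rw [hμdef]; exact ae_restrict_mem measurableSet_Ici
      have hbound := eLpNorm_le_of_ae_bound (μ := μ) (p := (⊤ : ℝ≥0∞))
        (f := fun t : ℝ => ∫ s in (0:ℝ)..t, X t s (f s))
        (C := (eLpNorm (fun t : ℝ => ∫ s in (0:ℝ)..t, X t s (ψ s)) ⊤ μ).toReal + N * Iψ) ?_
      · refine lt_of_le_of_lt hbound ?_
        simp [ENNReal.toReal_top, ENNReal.ofReal_lt_top]
      · filter_upwards [hGψb, haemem] with t h1 ht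
        have h2 := key f ψ hf' hψ' t ht
        have h3 : ‖∫ s in (0:ℝ)..t, X t s (f s)‖
            ≤ ‖(∫ s in (0:ℝ)..t, X t s (f s)) - ∫ s in (0:ℝ)..t, X t s (ψ s)‖
              + ‖∫ s in (0:ℝ)..t, X t s (ψ s)‖ := by
          have h4 := norm_add_le ((∫ s in (0:ℝ)..t, X t s (f s))
            - ∫ s in (0:ℝ)..t, X t s (ψ s)) (∫ s in (0:ℝ)..t, X t s (ψ s))
          rwa [sub_add_cancel] at h4
        linarith
    · -- condition 2
      refine ⟨N, hN, ?_⟩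
      intro f g hf hg
      have hf' : Integrable f μ := memLp_one_iff_integrable.mp hf
      have hg' : Integrable g μ := memLp_one_iff_integrable.mp hg
      have haemem : ∀ᵐ t ∂μ, t ∈ Ici (0:ℝ) := by
        rw [hμdef]; exact ae_restrict_mem measurableSet_Ici
      have hbound := eLpNorm_le_of_ae_bound (μ := μ) (p := (⊤ : ℝ≥0∞))
        (f := fun t : ℝ => (∫ s in (0:ℝ)..t, X t s (f s)) - ∫ s in (0:ℝ)..t, X t s (g s))
        (C := N * ∫ r, ‖f r - g r‖ ∂μ) ?_
      · refine le_trans hbound ?_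
        rw [hsnorm f g hf' hg', ENNReal.ofReal_mul hN.le]
        simp [ENNReal.toReal_top]
      · filter_upwards [haemem] with t ht
        exact key f g hf' hg' t ht
end

section
/- Let 𝕏 be a Banach space, {X(t,s)}_{(t,s)∈Δ} a continuous evolution family on 𝕏, and 1 ≤ p ≤ q ≤ ∞. Assume: (a) there exists ψ ∈ L^p(ℝ₊,𝕏) such that Gψ ∈ L^q(ℝ₊,𝕏); and (b) {X(t,s)}_{(t,s)∈Δ} is uniformly exponentially stable, i.e., there exist N, ν > 0 with ‖X(t,s)x − X(t,s)y‖ ≤ N e^{−ν(t−s)} ‖x − y‖ for all (t,s) ∈ Δ and x, y ∈ 𝕏. Then the pair (L^p(ℝ₊,𝕏), L^q(ℝ₊,𝕏)) is admissible to {X(t,s)}_{(t,s)∈Δ}: Gf ∈ L^q(ℝ₊,𝕏) for all f ∈ L^p(ℝ₊,𝕏) and there exists K > 0 such that ‖Gf − Gg‖_q ≤ K ‖f − g‖_p for all f, g ∈ L^p(ℝ₊,𝕏). -/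
open MeasureTheory Real Set
open scoped ENNReal NNReal

namespace Admissible10

/-- Monotonicity of set lintegral in the set. -/
lemma lmono {f : ℝ → ℝ≥0∞} {s t : Set ℝ} (h : s ⊆ t) :
    ∫⁻ x in s, f x ≤ ∫⁻ x in t, f x :=
  lintegral_mono' (Measure.restrict_mono h le_rfl) le_rfl

lemma lint_exp_base (C c : ℝ) (hC : 0 ≤ C) (hc : 0 < c) :
    ∫⁻ u in Ici (0:ℝ), ENNReal.ofReal (C * Real.exp (-c * u)) = ENNReal.ofReal (C / c) := by
  rw [← Measure.restrict_congr_set Ioi_ae_eq_Ici]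
  rw [← ofReal_integral_eq_lintegral_ofReal]
  · congr 1
    have h2 : ∫ u in Ioi (0:ℝ), Real.exp (-c * u) = c⁻¹ := by
      have h := integral_comp_mul_left_Ioi (fun x => Real.exp (-x)) 0 hc
      simp only [mul_zero, neg_mul, integral_exp_neg_Ioi, neg_zero, Real.exp_zero,
        smul_eq_mul, mul_one] at h
      simpa using h
    rw [MeasureTheory.integral_const_mul, h2, div_eq_mul_inv]
  · exact (exp_neg_integrableOn_Ioi 0 hc).const_mul C
  · exact Filter.Eventually.of_forall fun x => by positivity

lemma exp_meas (C c a : ℝ) : Measurable fun u : ℝ => ENNReal.ofReal (C * Real.exp (-c * (u - a))) :=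
  ((Real.measurable_exp.comp ((measurable_id.sub_const a).const_mul (-c))).const_mul C).ennreal_ofReal

lemma lint_exp_Iic (C c t : ℝ) (hC : 0 ≤ C) (hc : 0 < c) :
    ∫⁻ s in Iic t, ENNReal.ofReal (C * Real.exp (-c * (t - s))) ≤ ENNReal.ofReal (C / c) := by
  have hmp := (Measure.measurePreserving_sub_left (volume : Measure ℝ) t).restrict_preimage
    (measurableSet_Ici (a := (0:ℝ)))
  have hpre : (fun s : ℝ => t - s) ⁻¹' (Ici (0:ℝ)) = Iic t := by
    ext s; simp [sub_nonneg]
  rw [hpre] at hmp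
  have hmeas : Measurable fun u : ℝ => ENNReal.ofReal (C * Real.exp (-c * u)) := by
    simpa using exp_meas C c 0
  have h := hmp.lintegral_comp hmeas
  exact le_of_eq (h.trans (lint_exp_base C c hC hc))

lemma lint_exp_Ici' (C c a : ℝ) (hC : 0 ≤ C) (hc : 0 < c) :
    ∫⁻ x in Ici a, ENNReal.ofReal (C * Real.exp (-c * (x - a))) ≤ ENNReal.ofReal (C / c) := by
  have hmp := (measurePreserving_sub_right (volume : Measure ℝ) a).restrict_preimage
    (measurableSet_Ici (a := (0:ℝ)))
  have hpre : (fun x : ℝ => x - a) ⁻¹' (Ici (0:ℝ)) = Ici a := by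
    ext x; simp [sub_nonneg]
  rw [hpre] at hmp
  have hmeas : Measurable fun u : ℝ => ENNReal.ofReal (C * Real.exp (-c * u)) := by
    simpa using exp_meas C c 0
  have h := hmp.lintegral_comp hmeas
  exact le_of_eq (h.trans (lint_exp_base C c hC hc))

/-- The convolution-type majorant. -/
noncomputable def Phi (N ν : ℝ) (Hm : ℝ → ℝ≥0∞) (t : ℝ) : ℝ≥0∞ :=
  ∫⁻ s in Ioc (0:ℝ) t, ENNReal.ofReal (N * Real.exp (-ν * (t - s))) * Hm s

/-- The sup-norm constant. -/
noncomputable def Binf (N ν : ℝ) (p : ℝ≥0∞) : ℝ≥0∞ :=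
  if p = ⊤ then ENNReal.ofReal (N / ν)
  else if p = 1 then ENNReal.ofReal N
  else ENNReal.ofReal (N ^ (p.toReal / (p.toReal - 1)) / (ν * (p.toReal / (p.toReal - 1))))
        ^ (1 / (p.toReal / (p.toReal - 1)))

/-- The final constant. -/
noncomputable def cKc (N ν : ℝ) (p q : ℝ≥0∞) : ℝ≥0∞ :=
  if q = ⊤ then Binf N ν p
  else Binf N ν p ^ ((q.toReal - p.toReal) * (1 / q.toReal)) *
    ENNReal.ofReal (N / ν) ^ (p.toReal * (1 / q.toReal))

lemma toReal_lt_of_lt {p : ℝ≥0∞} (hp : 1 ≤ p) (hptop : p ≠ ⊤) (hp1 : p ≠ 1) :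
    1 < p.toReal := by
  have h1 : 1 ≤ p.toReal := by
    simpa using ENNReal.toReal_mono hptop hp
  refine lt_of_le_of_ne h1 fun h => hp1 ?_
  rw [← ENNReal.ofReal_toReal hptop, ← h]
  norm_num

lemma Binf_ne_zero {N ν : ℝ} (hN : 0 < N) (hν : 0 < ν) {p : ℝ≥0∞} (hp : 1 ≤ p) :
    Binf N ν p ≠ 0 := by
  unfold Binf
  split_ifs with h1 h2
  · simp [ENNReal.ofReal_eq_zero, not_le, div_pos hN hν]
  · simp [ENNReal.ofReal_eq_zero, not_le, hN]
  · have hr1 : 1 < p.toReal := toReal_lt_of_lt hp h1 h2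
    have hr' : 0 < p.toReal / (p.toReal - 1) := div_pos (by linarith) (by linarith)
    have hpos : 0 < N ^ (p.toReal / (p.toReal - 1)) / (ν * (p.toReal / (p.toReal - 1))) :=
      div_pos (Real.rpow_pos_of_pos hN _) (by positivity)
    exact (ENNReal.rpow_pos (by simp [ENNReal.ofReal_pos, hpos]) ENNReal.ofReal_ne_top).ne'

lemma Binf_ne_top {N ν : ℝ} (hN : 0 < N) (hν : 0 < ν) {p : ℝ≥0∞} (hp : 1 ≤ p) :
    Binf N ν p ≠ ⊤ := by
  unfold Binf
  split_ifs with h1 h2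
  · exact ENNReal.ofReal_ne_top
  · exact ENNReal.ofReal_ne_top
  · have hr1 : 1 < p.toReal := toReal_lt_of_lt hp h1 h2
    have hr' : 0 < p.toReal / (p.toReal - 1) := div_pos (by linarith) (by linarith)
    exact ENNReal.rpow_ne_top_of_nonneg (by positivity) ENNReal.ofReal_ne_top

lemma cKc_ne_zero {N ν : ℝ} (hN : 0 < N) (hν : 0 < ν) {p q : ℝ≥0∞} (hp : 1 ≤ p) :
    cKc N ν p q ≠ 0 := by
  unfold cKc
  split_ifs with h1
  · exact Binf_ne_zero hN hν hp
  · apply mul_ne_zero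
    · exact (ENNReal.rpow_pos (pos_iff_ne_zero.mpr (Binf_ne_zero hN hν hp))
        (Binf_ne_top hN hν hp)).ne'
    · exact (ENNReal.rpow_pos (by simp [ENNReal.ofReal_pos, div_pos hN hν])
        ENNReal.ofReal_ne_top).ne'

lemma cKc_ne_top {N ν : ℝ} (hN : 0 < N) (hν : 0 < ν) {p q : ℝ≥0∞}
    (hp : 1 ≤ p) (hpq : p ≤ q) : cKc N ν p q ≠ ⊤ := by
  unfold cKc
  split_ifs with h1
  · exact Binf_ne_top hN hν hp
  · have hptop : p ≠ ⊤ := fun hpt => h1 (top_le_iff.mp (hpt ▸ hpq))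
    have hle : p.toReal ≤ q.toReal := ENNReal.toReal_mono h1 hpq
    have hq1 : 1 ≤ q := hp.trans hpq
    have hq0 : 0 < q.toReal := ENNReal.toReal_pos (fun h => by simp [h] at hq1) h1
    exact ENNReal.mul_ne_top
      (ENNReal.rpow_ne_top_of_nonneg (mul_nonneg (by linarith) (by positivity))
        (Binf_ne_top hN hν hp))
      (ENNReal.rpow_ne_top_of_nonneg (by positivity) ENNReal.ofReal_ne_top)


lemma meas_rpow {g : ℝ → ℝ≥0∞} (hg : Measurable g) (y : ℝ) :
    Measurable fun s => g s ^ y :=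
  ENNReal.continuous_rpow_const.measurable.comp hg

lemma sup_bound (N ν : ℝ) (hN : 0 < N) (hν : 0 < ν) (p : ℝ≥0∞) (hp : 1 ≤ p)
    (Hm : ℝ → ℝ≥0∞) (hHm : Measurable Hm) (A : ℝ≥0∞) (hAtop : A ≠ ⊤)
    (hAp : p ≠ ⊤ → ∫⁻ s in Ici (0:ℝ), Hm s ^ p.toReal = A ^ p.toReal)
    (hAinf : p = ⊤ → ∀ᵐ s ∂(volume.restrict (Ici (0:ℝ))), Hm s ≤ A)
    (t : ℝ) (ht : 0 ≤ t) : Phi N ν Hm t ≤ Binf N ν p * A := by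
  have hsub : Ioc (0:ℝ) t ⊆ Ici (0:ℝ) := fun s hs => hs.1.le
  unfold Phi
  by_cases hptop : p = ⊤
  · rw [Binf, if_pos hptop]
    have hHmA : ∀ᵐ s ∂(volume.restrict (Ioc (0:ℝ) t)), Hm s ≤ A :=
      ae_restrict_of_ae_restrict_of_subset hsub (hAinf hptop)
    calc ∫⁻ s in Ioc (0:ℝ) t, ENNReal.ofReal (N * Real.exp (-ν * (t - s))) * Hm s
        ≤ ∫⁻ s in Ioc (0:ℝ) t, ENNReal.ofReal (N * Real.exp (-ν * (t - s))) * A :=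
          lintegral_mono_ae (hHmA.mono fun s h => mul_le_mul_right h _)
      _ = (∫⁻ s in Ioc (0:ℝ) t, ENNReal.ofReal (N * Real.exp (-ν * (t - s)))) * A :=
          lintegral_mul_const' A _ hAtop
      _ ≤ ENNReal.ofReal (N / ν) * A := by
          refine mul_le_mul_left (le_trans (lmono Ioc_subset_Iic_self) ?_) A
          exact lint_exp_Iic N ν t hN.le hν
  · have hp0 : p ≠ 0 := fun h => by simp [h] at hp
    have hr0 : 0 < p.toReal := ENNReal.toReal_pos hp0 hptop
    by_cases hp1 : p = 1
    · rw [Binf, if_neg hptop, if_pos hp1]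
      have hint : ∫⁻ s in Ici (0:ℝ), Hm s = A := by
        have h := hAp hptop
        rw [hp1] at h
        simpa using h
      calc ∫⁻ s in Ioc (0:ℝ) t, ENNReal.ofReal (N * Real.exp (-ν * (t - s))) * Hm s
          ≤ ∫⁻ s in Ioc (0:ℝ) t, ENNReal.ofReal N * Hm s := by
            refine lintegral_mono_ae ?_
            rw [ae_restrict_iff' measurableSet_Ioc]
            refine Filter.Eventually.of_forall fun s hs => ?_
            refine mul_le_mul_left (ENNReal.ofReal_le_ofReal ?_) (Hm s)
            have hexp : Real.exp (-ν * (t - s)) ≤ 1 := by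
              rw [Real.exp_le_one_iff, neg_mul]
              exact neg_nonpos.mpr (mul_nonneg hν.le (sub_nonneg.2 hs.2))
            exact mul_le_of_le_one_right hN.le hexp
        _ = ENNReal.ofReal N * ∫⁻ s in Ioc (0:ℝ) t, Hm s := lintegral_const_mul _ hHm
        _ ≤ ENNReal.ofReal N * ∫⁻ s in Ici (0:ℝ), Hm s := mul_le_mul_right (lmono hsub) _
        _ = ENNReal.ofReal N * A := by rw [hint]
    · rw [Binf, if_neg hptop, if_neg hp1]
      have hr1 : 1 < p.toReal := toReal_lt_of_lt hp hptop hp1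
      set r := p.toReal with hrdef
      set r' := r / (r - 1) with hr'def
      have hconj : r.HolderConjugate r' := Real.HolderConjugate.conjExponent hr1
      have hr'0 : 0 < r' := hconj.symm.pos
      have hkm : Measurable fun s : ℝ => ENNReal.ofReal (N * Real.exp (-ν * (t - s))) :=
        ((Real.measurable_exp.comp
          ((measurable_const.sub measurable_id).const_mul (-ν))).const_mul N).ennreal_ofReal
      have hH := ENNReal.lintegral_mul_le_Lp_mul_Lq (volume.restrict (Ioc (0:ℝ) t)) hconj.symm
        hkm.aemeasurable hHm.aemeasurable
      simp only [Pi.mul_apply] at hH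
      refine le_trans hH (mul_le_mul' ?_ ?_)
      · have heq : ∀ s : ℝ, (ENNReal.ofReal (N * Real.exp (-ν * (t - s)))) ^ r'
            = ENNReal.ofReal (N ^ r' * Real.exp (-(ν * r') * (t - s))) := by
          intro s
          rw [ENNReal.ofReal_rpow_of_pos (by positivity)]
          congr 1
          rw [Real.mul_rpow hN.le (Real.exp_pos _).le, ← Real.exp_mul]
          congr 1
          ring
        have hb : ∫⁻ s in Ioc (0:ℝ) t, (ENNReal.ofReal (N * Real.exp (-ν * (t - s)))) ^ r'
            ≤ ENNReal.ofReal (N ^ r' / (ν * r')) := by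
          calc ∫⁻ s in Ioc (0:ℝ) t, (ENNReal.ofReal (N * Real.exp (-ν * (t - s)))) ^ r'
              = ∫⁻ s in Ioc (0:ℝ) t, ENNReal.ofReal (N ^ r' * Real.exp (-(ν * r') * (t - s))) :=
                lintegral_congr fun s => heq s
            _ ≤ ∫⁻ s in Iic t, ENNReal.ofReal (N ^ r' * Real.exp (-(ν * r') * (t - s))) :=
                lmono Ioc_subset_Iic_self
            _ ≤ ENNReal.ofReal (N ^ r' / (ν * r')) :=
                lint_exp_Iic _ _ t (by positivity) (mul_pos hν hr'0)
        exact ENNReal.rpow_le_rpow hb (by positivity)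
      · have hb2 : ∫⁻ s in Ioc (0:ℝ) t, Hm s ^ r ≤ A ^ r := (hAp hptop) ▸ lmono hsub
        calc (∫⁻ s in Ioc (0:ℝ) t, Hm s ^ r) ^ (1 / r) ≤ (A ^ r) ^ (1 / r) :=
            ENNReal.rpow_le_rpow hb2 (by positivity)
          _ = A := by
            rw [← ENNReal.rpow_mul, mul_one_div, div_self (ne_of_gt hr0), ENNReal.rpow_one]

lemma swap_bound (N ν : ℝ) (hN : 0 < N) (hν : 0 < ν)
    (W : ℝ → ℝ≥0∞) (hW : Measurable W) (hWtop : ∀ s, W s ≠ ⊤) :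
    ∫⁻ t in Ici (0:ℝ), ∫⁻ s in Ioc (0:ℝ) t, ENNReal.ofReal (N * Real.exp (-ν * (t - s))) * W s
      ≤ ENNReal.ofReal (N / ν) * ∫⁻ s in Ici (0:ℝ), W s := by
  set F : ℝ → ℝ → ℝ≥0∞ := fun t s =>
    ({z : ℝ × ℝ | z.2 ∈ Ioc 0 z.1}.indicator
      (fun z => ENNReal.ofReal (N * Real.exp (-ν * (z.1 - z.2)))) (t, s)) * W s with hFdef
  have hSet : MeasurableSet {z : ℝ × ℝ | z.2 ∈ Ioc 0 z.1} := by
    have h : {z : ℝ × ℝ | z.2 ∈ Ioc 0 z.1} = {z : ℝ × ℝ | 0 < z.2} ∩ {z : ℝ × ℝ | z.2 ≤ z.1} := by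
      ext z; simp [Set.mem_Ioc, Set.mem_setOf_eq]
    rw [h]
    exact (measurableSet_lt measurable_const measurable_snd).inter
      (measurableSet_le measurable_snd measurable_fst)
  have hkz : Measurable fun z : ℝ × ℝ => ENNReal.ofReal (N * Real.exp (-ν * (z.1 - z.2))) :=
    ((Real.measurable_exp.comp
      ((measurable_fst.sub measurable_snd).const_mul (-ν))).const_mul N).ennreal_ofReal
  have hFm : Measurable (Function.uncurry F) :=
    (hkz.indicator hSet).mul (hW.comp measurable_snd)
  have hrw : ∀ t : ℝ,
      (∫⁻ s in Ioc (0:ℝ) t, ENNReal.ofReal (N * Real.exp (-ν * (t - s))) * W s)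
        = ∫⁻ s, F t s := by
    intro t
    rw [← lintegral_indicator measurableSet_Ioc]
    refine lintegral_congr fun s => ?_
    by_cases hs : s ∈ Ioc (0:ℝ) t
    · rw [Set.indicator_of_mem hs, hFdef]
      simp only
      rw [Set.indicator_of_mem (show (t,s) ∈ {z : ℝ × ℝ | z.2 ∈ Ioc 0 z.1} from hs)]
    · rw [Set.indicator_of_notMem hs, hFdef]
      simp only
      rw [Set.indicator_of_notMem (show (t,s) ∉ {z : ℝ × ℝ | z.2 ∈ Ioc 0 z.1} from hs), zero_mul]
  have hmid : ∀ s : ℝ, (∫⁻ t in Ici (0:ℝ), F t s)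
      ≤ (Ioi (0:ℝ)).indicator (fun s => W s * ENNReal.ofReal (N / ν)) s := by
    intro s
    have hpull : (∫⁻ t in Ici (0:ℝ), F t s)
        = (∫⁻ t in Ici (0:ℝ), {z : ℝ × ℝ | z.2 ∈ Ioc 0 z.1}.indicator
            (fun z => ENNReal.ofReal (N * Real.exp (-ν * (z.1 - z.2)))) (t, s)) * W s :=
      lintegral_mul_const' (W s) _ (hWtop s)
    rw [hpull]
    by_cases hs : 0 < s
    · have hind : ∀ t : ℝ, {z : ℝ × ℝ | z.2 ∈ Ioc 0 z.1}.indicator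
          (fun z => ENNReal.ofReal (N * Real.exp (-ν * (z.1 - z.2)))) (t, s)
          = (Ici s).indicator (fun u => ENNReal.ofReal (N * Real.exp (-ν * (u - s)))) t := by
        intro t
        by_cases h : s ≤ t
        · rw [Set.indicator_of_mem (show (t,s) ∈ {z : ℝ × ℝ | z.2 ∈ Ioc 0 z.1} from ⟨hs, h⟩),
            Set.indicator_of_mem (show t ∈ Ici s from h)]
        · rw [Set.indicator_of_notMem
            (show (t,s) ∉ {z : ℝ × ℝ | z.2 ∈ Ioc 0 z.1} from fun hmem => h hmem.2),
            Set.indicator_of_notMem (show t ∉ Ici s from h)]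
      rw [lintegral_congr hind, lintegral_indicator measurableSet_Ici,
        Measure.restrict_restrict measurableSet_Ici,
        inter_eq_left.mpr (Ici_subset_Ici.mpr hs.le),
        Set.indicator_of_mem (show s ∈ Ioi (0:ℝ) from hs)]
      calc (∫⁻ t in Ici s, ENNReal.ofReal (N * Real.exp (-ν * (t - s)))) * W s
          ≤ ENNReal.ofReal (N / ν) * W s :=
            mul_le_mul_left (lint_exp_Ici' N ν s hN.le hν) (W s)
        _ = W s * ENNReal.ofReal (N / ν) := mul_comm _ _
    · have hzero : ∀ t : ℝ, {z : ℝ × ℝ | z.2 ∈ Ioc 0 z.1}.indicator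
          (fun z => ENNReal.ofReal (N * Real.exp (-ν * (z.1 - z.2)))) (t, s) = 0 := fun t =>
        Set.indicator_of_notMem (fun hmem => hs hmem.1) _
      rw [lintegral_congr hzero, lintegral_zero, zero_mul]
      exact zero_le
  calc ∫⁻ t in Ici (0:ℝ), ∫⁻ s in Ioc (0:ℝ) t, ENNReal.ofReal (N * Real.exp (-ν * (t - s))) * W s
      = ∫⁻ t in Ici (0:ℝ), ∫⁻ s, F t s := lintegral_congr fun t => hrw t
    _ = ∫⁻ s, ∫⁻ t in Ici (0:ℝ), F t s := lintegral_lintegral_swap hFm.aemeasurable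
    _ ≤ ∫⁻ s, (Ioi (0:ℝ)).indicator (fun s => W s * ENNReal.ofReal (N / ν)) s :=
        lintegral_mono hmid
    _ = ∫⁻ s in Ioi (0:ℝ), W s * ENNReal.ofReal (N / ν) := lintegral_indicator measurableSet_Ioi _
    _ ≤ ∫⁻ s in Ici (0:ℝ), W s * ENNReal.ofReal (N / ν) := lmono Ioi_subset_Ici_self
    _ = (∫⁻ s in Ici (0:ℝ), W s) * ENNReal.ofReal (N / ν) :=
        lintegral_mul_const' _ _ ENNReal.ofReal_ne_top
    _ = ENNReal.ofReal (N / ν) * ∫⁻ s in Ici (0:ℝ), W s := mul_comm _ _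

lemma lp_bound (N ν : ℝ) (hN : 0 < N) (hν : 0 < ν) (p : ℝ≥0∞) (hp : 1 ≤ p) (hptop : p ≠ ⊤)
    (Hm : ℝ → ℝ≥0∞) (hHm : Measurable Hm) (hHmtop : ∀ s, Hm s ≠ ⊤)
    (A : ℝ≥0∞)
    (hAp : ∫⁻ s in Ici (0:ℝ), Hm s ^ p.toReal = A ^ p.toReal) :
    ∫⁻ t in Ici (0:ℝ), Phi N ν Hm t ^ p.toReal
      ≤ ENNReal.ofReal (N / ν) ^ p.toReal * A ^ p.toReal := by
  have hp0 : p ≠ 0 := fun h => by simp [h] at hp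
  have hr0 : 0 < p.toReal := ENNReal.toReal_pos hp0 hptop
  have hC0 : ENNReal.ofReal (N / ν) ≠ 0 := by
    simp only [ne_eq, ENNReal.ofReal_eq_zero, not_le]
    positivity
  have hk0 : ∀ x : ℝ, ENNReal.ofReal (N * Real.exp x) ≠ 0 := fun x => by
    simp only [ne_eq, ENNReal.ofReal_eq_zero, not_le]
    positivity
  by_cases hp1 : p = 1
  · subst hp1
    simp only [ENNReal.toReal_one, ENNReal.rpow_one]
    have h2 : ∫⁻ s in Ici (0:ℝ), Hm s = A := by simpa using hAp
    calc ∫⁻ t in Ici (0:ℝ), Phi N ν Hm t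
        = ∫⁻ t in Ici (0:ℝ), ∫⁻ s in Ioc (0:ℝ) t,
            ENNReal.ofReal (N * Real.exp (-ν * (t - s))) * Hm s := rfl
      _ ≤ ENNReal.ofReal (N / ν) * ∫⁻ s in Ici (0:ℝ), Hm s := swap_bound N ν hN hν Hm hHm hHmtop
      _ = ENNReal.ofReal (N / ν) * A := by rw [h2]
  · have hr1 : 1 < p.toReal := toReal_lt_of_lt hp hptop hp1
    set r := p.toReal with hrdef
    set r' := r / (r - 1) with hr'def
    have hconj : r.HolderConjugate r' := Real.HolderConjugate.conjExponent hr1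
    have hr'0 : 0 < r' := hconj.symm.pos
    have hpt : ∀ t : ℝ, Phi N ν Hm t ^ r
        ≤ ENNReal.ofReal (N / ν) ^ (r - 1) *
          ∫⁻ s in Ioc (0:ℝ) t, ENNReal.ofReal (N * Real.exp (-ν * (t - s))) * Hm s ^ r := by
      intro t
      have hkm : Measurable fun s : ℝ => ENNReal.ofReal (N * Real.exp (-ν * (t - s))) :=
        ((Real.measurable_exp.comp
          ((measurable_const.sub measurable_id).const_mul (-ν))).const_mul N).ennreal_ofReal
      have hsplit : Phi N ν Hm t = ∫⁻ s in Ioc (0:ℝ) t,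
          (fun s => (ENNReal.ofReal (N * Real.exp (-ν * (t - s)))) ^ (1/r')) s *
          (fun s => (ENNReal.ofReal (N * Real.exp (-ν * (t - s)))) ^ (1/r) * Hm s) s := by
        refine lintegral_congr fun s => ?_
        simp only
        rw [← mul_assoc, ← ENNReal.rpow_add _ _ (hk0 _) ENNReal.ofReal_ne_top,
          show 1/r' + 1/r = 1 from by
            rw [one_div, one_div]; exact hconj.symm.inv_add_inv_eq_one,
          ENNReal.rpow_one]
      have hH := ENNReal.lintegral_mul_le_Lp_mul_Lq (volume.restrict (Ioc (0:ℝ) t)) hconj.symm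
        (meas_rpow hkm (1/r')).aemeasurable ((meas_rpow hkm (1/r)).mul hHm).aemeasurable
      simp only [Pi.mul_apply] at hH
      have hfac1 : (∫⁻ s in Ioc (0:ℝ) t,
            ((ENNReal.ofReal (N * Real.exp (-ν * (t - s)))) ^ (1/r')) ^ r') ^ (1/r')
          ≤ ENNReal.ofReal (N / ν) ^ (1/r') := by
        refine ENNReal.rpow_le_rpow ?_ (by positivity)
        have heq : ∀ s : ℝ, ((ENNReal.ofReal (N * Real.exp (-ν * (t - s)))) ^ (1/r')) ^ r'
            = ENNReal.ofReal (N * Real.exp (-ν * (t - s))) := by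
          intro s
          rw [← ENNReal.rpow_mul, one_div, inv_mul_cancel₀ (ne_of_gt hr'0), ENNReal.rpow_one]
        rw [lintegral_congr heq]
        exact le_trans (lmono Ioc_subset_Iic_self) (lint_exp_Iic N ν t hN.le hν)
      have hfac2 : (∫⁻ s in Ioc (0:ℝ) t,
            ((ENNReal.ofReal (N * Real.exp (-ν * (t - s)))) ^ (1/r) * Hm s) ^ r) ^ (1/r)
          = (∫⁻ s in Ioc (0:ℝ) t,
              ENNReal.ofReal (N * Real.exp (-ν * (t - s))) * Hm s ^ r) ^ (1/r) := by
        congr 1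
        refine lintegral_congr fun s => ?_
        rw [ENNReal.mul_rpow_of_nonneg _ _ hr0.le, ← ENNReal.rpow_mul, one_div,
          inv_mul_cancel₀ (ne_of_gt hr0), ENNReal.rpow_one]
      have h1 : Phi N ν Hm t ≤ ENNReal.ofReal (N / ν) ^ (1/r') *
          (∫⁻ s in Ioc (0:ℝ) t, ENNReal.ofReal (N * Real.exp (-ν * (t - s))) * Hm s ^ r) ^ (1/r) := by
        rw [hsplit]
        refine le_trans hH ?_
        rw [hfac2]
        exact mul_le_mul_left hfac1 _
      calc Phi N ν Hm t ^ r
          ≤ (ENNReal.ofReal (N / ν) ^ (1/r') *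
              (∫⁻ s in Ioc (0:ℝ) t,
                ENNReal.ofReal (N * Real.exp (-ν * (t - s))) * Hm s ^ r) ^ (1/r)) ^ r :=
            ENNReal.rpow_le_rpow h1 hr0.le
        _ = ENNReal.ofReal (N / ν) ^ ((1/r') * r) *
            ((∫⁻ s in Ioc (0:ℝ) t,
              ENNReal.ofReal (N * Real.exp (-ν * (t - s))) * Hm s ^ r) ^ ((1/r) * r)) := by
            rw [ENNReal.mul_rpow_of_nonneg _ _ hr0.le, ← ENNReal.rpow_mul, ← ENNReal.rpow_mul]
        _ = ENNReal.ofReal (N / ν) ^ (r - 1) *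
            ∫⁻ s in Ioc (0:ℝ) t, ENNReal.ofReal (N * Real.exp (-ν * (t - s))) * Hm s ^ r := by
            rw [show (1/r') * r = r - 1 from by
                rw [one_div, ← div_eq_inv_mul]; exact hconj.div_conj_eq_sub_one,
              show (1/r) * r = 1 from by
                rw [one_div]; exact inv_mul_cancel₀ (ne_of_gt hr0),
              ENNReal.rpow_one]
    calc ∫⁻ t in Ici (0:ℝ), Phi N ν Hm t ^ r
        ≤ ∫⁻ t in Ici (0:ℝ), ENNReal.ofReal (N / ν) ^ (r - 1) *
            ∫⁻ s in Ioc (0:ℝ) t, ENNReal.ofReal (N * Real.exp (-ν * (t - s))) * Hm s ^ r :=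
          lintegral_mono fun t => hpt t
      _ = ENNReal.ofReal (N / ν) ^ (r - 1) * ∫⁻ t in Ici (0:ℝ),
            ∫⁻ s in Ioc (0:ℝ) t, ENNReal.ofReal (N * Real.exp (-ν * (t - s))) * Hm s ^ r :=
          lintegral_const_mul' _ _
            (ENNReal.rpow_ne_top_of_nonneg (by linarith) ENNReal.ofReal_ne_top)
      _ ≤ ENNReal.ofReal (N / ν) ^ (r - 1) *
            (ENNReal.ofReal (N / ν) * ∫⁻ s in Ici (0:ℝ), Hm s ^ r) :=
          mul_le_mul_right (swap_bound N ν hN hν (fun s => Hm s ^ r) (meas_rpow hHm r)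
            (fun s => ENNReal.rpow_ne_top_of_nonneg hr0.le (hHmtop s))) _
      _ = ENNReal.ofReal (N / ν) ^ r * A ^ r := by
          rw [hAp, ← mul_assoc]
          congr 1
          nth_rewrite 2 [← ENNReal.rpow_one (ENNReal.ofReal (N / ν))]
          rw [← ENNReal.rpow_add _ _ hC0 ENNReal.ofReal_ne_top, sub_add_cancel]


lemma core_bound {𝕏 : Type*} [NormedAddCommGroup 𝕏]
    (N ν : ℝ) (hN : 0 < N) (hν : 0 < ν)
    (p q : ℝ≥0∞) (hp : 1 ≤ p) (hpq : p ≤ q)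
    (Hm : ℝ → ℝ≥0∞) (hHm : Measurable Hm) (hHmtop : ∀ s, Hm s ≠ ⊤)
    (A : ℝ≥0∞) (hA0 : A ≠ 0) (hAtop : A ≠ ⊤)
    (hAp : p ≠ ⊤ → ∫⁻ s in Ici (0:ℝ), Hm s ^ p.toReal = A ^ p.toReal)
    (hAinf : p = ⊤ → ∀ᵐ s ∂(volume.restrict (Ici (0:ℝ))), Hm s ≤ A)
    (D : ℝ → 𝕏) (hD : ∀ t : ℝ, 0 ≤ t → (‖D t‖₊ : ℝ≥0∞) ≤ Phi N ν Hm t) :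
    eLpNorm D q (volume.restrict (Ici (0:ℝ))) ≤ cKc N ν p q * A := by
  have hsup : ∀ t : ℝ, 0 ≤ t → Phi N ν Hm t ≤ Binf N ν p * A :=
    sup_bound N ν hN hν p hp Hm hHm A hAtop hAp hAinf
  by_cases hqtop : q = ⊤
  · rw [cKc, if_pos hqtop, hqtop, eLpNorm_exponent_top, eLpNormEssSup]
    refine essSup_le_of_ae_le _ ?_
    have h : ∀ᵐ t ∂(volume.restrict (Ici (0:ℝ))), (‖D t‖₊ : ℝ≥0∞) ≤ Binf N ν p * A := by
      rw [ae_restrict_iff' measurableSet_Ici]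
      exact Filter.Eventually.of_forall fun t ht => (hD t ht).trans (hsup t ht)
    exact h
  · have hq1 : 1 ≤ q := hp.trans hpq
    have hq0 : q ≠ 0 := fun h => by simp [h] at hq1
    have hptop : p ≠ ⊤ := fun h => hqtop (top_le_iff.mp (h ▸ hpq))
    have hp0 : p ≠ 0 := fun h => by simp [h] at hp
    rw [cKc, if_neg hqtop, eLpNorm_eq_lintegral_rpow_enorm_toReal hq0 hqtop]
    set r := p.toReal with hrdef
    set rq := q.toReal with hrqdef
    have hr0 : 0 < r := ENNReal.toReal_pos hp0 hptop
    have hrq0 : 0 < rq := ENNReal.toReal_pos hq0 hqtop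
    have hrle : r ≤ rq := ENNReal.toReal_mono hqtop hpq
    have hBA0 : Binf N ν p * A ≠ 0 := mul_ne_zero (Binf_ne_zero hN hν hp) hA0
    have hBAtop : Binf N ν p * A ≠ ⊤ := ENNReal.mul_ne_top (Binf_ne_top hN hν hp) hAtop
    have hpt : ∀ t : ℝ, 0 ≤ t →
        (‖D t‖₊ : ℝ≥0∞) ^ rq ≤ Phi N ν Hm t ^ r * (Binf N ν p * A) ^ (rq - r) := by
      intro t ht
      by_cases hz : (‖D t‖₊ : ℝ≥0∞) = 0
      · rw [hz, ENNReal.zero_rpow_of_pos hrq0]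
        exact zero_le
      · calc (‖D t‖₊ : ℝ≥0∞) ^ rq = (‖D t‖₊ : ℝ≥0∞) ^ (r + (rq - r)) := by rw [add_sub_cancel]
          _ = (‖D t‖₊ : ℝ≥0∞) ^ r * (‖D t‖₊ : ℝ≥0∞) ^ (rq - r) :=
            ENNReal.rpow_add _ _ hz ENNReal.coe_ne_top
          _ ≤ Phi N ν Hm t ^ r * (Binf N ν p * A) ^ (rq - r) :=
            mul_le_mul' (ENNReal.rpow_le_rpow (hD t ht) hr0.le)
              (ENNReal.rpow_le_rpow ((hD t ht).trans (hsup t ht)) (by linarith))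
    have hfinal : ((ENNReal.ofReal (N / ν) ^ r * A ^ r) * (Binf N ν p * A) ^ (rq - r)) ^ (1 / rq)
        = Binf N ν p ^ ((rq - r) * (1 / rq)) * ENNReal.ofReal (N / ν) ^ (r * (1 / rq)) * A := by
      rw [ENNReal.mul_rpow_of_nonneg (Binf N ν p) A (by linarith : (0:ℝ) ≤ rq - r)]
      rw [show ENNReal.ofReal (N / ν) ^ r * A ^ r * (Binf N ν p ^ (rq - r) * A ^ (rq - r))
          = Binf N ν p ^ (rq - r) * ENNReal.ofReal (N / ν) ^ r * (A ^ r * A ^ (rq - r)) from by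
        ring]
      rw [show A ^ r * A ^ (rq - r) = A ^ rq from by
        rw [← ENNReal.rpow_add _ _ hA0 hAtop, add_sub_cancel]]
      rw [ENNReal.mul_rpow_of_nonneg _ _ (by positivity : (0:ℝ) ≤ 1 / rq)]
      rw [ENNReal.mul_rpow_of_nonneg _ _ (by positivity : (0:ℝ) ≤ 1 / rq)]
      rw [← ENNReal.rpow_mul, ← ENNReal.rpow_mul, ← ENNReal.rpow_mul]
      rw [mul_one_div_cancel (ne_of_gt hrq0), ENNReal.rpow_one]
    calc (∫⁻ t, ((‖D t‖₊ : ℝ≥0∞)) ^ rq ∂(volume.restrict (Ici (0:ℝ)))) ^ (1 / rq)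
        ≤ (∫⁻ t in Ici (0:ℝ), Phi N ν Hm t ^ r * (Binf N ν p * A) ^ (rq - r)) ^ (1 / rq) := by
          refine ENNReal.rpow_le_rpow (lintegral_mono_ae ?_) (by positivity)
          rw [ae_restrict_iff' measurableSet_Ici]
          exact Filter.Eventually.of_forall hpt
      _ = ((∫⁻ t in Ici (0:ℝ), Phi N ν Hm t ^ r) * (Binf N ν p * A) ^ (rq - r)) ^ (1 / rq) := by
          rw [lintegral_mul_const' _ _ (ENNReal.rpow_ne_top_of_nonneg (by linarith) hBAtop)]
      _ ≤ ((ENNReal.ofReal (N / ν) ^ r * A ^ r) * (Binf N ν p * A) ^ (rq - r)) ^ (1 / rq) := by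
          refine ENNReal.rpow_le_rpow (mul_le_mul_left ?_ _) (by positivity)
          exact lp_bound N ν hN hν p hp hptop Hm hHm hHmtop A (hAp hptop)
      _ = Binf N ν p ^ ((rq - r) * (1 / rq)) * ENNReal.ofReal (N / ν) ^ (r * (1 / rq)) * A := hfinal

end Admissible10

/-- If `1 ≤ p ≤ q ≤ ∞`, there exists `ψ ∈ L^p(ℝ₊,𝕏)` with `Gψ ∈ L^q(ℝ₊,𝕏)`,
and the continuous evolution family `X` is uniformly exponentially stable, then the pair
`(L^p(ℝ₊,𝕏), L^q(ℝ₊,𝕏))` is admissible to `X`. -/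
theorem admissible_of_uniformly_exponentially_stable
    {𝕏 : Type*} [NormedAddCommGroup 𝕏] [NormedSpace ℝ 𝕏] [CompleteSpace 𝕏]
    (X : ℝ → ℝ → 𝕏 → 𝕏)
    (hX_id : ∀ t : ℝ, 0 ≤ t → ∀ x : 𝕏, X t t x = x)
    (hX_cocycle : ∀ s r t : ℝ, 0 ≤ s → s ≤ r → r ≤ t →
      ∀ x : 𝕏, X t s x = X t r (X r s x))
    (M ω : ℝ) (hM : 0 < M) (hω : 0 < ω)
    (hX_lip : ∀ s t : ℝ, 0 ≤ s → s ≤ t → ∀ x y : 𝕏,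
      ‖X t s x - X t s y‖ ≤ M * Real.exp (ω * (t - s)) * ‖x - y‖)
    (hX_cont : ContinuousOn (fun p : ℝ × ℝ × 𝕏 => X p.1 p.2.1 p.2.2)
      {p : ℝ × ℝ × 𝕏 | 0 ≤ p.2.1 ∧ p.2.1 ≤ p.1})
    (p q : ℝ≥0∞) (hp : 1 ≤ p) (hpq : p ≤ q)
    (hψ : ∃ ψ : ℝ → 𝕏,
      MemLp ψ p (MeasureTheory.volume.restrict (Set.Ici (0:ℝ))) ∧
      MemLp (fun t : ℝ => ∫ s in (0:ℝ)..t, X t s (ψ s)) q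
        (MeasureTheory.volume.restrict (Set.Ici (0:ℝ))))
    (hues : ∃ N ν : ℝ, 0 < N ∧ 0 < ν ∧ ∀ s t : ℝ, 0 ≤ s → s ≤ t → ∀ x y : 𝕏,
      ‖X t s x - X t s y‖ ≤ N * Real.exp (-ν * (t - s)) * ‖x - y‖) :
    (∀ f : ℝ → 𝕏,
      MemLp f p (MeasureTheory.volume.restrict (Set.Ici (0:ℝ))) →
      MemLp (fun t : ℝ => ∫ s in (0:ℝ)..t, X t s (f s)) q
        (MeasureTheory.volume.restrict (Set.Ici (0:ℝ)))) ∧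
    (∃ K : ℝ, 0 < K ∧ ∀ f g : ℝ → 𝕏,
      MemLp f p (MeasureTheory.volume.restrict (Set.Ici (0:ℝ))) →
      MemLp g p (MeasureTheory.volume.restrict (Set.Ici (0:ℝ))) →
      eLpNorm (fun t : ℝ =>
          (∫ s in (0:ℝ)..t, X t s (f s)) - ∫ s in (0:ℝ)..t, X t s (g s)) q
        (MeasureTheory.volume.restrict (Set.Ici (0:ℝ))) ≤
      ENNReal.ofReal K *
        eLpNorm (f - g) p (MeasureTheory.volume.restrict (Set.Ici (0:ℝ)))) := by
  classical
  open Admissible10 in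
  obtain ⟨N, ν, hN, hν, hX⟩ := hues
  obtain ⟨ψ, hψp, hψGq⟩ := hψ
  have hq1 : 1 ≤ q := hp.trans hpq
  have hp0 : p ≠ 0 := fun h => by simp [h] at hp
  set μ := MeasureTheory.volume.restrict (Set.Ici (0:ℝ)) with hμdef
  set Y : ℝ → ℝ → 𝕏 → 𝕏 := fun t s x => X (max t (max s 0)) (max s 0) x with hYdef
  have hYc : Continuous fun z : ℝ × ℝ × 𝕏 => Y z.1 z.2.1 z.2.2 := by
    have hg : Continuous fun z : ℝ × ℝ × 𝕏 =>
        ((max z.1 (max z.2.1 0), (max z.2.1 0, z.2.2)) : ℝ × ℝ × 𝕏) := by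
      fun_prop
    exact hX_cont.comp_continuous hg fun z => ⟨le_max_right _ _, le_max_right _ _⟩
  have hYX : ∀ t s : ℝ, 0 ≤ s → s ≤ t → ∀ x : 𝕏, Y t s x = X t s x := by
    intro t s h0s hst x
    simp only [hYdef]
    rw [max_eq_left h0s, max_eq_left hst]
  have hGsm : ∀ (u : ℝ → 𝕏), StronglyMeasurable u →
      StronglyMeasurable (fun t => ∫ s, ((Ioc (0:ℝ) t).indicator
        (fun s => Y t s (u s))) s ∂volume) := by
    intro u hu
    have hSet : MeasurableSet {z : ℝ × ℝ | z.2 ∈ Ioc 0 z.1} := by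
      have h : {z : ℝ × ℝ | z.2 ∈ Ioc 0 z.1}
          = {z : ℝ × ℝ | 0 < z.2} ∩ {z : ℝ × ℝ | z.2 ≤ z.1} := by
        ext z; simp [Set.mem_Ioc, Set.mem_setOf_eq]
      rw [h]
      exact (measurableSet_lt measurable_const measurable_snd).inter
        (measurableSet_le measurable_snd measurable_fst)
    have hF : StronglyMeasurable fun z : ℝ × ℝ =>
        ({z : ℝ × ℝ | z.2 ∈ Ioc 0 z.1}).indicator (fun z => Y z.1 z.2 (u z.2)) z := by
      apply StronglyMeasurable.indicator _ hSet
      exact hYc.comp_stronglyMeasurable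
        (measurable_fst.stronglyMeasurable.prodMk
          (measurable_snd.stronglyMeasurable.prodMk (hu.comp_measurable measurable_snd)))
    have h2 := hF.integral_prod_right' (ν := volume)
    have heq : (fun t => ∫ s, ((Ioc (0:ℝ) t).indicator (fun s => Y t s (u s))) s ∂volume)
        = fun t => ∫ s, ({z : ℝ × ℝ | z.2 ∈ Ioc 0 z.1}).indicator
            (fun z => Y z.1 z.2 (u z.2)) (t, s) ∂volume := by
      funext t
      refine integral_congr_ae (Filter.Eventually.of_forall fun s => ?_)
      by_cases hs : s ∈ Ioc (0:ℝ) t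
      · rw [Set.indicator_of_mem hs]
        exact (Set.indicator_of_mem
          (show ((t,s) : ℝ × ℝ) ∈ {z : ℝ × ℝ | z.2 ∈ Ioc 0 z.1} from hs)
          (fun z : ℝ × ℝ => Y z.1 z.2 (u z.2))).symm
      · rw [Set.indicator_of_notMem hs]
        exact (Set.indicator_of_notMem
          (show ((t,s) : ℝ × ℝ) ∉ {z : ℝ × ℝ | z.2 ∈ Ioc 0 z.1} from hs)
          (fun z : ℝ × ℝ => Y z.1 z.2 (u z.2))).symm
    rw [heq]
    exact h2
  have hGrepr : ∀ (u u' : ℝ → 𝕏), u =ᵐ[μ] u' → ∀ t : ℝ, 0 ≤ t →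
      (∫ s in (0:ℝ)..t, X t s (u s))
        = ∫ s, ((Ioc (0:ℝ) t).indicator (fun s => Y t s (u' s))) s ∂volume := by
    intro u u' huu' t ht
    rw [intervalIntegral.integral_of_le ht, ← integral_indicator measurableSet_Ioc]
    refine integral_congr_ae ?_
    have h1 : ∀ᵐ s ∂volume, s ∈ Ioc (0:ℝ) t → u s = u' s := by
      have h2 := ae_restrict_of_ae_restrict_of_subset
        (show Ioc (0:ℝ) t ⊆ Ici (0:ℝ) from fun s hs => hs.1.le) huu'
      rwa [ae_restrict_iff' measurableSet_Ioc] at h2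
    filter_upwards [h1] with s hs
    by_cases hmem : s ∈ Ioc (0:ℝ) t
    · rw [Set.indicator_of_mem hmem, Set.indicator_of_mem hmem, hs hmem]
      exact (hYX t s hmem.1.le hmem.2 (u' s)).symm
    · rw [Set.indicator_of_notMem hmem, Set.indicator_of_notMem hmem]
  have hAESM : ∀ (u : ℝ → 𝕏), MemLp u p μ →
      AEStronglyMeasurable (fun t => ∫ s in (0:ℝ)..t, X t s (u s)) μ := by
    intro u hu
    have h : ∀ᵐ t ∂μ,
        (∫ s, ((Ioc (0:ℝ) t).indicator (fun s => Y t s (hu.1.mk u s))) s ∂volume)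
          = ∫ s in (0:ℝ)..t, X t s (u s) := by
      refine (ae_restrict_iff' (μ := volume) (s := Ici (0:ℝ)) measurableSet_Ici).mpr ?_
      exact Filter.Eventually.of_forall fun t ht =>
        (hGrepr u (hu.1.mk u) hu.1.ae_eq_mk t ht).symm
    exact ((hGsm _ hu.1.stronglyMeasurable_mk).aestronglyMeasurable).congr h
  have hInt : ∀ (u : ℝ → 𝕏), MemLp u p μ → ∀ t : ℝ, 0 ≤ t →
      IntegrableOn (fun s => X t s (u s)) (Ioc (0:ℝ) t) volume := by
    intro u hu t ht
    have hsub : Ioc (0:ℝ) t ⊆ Ici (0:ℝ) := fun s hs => hs.1.le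
    have hsm' : StronglyMeasurable fun s => Y t s (hu.1.mk u s) :=
      hYc.comp_stronglyMeasurable (stronglyMeasurable_const.prodMk
        (stronglyMeasurable_id.prodMk hu.1.stronglyMeasurable_mk))
    have haesm : AEStronglyMeasurable (fun s => X t s (u s))
        (volume.restrict (Ioc (0:ℝ) t)) := by
      refine hsm'.aestronglyMeasurable.congr ?_
      have h1 : ∀ᵐ s ∂volume, s ∈ Ioc (0:ℝ) t → u s = hu.1.mk u s := by
        have h2 := ae_restrict_of_ae_restrict_of_subset hsub hu.1.ae_eq_mk
        rwa [ae_restrict_iff' measurableSet_Ioc] at h2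
      have h2' : ∀ᵐ s ∂(volume.restrict (Ioc (0:ℝ) t)), Y t s (hu.1.mk u s) = X t s (u s) := by
        rw [ae_restrict_iff' measurableSet_Ioc]
        filter_upwards [h1] with s hs hmem
        rw [hYX t s hmem.1.le hmem.2, ← hs hmem]
      exact h2'
    have hcont : ContinuousOn (fun s : ℝ => X s 0 (0:𝕏)) (Icc (0:ℝ) t) := by
      have h := ContinuousOn.comp hX_cont
        ((continuous_id.prodMk (continuous_const.prodMk continuous_const)).continuousOn
          (s := Icc (0:ℝ) t))
        (fun s hs => (⟨le_refl (0:ℝ), hs.1⟩ :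
          ((s, ((0:ℝ), (0:𝕏))) : ℝ × ℝ × 𝕏) ∈ {p : ℝ × ℝ × 𝕏 | 0 ≤ p.2.1 ∧ p.2.1 ≤ p.1}))
      exact h
    obtain ⟨C, hC⟩ := (isCompact_Icc (a := (0:ℝ)) (b := t)).exists_bound_of_continuousOn hcont
    haveI : IsFiniteMeasure (volume.restrict (Ioc (0:ℝ) t)) :=
      ⟨by rw [Measure.restrict_apply_univ]; exact measure_Ioc_lt_top⟩
    have hu1 : Integrable u (volume.restrict (Ioc (0:ℝ) t)) := by
      have h2 := hu.restrict (Ioc (0:ℝ) t)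
      rw [hμdef, Measure.restrict_restrict measurableSet_Ioc,
        inter_eq_left.mpr hsub] at h2
      exact memLp_one_iff_integrable.mp (h2.mono_exponent hp)
    refine Integrable.mono'
      ((hu1.norm.const_mul N).add (integrable_const (N * C + ‖X t 0 (0:𝕏)‖))) haesm ?_
    rw [ae_restrict_iff' measurableSet_Ioc]
    refine Filter.Eventually.of_forall fun s hs => ?_
    have h0s : 0 ≤ s := hs.1.le
    have hst : s ≤ t := hs.2
    have hco : X t 0 (0:𝕏) = X t s (X s 0 0) := hX_cocycle 0 s t le_rfl h0s hst 0
    have hexp : Real.exp (-ν * (t - s)) ≤ 1 := by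
      rw [Real.exp_le_one_iff, neg_mul]
      exact neg_nonpos.mpr (mul_nonneg hν.le (sub_nonneg.2 hst))
    have htri : ‖X t s (u s)‖ ≤ ‖X t s (u s) - X t s (X s 0 0)‖ + ‖X t s (X s 0 0)‖ := by
      have h3 := norm_add_le (X t s (u s) - X t s (X s 0 0)) (X t s (X s 0 0))
      rwa [sub_add_cancel] at h3
    have hb : ‖u s - X s 0 0‖ ≤ ‖u s‖ + C :=
      le_trans (norm_sub_le _ _) (add_le_add_right (hC s ⟨h0s, hst⟩) _)
    calc ‖X t s (u s)‖ ≤ ‖X t s (u s) - X t s (X s 0 0)‖ + ‖X t s (X s 0 0)‖ := htri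
      _ ≤ N * Real.exp (-ν * (t - s)) * ‖u s - X s 0 0‖ + ‖X t 0 (0:𝕏)‖ := by
          rw [hco]
          exact add_le_add_left (hX s t h0s hst (u s) (X s 0 0)) _
      _ ≤ N * 1 * (‖u s‖ + C) + ‖X t 0 (0:𝕏)‖ := by
          refine add_le_add_left ?_ _
          exact mul_le_mul (mul_le_mul_of_nonneg_left hexp hN.le) hb (norm_nonneg _)
            (by positivity)
      _ = N * ‖u s‖ + (N * C + ‖X t 0 (0:𝕏)‖) := by ring
  have hPhiB : ∀ (u v u' v' : ℝ → 𝕏), MemLp u p μ → MemLp v p μ →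
      u =ᵐ[μ] u' → v =ᵐ[μ] v' → ∀ t : ℝ, 0 ≤ t →
      (‖(∫ s in (0:ℝ)..t, X t s (u s)) - ∫ s in (0:ℝ)..t, X t s (v s)‖₊ : ℝ≥0∞)
        ≤ Phi N ν (fun s => (‖u' s - v' s‖₊ : ℝ≥0∞)) t := by
    intro u v u' v' hu hv huu' hvv' t ht
    have hiu : IntervalIntegrable (fun s => X t s (u s)) volume 0 t := by
      rw [intervalIntegrable_iff_integrableOn_Ioc_of_le ht]
      exact hInt u hu t ht
    have hiv : IntervalIntegrable (fun s => X t s (v s)) volume 0 t := by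
      rw [intervalIntegrable_iff_integrableOn_Ioc_of_le ht]
      exact hInt v hv t ht
    rw [← intervalIntegral.integral_sub hiu hiv, intervalIntegral.integral_of_le ht]
    refine le_trans (enorm_integral_le_lintegral_enorm _) ?_
    unfold Phi
    refine lintegral_mono_ae ?_
    have hsub : Ioc (0:ℝ) t ⊆ Ici (0:ℝ) := fun s hs => hs.1.le
    have h1 : ∀ᵐ s ∂volume, s ∈ Ioc (0:ℝ) t → u s = u' s := by
      have h2 := ae_restrict_of_ae_restrict_of_subset hsub huu'
      rwa [ae_restrict_iff' measurableSet_Ioc] at h2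
    have h2 : ∀ᵐ s ∂volume, s ∈ Ioc (0:ℝ) t → v s = v' s := by
      have h3 := ae_restrict_of_ae_restrict_of_subset hsub hvv'
      rwa [ae_restrict_iff' measurableSet_Ioc] at h3
    rw [ae_restrict_iff' measurableSet_Ioc]
    filter_upwards [h1, h2] with s hs1 hs2 hmem
    calc (‖X t s (u s) - X t s (v s)‖₊ : ℝ≥0∞)
        = ENNReal.ofReal ‖X t s (u s) - X t s (v s)‖ := (ofReal_norm _).symm
      _ ≤ ENNReal.ofReal (N * Real.exp (-ν * (t - s)) * ‖u s - v s‖) :=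
          ENNReal.ofReal_le_ofReal (hX s t hmem.1.le hmem.2 (u s) (v s))
      _ = ENNReal.ofReal (N * Real.exp (-ν * (t - s))) * ENNReal.ofReal ‖u s - v s‖ :=
          ENNReal.ofReal_mul (by positivity)
      _ = ENNReal.ofReal (N * Real.exp (-ν * (t - s)))
            * (‖u' s - v' s‖₊ : ℝ≥0∞) := by
          rw [← hs1 hmem, ← hs2 hmem]; exact congrArg _ (ofReal_norm _)
  have hzero : ∀ (u v : ℝ → 𝕏), MemLp u p μ → MemLp v p μ →
      eLpNorm (u - v) p μ = 0 →
      eLpNorm (fun t => (∫ s in (0:ℝ)..t, X t s (u s))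
        - ∫ s in (0:ℝ)..t, X t s (v s)) q μ = 0 := by
    intro u v hu hv h0
    have huv : ∀ᵐ s ∂μ, u s = v s := by
      have h1 := (eLpNorm_eq_zero_iff (hu.1.sub hv.1) hp0).mp h0
      filter_upwards [h1] with s hs
      exact sub_eq_zero.mp hs
    have hD0 : ∀ᵐ t ∂μ,
        (fun t => (∫ s in (0:ℝ)..t, X t s (u s)) - ∫ s in (0:ℝ)..t, X t s (v s)) t
          = (0 : ℝ → 𝕏) t := by
      refine (ae_restrict_iff' (μ := volume) (s := Ici (0:ℝ)) measurableSet_Ici).mpr ?_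
      refine Filter.Eventually.of_forall fun t ht => ?_
      have heq : (∫ s in (0:ℝ)..t, X t s (u s)) = ∫ s in (0:ℝ)..t, X t s (v s) := by
        rw [intervalIntegral.integral_of_le ht, intervalIntegral.integral_of_le ht]
        refine integral_congr_ae ?_
        have h1 : ∀ᵐ s ∂(volume.restrict (Ioc (0:ℝ) t)), u s = v s :=
          ae_restrict_of_ae_restrict_of_subset (fun s hs => hs.1.le) huv
        filter_upwards [h1] with s hs
        rw [hs]
      simp [heq]
    rw [eLpNorm_congr_ae hD0, eLpNorm_zero]
  have hcK0 : cKc N ν p q ≠ 0 := cKc_ne_zero hN hν hp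
  have hcKtop : cKc N ν p q ≠ ⊤ := cKc_ne_top hN hν hp hpq
  have hmain : ∀ (u v : ℝ → 𝕏) (hu : MemLp u p μ) (hv : MemLp v p μ),
      eLpNorm (u - v) p μ ≠ 0 → eLpNorm (u - v) p μ ≠ ⊤ →
      eLpNorm (fun t => (∫ s in (0:ℝ)..t, X t s (u s)) - ∫ s in (0:ℝ)..t, X t s (v s)) q μ
        ≤ cKc N ν p q * eLpNorm (u - v) p μ := by
    intro u v hu hv hA0 hAtop
    obtain ⟨u', hu'sm, hu'ae⟩ := hu.1
    obtain ⟨v', hv'sm, hv'ae⟩ := hv.1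
    have hsm : StronglyMeasurable (u' - v') := hu'sm.sub hv'sm
    have hAe : eLpNorm (u - v) p μ = eLpNorm (u' - v') p μ := by
      refine eLpNorm_congr_ae ?_
      filter_upwards [hu'ae, hv'ae] with s h1 h2
      simp [Pi.sub_apply, h1, h2]
    have hHm : Measurable fun s => (‖u' s - v' s‖₊ : ℝ≥0∞) := hsm.enorm
    have hApp : p ≠ ⊤ → ∫⁻ s in Ici (0:ℝ), (‖u' s - v' s‖₊ : ℝ≥0∞) ^ p.toReal
        = eLpNorm (u - v) p μ ^ p.toReal := by
      intro hptop
      rw [hAe, eLpNorm_eq_lintegral_rpow_enorm_toReal hp0 hptop, ← ENNReal.rpow_mul, one_div,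
        inv_mul_cancel₀ (ne_of_gt (ENNReal.toReal_pos hp0 hptop)), ENNReal.rpow_one]
      rfl
    have hAinf : p = ⊤ → ∀ᵐ s ∂(volume.restrict (Ici (0:ℝ))),
        (‖u' s - v' s‖₊ : ℝ≥0∞) ≤ eLpNorm (u - v) p μ := by
      intro hptop
      have hA2 : eLpNorm (u - v) p μ = eLpNormEssSup (u' - v') μ := by
        rw [hAe, hptop, eLpNorm_exponent_top]
      rw [hA2]
      exact ae_le_eLpNormEssSup
    have hcore := core_bound N ν hN hν p q hp hpq
      (fun s => (‖u' s - v' s‖₊ : ℝ≥0∞)) hHm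
      (fun s => ENNReal.coe_ne_top) (eLpNorm (u - v) p μ) hA0 hAtop hApp hAinf
      (fun t => (∫ s in (0:ℝ)..t, X t s (u s)) - ∫ s in (0:ℝ)..t, X t s (v s))
      (hPhiB u v u' v' hu hv hu'ae hv'ae)
    rw [hμdef]
    exact hcore
  constructor
  · intro f hf
    refine ⟨hAESM f hf, ?_⟩
    set Dfψ := fun t => (∫ s in (0:ℝ)..t, X t s (f s)) - ∫ s in (0:ℝ)..t, X t s (ψ s)
      with hDdef
    have hDsm : AEStronglyMeasurable Dfψ μ := (hAESM f hf).sub hψGq.1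
    have hDlt : eLpNorm Dfψ q μ < ⊤ := by
      by_cases h0 : eLpNorm (f - ψ) p μ = 0
      · rw [hDdef, hzero f ψ hf hψp h0]
        exact ENNReal.zero_lt_top
      · refine lt_of_le_of_lt (hmain f ψ hf hψp h0 (hf.sub hψp).2.ne) ?_
        exact ENNReal.mul_lt_top hcKtop.lt_top (hf.sub hψp).2
    have hfun : (fun t => ∫ s in (0:ℝ)..t, X t s (f s))
        = Dfψ + fun t => ∫ s in (0:ℝ)..t, X t s (ψ s) := by
      funext t
      simp only [Pi.add_apply, hDdef]
      rw [sub_add_cancel]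
    calc eLpNorm (fun t => ∫ s in (0:ℝ)..t, X t s (f s)) q μ
        = eLpNorm (Dfψ + fun t => ∫ s in (0:ℝ)..t, X t s (ψ s)) q μ := by rw [hfun]
      _ ≤ eLpNorm Dfψ q μ + eLpNorm (fun t => ∫ s in (0:ℝ)..t, X t s (ψ s)) q μ :=
          eLpNorm_add_le hDsm hψGq.1 hq1
      _ < ⊤ := ENNReal.add_lt_top.mpr ⟨hDlt, hψGq.2⟩
  · refine ⟨(cKc N ν p q).toReal, ENNReal.toReal_pos hcK0 hcKtop, ?_⟩
    intro f g hf hg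
    by_cases h0 : eLpNorm (f - g) p μ = 0
    · rw [hzero f g hf hg h0]
      exact zero_le
    by_cases htop : eLpNorm (f - g) p μ = ⊤
    · rw [ENNReal.ofReal_toReal hcKtop, htop, ENNReal.mul_top hcK0]
      exact le_top
    · rw [ENNReal.ofReal_toReal hcKtop]
      exact hmain f g hf hg h0 htop
end

section
/- Let 𝕏 be a Banach space and {X(t,s)}_{(t,s)∈Δ} a continuous evolution family on 𝕏 such that X(t,s)0 = 0 for all (t,s) ∈ Δ. If the pair (L^1(ℝ₊,𝕏), L^∞(ℝ₊,𝕏)) is admissible to {X(t,s)}_{(t,s)∈Δ}, then every trajectory is bounded: there exists N > 0 such that ‖X(t,s)x‖ ≤ N ‖x‖ for all (t,s) ∈ Δ and all x ∈ 𝕏. -/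
open MeasureTheory Real Set
set_option maxHeartbeats 1000000
open scoped ENNReal NNReal

/-- If a continuous evolution family `X` fixes the origin
(`X(t,s)0 = 0` on `Δ`) and the pair `(L^1(ℝ₊,𝕏), L^∞(ℝ₊,𝕏))` is admissible to `X`,
then every trajectory is bounded: there is `N > 0` with `‖X(t,s)x‖ ≤ N‖x‖` on `Δ`. -/
theorem bounded_trajectories_of_admissible_L1_Linfty
    {𝕏 : Type*} [NormedAddCommGroup 𝕏] [NormedSpace ℝ 𝕏] [CompleteSpace 𝕏]
    (X : ℝ → ℝ → 𝕏 → 𝕏)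
    (hX_id : ∀ t : ℝ, 0 ≤ t → ∀ x : 𝕏, X t t x = x)
    (hX_cocycle : ∀ s r t : ℝ, 0 ≤ s → s ≤ r → r ≤ t →
      ∀ x : 𝕏, X t s x = X t r (X r s x))
    (M ω : ℝ) (hM : 0 < M) (hω : 0 < ω)
    (hX_lip : ∀ s t : ℝ, 0 ≤ s → s ≤ t → ∀ x y : 𝕏,
      ‖X t s x - X t s y‖ ≤ M * Real.exp (ω * (t - s)) * ‖x - y‖)
    (hX_cont : ContinuousOn (fun p : ℝ × ℝ × 𝕏 => X p.1 p.2.1 p.2.2)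
      {p : ℝ × ℝ × 𝕏 | 0 ≤ p.2.1 ∧ p.2.1 ≤ p.1})
    (hX_zero : ∀ s t : ℝ, 0 ≤ s → s ≤ t → X t s (0 : 𝕏) = 0)
    (hadm_mem : ∀ f : ℝ → 𝕏,
      MemLp f 1 (MeasureTheory.volume.restrict (Set.Ici (0:ℝ))) →
      MemLp (fun t : ℝ => ∫ s in (0:ℝ)..t, X t s (f s)) ⊤
        (MeasureTheory.volume.restrict (Set.Ici (0:ℝ))))
    (hadm_lip : ∃ K : ℝ, 0 < K ∧ ∀ f g : ℝ → 𝕏,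
      MemLp f 1 (MeasureTheory.volume.restrict (Set.Ici (0:ℝ))) →
      MemLp g 1 (MeasureTheory.volume.restrict (Set.Ici (0:ℝ))) →
      eLpNorm (fun t : ℝ =>
          (∫ s in (0:ℝ)..t, X t s (f s)) - ∫ s in (0:ℝ)..t, X t s (g s)) ⊤
        (MeasureTheory.volume.restrict (Set.Ici (0:ℝ))) ≤
      ENNReal.ofReal K *
        eLpNorm (f - g) 1 (MeasureTheory.volume.restrict (Set.Ici (0:ℝ)))) :
    ∃ N : ℝ, 0 < N ∧ ∀ s t : ℝ, 0 ≤ s → s ≤ t → ∀ x : 𝕏,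
      ‖X t s x‖ ≤ N * ‖x‖ := by
  classical
  obtain ⟨K, hK, hlip⟩ := hadm_lip
  set C : ℝ := M * Real.exp ω with hCdef
  have hC0 : 0 < C := by positivity
  refine ⟨(1 + K) * C, by positivity, ?_⟩
  intro s t hs hst x
  -- continuity of the trajectory τ ↦ X τ s x on [s, ∞)
  have htraj : ContinuousOn (fun τ : ℝ => X τ s x) (Set.Ici s) := by
    have hmap : ContinuousOn (fun τ : ℝ => ((τ, s, x) : ℝ × ℝ × 𝕏)) (Set.Ici s) :=
      (continuous_id.prodMk continuous_const).continuousOn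
    exact hX_cont.comp hmap (fun τ hτ => ⟨hs, hτ⟩)
  -- short-time bound from the Lipschitz estimate
  have hshort : ∀ τ : ℝ, s ≤ τ → τ ≤ s + 1 → ‖X τ s x‖ ≤ C * ‖x‖ := by
    intro τ h1 h2
    have h := hX_lip s τ hs h1 x 0
    rw [hX_zero s τ hs h1, sub_zero, sub_zero] at h
    have hexp : Real.exp (ω * (τ - s)) ≤ Real.exp ω := by
      apply Real.exp_le_exp.mpr; nlinarith
    have hx := norm_nonneg x
    calc ‖X τ s x‖ ≤ M * Real.exp (ω * (τ - s)) * ‖x‖ := h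
      _ ≤ C * ‖x‖ := by rw [hCdef]; gcongr
  by_cases hcase : t ≤ s + 1
  · have h := hshort t hst hcase
    have hx := norm_nonneg x
    nlinarith [mul_nonneg (mul_nonneg hK.le hC0.le) hx]
  push_neg at hcase
  -- the test function
  set f : ℝ → 𝕏 := (Set.Icc s (s+1)).indicator (fun τ => X τ s x) with hfdef
  have hf_int : MeasureTheory.Integrable f (MeasureTheory.volume.restrict (Set.Ici (0:ℝ))) := by
    have h1 : MeasureTheory.IntegrableOn (fun τ => X τ s x) (Set.Icc s (s+1)) volume :=
      (htraj.mono Set.Icc_subset_Ici_self).integrableOn_Icc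
    have h2 : MeasureTheory.Integrable (fun τ => X τ s x)
        ((MeasureTheory.volume.restrict (Set.Ici (0:ℝ))).restrict (Set.Icc s (s+1))) := by
      rw [MeasureTheory.Measure.restrict_restrict measurableSet_Icc]
      exact h1.mono_set Set.inter_subset_left
    exact (MeasureTheory.integrable_indicator_iff measurableSet_Icc).mpr h2
  have hf_mem : MeasureTheory.MemLp f 1 (MeasureTheory.volume.restrict (Set.Ici (0:ℝ))) :=
    (MeasureTheory.memLp_one_iff_integrable).mpr hf_int
  -- L¹ norm bound on f
  have hf_norm : MeasureTheory.eLpNorm f 1 (MeasureTheory.volume.restrict (Set.Ici (0:ℝ)))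
      ≤ ENNReal.ofReal (C * ‖x‖) := by
    rw [MeasureTheory.eLpNorm_one_eq_lintegral_enorm]
    have hb : ∀ τ, ‖f τ‖ₑ
        ≤ (Set.Icc s (s+1)).indicator (fun _ => ENNReal.ofReal (C * ‖x‖)) τ := by
      intro τ
      by_cases hτ : τ ∈ Set.Icc s (s+1)
      · rw [Set.indicator_of_mem hτ, ← ofReal_norm_eq_enorm]
        apply ENNReal.ofReal_le_ofReal
        rw [hfdef]
        simp only [Set.indicator_of_mem hτ]
        exact hshort τ hτ.1 hτ.2
      · have hf0 : f τ = 0 := Set.indicator_of_notMem hτ _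
        simp [hf0, Set.indicator_of_notMem hτ]
    calc ∫⁻ τ, ‖f τ‖ₑ ∂(MeasureTheory.volume.restrict (Set.Ici (0:ℝ)))
        ≤ ∫⁻ τ, (Set.Icc s (s+1)).indicator (fun _ => ENNReal.ofReal (C * ‖x‖)) τ
            ∂(MeasureTheory.volume.restrict (Set.Ici (0:ℝ))) :=
          MeasureTheory.lintegral_mono hb
      _ = ENNReal.ofReal (C * ‖x‖)
            * (MeasureTheory.volume.restrict (Set.Ici (0:ℝ))) (Set.Icc s (s+1)) := by
          rw [MeasureTheory.lintegral_indicator measurableSet_Icc,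
            MeasureTheory.setLIntegral_const]
      _ ≤ ENNReal.ofReal (C * ‖x‖) * 1 := by
          gcongr
          rw [MeasureTheory.Measure.restrict_apply measurableSet_Icc]
          calc volume (Set.Icc s (s+1) ∩ Set.Ici 0)
              ≤ volume (Set.Icc s (s+1)) := measure_mono Set.inter_subset_left
            _ = 1 := by rw [Real.volume_Icc]; norm_num
      _ = ENNReal.ofReal (C * ‖x‖) := mul_one _
  -- the Green operator applied to f, past s+1
  have hG_eq : ∀ τ : ℝ, s + 1 ≤ τ → (∫ σ in (0:ℝ)..τ, X τ σ (f σ)) = X τ s x := by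
    intro τ hτ
    have hτ0 : (0:ℝ) ≤ τ := by linarith
    have hEq : Set.EqOn (fun σ => X τ σ (f σ))
        ((Set.Icc s (s+1)).indicator (fun _ => X τ s x)) (Set.uIcc 0 τ) := by
      intro σ hσ
      rw [Set.uIcc_of_le hτ0] at hσ
      by_cases hmem : σ ∈ Set.Icc s (s+1)
      · simp only [hfdef, Set.indicator_of_mem hmem]
        exact (hX_cocycle s σ τ hs hmem.1 (hmem.2.trans hτ) x).symm
      · simp only [hfdef, Set.indicator_of_notMem hmem]
        exact hX_zero σ τ hσ.1 hσ.2
    rw [intervalIntegral.integral_congr hEq, intervalIntegral.integral_of_le hτ0,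
      MeasureTheory.integral_indicator measurableSet_Icc]
    have hvol : volume (Set.Icc s (s+1) ∩ Set.Ioc 0 τ) = 1 := by
      apply le_antisymm
      · calc volume (Set.Icc s (s+1) ∩ Set.Ioc 0 τ)
            ≤ volume (Set.Icc s (s+1)) := measure_mono Set.inter_subset_left
          _ = 1 := by rw [Real.volume_Icc]; norm_num
      · have hsub : Set.Ioc s (s+1) ⊆ Set.Icc s (s+1) ∩ Set.Ioc 0 τ := by
          intro σ hσ
          exact ⟨⟨le_of_lt hσ.1, hσ.2⟩, ⟨lt_of_le_of_lt hs hσ.1, hσ.2.trans hτ⟩⟩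
        calc (1:ℝ≥0∞) = volume (Set.Ioc s (s+1)) := by rw [Real.volume_Ioc]; norm_num
          _ ≤ volume (Set.Icc s (s+1) ∩ Set.Ioc 0 τ) := measure_mono hsub
    rw [MeasureTheory.setIntegral_const,
      measureReal_restrict_apply measurableSet_Icc, measureReal_def, hvol]
    simp
  -- the Green operator applied to 0
  have hG0 : ∀ τ : ℝ, 0 ≤ τ → (∫ σ in (0:ℝ)..τ, X τ σ ((fun _ : ℝ => (0:𝕏)) σ)) = 0 := by
    intro τ hτ
    have hEq : Set.EqOn (fun σ => X τ σ ((fun _ : ℝ => (0:𝕏)) σ)) (fun _ => (0:𝕏))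
        (Set.uIcc 0 τ) := by
      intro σ hσ
      rw [Set.uIcc_of_le hτ] at hσ
      exact hX_zero σ τ hσ.1 hσ.2
    rw [intervalIntegral.integral_congr hEq, intervalIntegral.integral_zero]
  have hzero_mem : MeasureTheory.MemLp (fun _ : ℝ => (0:𝕏)) 1
      (MeasureTheory.volume.restrict (Set.Ici (0:ℝ))) := MeasureTheory.MemLp.zero'
  have hmain := hlip f (fun _ => (0:𝕏)) hf_mem hzero_mem
  have hsub0 : f - (fun _ : ℝ => (0:𝕏)) = f := sub_zero f
  rw [hsub0] at hmain
  have hcongr : (fun τ : ℝ => (∫ σ in (0:ℝ)..τ, X τ σ (f σ))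
        - ∫ σ in (0:ℝ)..τ, X τ σ ((fun _ : ℝ => (0:𝕏)) σ))
      =ᵐ[MeasureTheory.volume.restrict (Set.Ici (0:ℝ))]
      (fun τ : ℝ => ∫ σ in (0:ℝ)..τ, X τ σ (f σ)) := by
    filter_upwards [MeasureTheory.ae_restrict_mem measurableSet_Ici] with τ hτ
    rw [hG0 τ hτ, sub_zero]
  have hsnorm : MeasureTheory.eLpNorm (fun τ : ℝ => ∫ σ in (0:ℝ)..τ, X τ σ (f σ)) ⊤
      (MeasureTheory.volume.restrict (Set.Ici (0:ℝ))) ≤ ENNReal.ofReal (K * (C * ‖x‖)) := by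
    rw [← MeasureTheory.eLpNorm_congr_ae hcongr]
    calc MeasureTheory.eLpNorm _ ⊤ (MeasureTheory.volume.restrict (Set.Ici (0:ℝ)))
        ≤ ENNReal.ofReal K
            * MeasureTheory.eLpNorm f 1 (MeasureTheory.volume.restrict (Set.Ici (0:ℝ))) := hmain
      _ ≤ ENNReal.ofReal K * ENNReal.ofReal (C * ‖x‖) := by gcongr
      _ = ENNReal.ofReal (K * (C * ‖x‖)) := (ENNReal.ofReal_mul hK.le).symm
  have hae : ∀ᵐ τ ∂(MeasureTheory.volume.restrict (Set.Ici (0:ℝ))),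
      ‖∫ σ in (0:ℝ)..τ, X τ σ (f σ)‖ ≤ K * (C * ‖x‖) := by
    filter_upwards [MeasureTheory.enorm_ae_le_eLpNormEssSup
      (fun τ : ℝ => ∫ σ in (0:ℝ)..τ, X τ σ (f σ))
      (MeasureTheory.volume.restrict (Set.Ici (0:ℝ)))] with τ hτ
    have h2 : ‖∫ σ in (0:ℝ)..τ, X τ σ (f σ)‖ₑ ≤ ENNReal.ofReal (K * (C * ‖x‖)) :=
      hτ.trans (by rw [← MeasureTheory.eLpNorm_exponent_top]; exact hsnorm)
    rw [← ofReal_norm_eq_enorm] at h2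
    exact (ENNReal.ofReal_le_ofReal_iff (by positivity)).mp h2
  -- upgrade to frequently near t from the right
  have hae' : ∀ᵐ τ ∂(volume : MeasureTheory.Measure ℝ),
      0 ≤ τ → ‖∫ σ in (0:ℝ)..τ, X τ σ (f σ)‖ ≤ K * (C * ‖x‖) :=
    (MeasureTheory.ae_restrict_iff' measurableSet_Ici).mp hae
  have hfreq : ∃ᶠ τ in nhdsWithin t (Set.Ioi t),
      (0 ≤ τ → ‖∫ σ in (0:ℝ)..τ, X τ σ (f σ)‖ ≤ K * (C * ‖x‖)) := by
    by_contra hcon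
    rw [Filter.not_frequently] at hcon
    obtain ⟨u, hu, hsubu⟩ := mem_nhdsGT_iff_exists_Ioc_subset.mp hcon
    have h0 : volume {τ : ℝ | ¬ (0 ≤ τ → ‖∫ σ in (0:ℝ)..τ, X τ σ (f σ)‖ ≤ K * (C * ‖x‖))} = 0 :=
      hae'
    have h1 : volume (Set.Ioc t u) = 0 := measure_mono_null hsubu h0
    rw [Real.volume_Ioc] at h1
    have : u - t ≤ 0 := by simpa using h1
    have : t < u := hu
    linarith
  set l := nhdsWithin t (Set.Ioi t)
      ⊓ Filter.principal {τ : ℝ | 0 ≤ τ → ‖∫ σ in (0:ℝ)..τ, X τ σ (f σ)‖ ≤ K * (C * ‖x‖)}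
    with hldef
  have hl : l.NeBot := Filter.frequently_iff_neBot.mp hfreq
  have htend : Filter.Tendsto (fun τ => X τ s x) l (nhds (X t s x)) := by
    have h1 : ContinuousWithinAt (fun τ => X τ s x) (Set.Ici s) t := htraj t hst
    have h2 : nhdsWithin t (Set.Ioi t) ≤ nhdsWithin t (Set.Ici s) :=
      nhdsWithin_mono t (fun τ hτ => le_of_lt (lt_of_le_of_lt hst hτ))
    exact h1.tendsto.mono_left (le_trans inf_le_left h2)
  have hev : ∀ᶠ τ in l, ‖X τ s x‖ ≤ K * (C * ‖x‖) := by
    have hA : ∀ᶠ τ in l, τ ∈ Set.Ioi t :=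
      Filter.Eventually.filter_mono inf_le_left self_mem_nhdsWithin
    have hB : ∀ᶠ τ in l,
        (0 ≤ τ → ‖∫ σ in (0:ℝ)..τ, X τ σ (f σ)‖ ≤ K * (C * ‖x‖)) :=
      Filter.Eventually.filter_mono inf_le_right
        (Filter.eventually_principal.mpr (fun τ hτ => hτ))
    filter_upwards [hA, hB] with τ h1 h2
    have hτt : t < τ := h1
    have hτ0 : (0:ℝ) ≤ τ := by linarith
    have h3 := h2 hτ0
    rwa [hG_eq τ (by linarith)] at h3
  haveI := hl
  have hfinal : ‖X t s x‖ ≤ K * (C * ‖x‖) := le_of_tendsto htend.norm hev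
  have hx := norm_nonneg x
  nlinarith [mul_nonneg hC0.le hx]
end

section
/- Let 𝕏 be a Banach space, {X(t,s)}_{(t,s)∈Δ} a continuous evolution family on 𝕏, and p, q ∈ [1,∞]. Assume: (a) the pair (L^p(ℝ₊,𝕏), L^q(ℝ₊,𝕏)) is admissible to {X(t,s)}_{(t,s)∈Δ} with Lipschitz constant K > 0 for the Green's operator; and (b) there exists C > 0 with ‖X(t,s)x − X(t,s)y‖ ≤ C ‖x − y‖ for all (t,s) ∈ Δ and x, y ∈ 𝕏. Then for every t₀ ≥ 0, every δ > 0, and all x₁, x₂ ∈ 𝕏: ‖X(t₀+δ, t₀)x₁ − X(t₀+δ, t₀)x₂‖ ≤ (2 K C² / (a_p(δ) b_q(δ))) ‖x₁ − x₂‖, where a_p(δ) = δ^{1−1/p} for p ∈ [1,∞) and a_∞(δ) = δ, and b_q(δ) = δ^{1/q} for q ∈ [1,∞) and b_∞(δ) = 1. -/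
open MeasureTheory Real Set
open scoped ENNReal NNReal

private lemma rpow_succ_div_le_two {r : ℝ} (hr : 1 ≤ r) : (r + 1) ^ (1/r) ≤ 2 := by
  have hr0 : 0 < r := lt_of_lt_of_le one_pos hr
  have h1 : r + 1 ≤ 2 ^ r := by
    have := one_add_mul_self_le_rpow_one_add (by norm_num : (-1:ℝ) ≤ 1) hr
    norm_num at this
    linarith
  calc (r+1)^(1/r) ≤ (2^r)^(1/r) :=
        Real.rpow_le_rpow (by positivity) h1 (by positivity)
    _ = 2 ^ (r * (1/r)) := (Real.rpow_mul (by norm_num) _ _).symm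
    _ = 2 := by rw [mul_one_div_cancel hr0.ne', Real.rpow_one]

/-- If the pair `(L^p(ℝ₊,𝕏), L^q(ℝ₊,𝕏))` is admissible to the continuous
evolution family `X` with Lipschitz constant `K` for the Green's operator, and `X` is
uniformly stable with constant `C`, then for every `t₀ ≥ 0`, `δ > 0` and `x₁, x₂ ∈ 𝕏`:
`‖X(t₀+δ,t₀)x₁ − X(t₀+δ,t₀)x₂‖ ≤ (2KC²/(a_p(δ) b_q(δ))) ‖x₁ − x₂‖`, where
`a_p(δ) = δ^{1−1/p}` for `p < ∞`, `a_∞(δ) = δ`, `b_q(δ) = δ^{1/q}` for `q < ∞`,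
`b_∞(δ) = 1`. -/
theorem lipschitz_decay_on_intervals_of_admissible
    {𝕏 : Type*} [NormedAddCommGroup 𝕏] [NormedSpace ℝ 𝕏] [CompleteSpace 𝕏]
    (X : ℝ → ℝ → 𝕏 → 𝕏)
    (hX_id : ∀ t : ℝ, 0 ≤ t → ∀ x : 𝕏, X t t x = x)
    (hX_cocycle : ∀ s r t : ℝ, 0 ≤ s → s ≤ r → r ≤ t →
      ∀ x : 𝕏, X t s x = X t r (X r s x))
    (M ω : ℝ) (hM : 0 < M) (hω : 0 < ω)
    (hX_expbound : ∀ s t : ℝ, 0 ≤ s → s ≤ t → ∀ x y : 𝕏,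
      ‖X t s x - X t s y‖ ≤ M * Real.exp (ω * (t - s)) * ‖x - y‖)
    (hX_cont : ContinuousOn (fun p : ℝ × ℝ × 𝕏 => X p.1 p.2.1 p.2.2)
      {p : ℝ × ℝ × 𝕏 | 0 ≤ p.2.1 ∧ p.2.1 ≤ p.1})
    (p q : ℝ≥0∞) (hp : 1 ≤ p) (hq : 1 ≤ q)
    (K : ℝ) (hK : 0 < K)
    (hadm_mem : ∀ f : ℝ → 𝕏,
      MemLp f p (MeasureTheory.volume.restrict (Set.Ici (0:ℝ))) →
      MemLp (fun t : ℝ => ∫ s in (0:ℝ)..t, X t s (f s)) q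
        (MeasureTheory.volume.restrict (Set.Ici (0:ℝ))))
    (hadm_lip : ∀ f g : ℝ → 𝕏,
      MemLp f p (MeasureTheory.volume.restrict (Set.Ici (0:ℝ))) →
      MemLp g p (MeasureTheory.volume.restrict (Set.Ici (0:ℝ))) →
      eLpNorm (fun t : ℝ =>
          (∫ s in (0:ℝ)..t, X t s (f s)) - ∫ s in (0:ℝ)..t, X t s (g s)) q
        (MeasureTheory.volume.restrict (Set.Ici (0:ℝ))) ≤
      ENNReal.ofReal K *
        eLpNorm (f - g) p (MeasureTheory.volume.restrict (Set.Ici (0:ℝ))))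
    (C : ℝ) (hC : 0 < C)
    (hstab : ∀ s t : ℝ, 0 ≤ s → s ≤ t → ∀ x y : 𝕏,
      ‖X t s x - X t s y‖ ≤ C * ‖x - y‖) :
    ∀ t₀ : ℝ, 0 ≤ t₀ → ∀ δ : ℝ, 0 < δ → ∀ x₁ x₂ : 𝕏,
      ‖X (t₀ + δ) t₀ x₁ - X (t₀ + δ) t₀ x₂‖ ≤
        2 * K * C ^ 2 /
            ((if p = ⊤ then δ else δ ^ (1 - 1 / p.toReal)) *
              (if q = ⊤ then (1:ℝ) else δ ^ (1 / q.toReal))) *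
          ‖x₁ - x₂‖ := by
  intro t₀ ht₀ δ hδ x₁ x₂
  set μ := MeasureTheory.volume.restrict (Set.Ici (0:ℝ)) with hμ
  set N := ‖X (t₀ + δ) t₀ x₁ - X (t₀ + δ) t₀ x₂‖ with hN
  set Dx := ‖x₁ - x₂‖ with hDx
  set A : ℝ := if p = ⊤ then δ else δ ^ (1 - 1 / p.toReal) with hA
  set B : ℝ := if q = ⊤ then (1:ℝ) else δ ^ (1 / q.toReal) with hB
  set P : ℝ := δ ^ (1 / p.toReal) with hP
  have hA_pos : 0 < A := by
    rw [hA]; split <;> [exact hδ; exact Real.rpow_pos_of_pos hδ _]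
  have hB_pos : 0 < B := by
    rw [hB]; split <;> [norm_num; exact Real.rpow_pos_of_pos hδ _]
  have hP_pos : 0 < P := Real.rpow_pos_of_pos hδ _
  have hAP : A * P = δ := by
    rw [hA, hP]; split
    · next h => rw [h]; simp [ENNReal.toReal_top]
    · rw [← Real.rpow_add hδ]; norm_num
  have hN_nonneg : 0 ≤ N := norm_nonneg _
  have hDx_nonneg : 0 ≤ Dx := norm_nonneg _
  -- the indicator test functions
  set f₁ : ℝ → 𝕏 := (Set.Icc t₀ (t₀ + δ)).indicator (fun s => X s t₀ x₁) with hf₁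
  set f₂ : ℝ → 𝕏 := (Set.Icc t₀ (t₀ + δ)).indicator (fun s => X s t₀ x₂) with hf₂
  have hIcc_sub : Set.Icc t₀ (t₀ + δ) ⊆ Set.Ici (0:ℝ) := fun s hs => ht₀.trans hs.1
  have hvol_Icc : μ (Set.Icc t₀ (t₀ + δ)) = ENNReal.ofReal δ := by
    rw [hμ, Measure.restrict_apply measurableSet_Icc,
      Set.inter_eq_self_of_subset_left hIcc_sub, Real.volume_Icc]
    congr 1; ring
  -- continuity of s ↦ X s t₀ x on [t₀, t₀+δ]
  have hcont : ∀ x : 𝕏, ContinuousOn (fun s => X s t₀ x) (Set.Icc t₀ (t₀ + δ)) := by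
    intro x
    have : ContinuousOn ((fun p : ℝ × ℝ × 𝕏 => X p.1 p.2.1 p.2.2) ∘ (fun s => (s, t₀, x)))
        (Set.Icc t₀ (t₀ + δ)) := by
      apply hX_cont.comp (Continuous.continuousOn (by fun_prop))
      intro s hs
      exact ⟨ht₀, hs.1⟩
    exact this
  -- Memℒp of the test functions
  have hmem : ∀ x : 𝕏, MemLp ((Set.Icc t₀ (t₀ + δ)).indicator (fun s => X s t₀ x)) p μ := by
    intro x
    rw [memLp_indicator_iff_restrict measurableSet_Icc]
    obtain ⟨b, hb⟩ := isCompact_Icc.exists_bound_of_continuousOn (hcont x)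
    refine ⟨((hcont x).aestronglyMeasurable measurableSet_Icc), ?_⟩
    have hbd : ∀ᵐ s ∂(μ.restrict (Set.Icc t₀ (t₀ + δ))), ‖X s t₀ x‖ ≤ b :=
      (ae_restrict_mem measurableSet_Icc).mono fun s hs => hb s hs
    refine lt_of_le_of_lt (eLpNorm_le_of_ae_bound hbd) ?_
    have huniv : (μ.restrict (Set.Icc t₀ (t₀ + δ))) Set.univ = ENNReal.ofReal δ := by
      rw [Measure.restrict_apply_univ]; exact hvol_Icc
    rw [huniv]
    exact ENNReal.mul_lt_top (ENNReal.rpow_lt_top_of_nonneg (by positivity)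
      ENNReal.ofReal_ne_top) ENNReal.ofReal_lt_top
  -- lower bound on N via the stability estimate and cocycle
  have hN_le : ∀ t, t₀ ≤ t → t ≤ t₀ + δ → N ≤ C * ‖X t t₀ x₁ - X t t₀ x₂‖ := by
    intro t h1 h2
    rw [hN, hX_cocycle t₀ t (t₀ + δ) ht₀ h1 h2 x₁, hX_cocycle t₀ t (t₀ + δ) ht₀ h1 h2 x₂]
    exact hstab t (t₀ + δ) (ht₀.trans h1) h2 _ _
  -- the key identity for the Green's operator difference
  have hD : ∀ t ∈ Set.Icc t₀ (t₀ + δ),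
      (∫ s in (0:ℝ)..t, X t s (f₁ s)) - (∫ s in (0:ℝ)..t, X t s (f₂ s)) =
        (t - t₀) • (X t t₀ x₁ - X t t₀ x₂) := by
    intro t ht
    obtain ⟨ht1, ht2⟩ := ht
    have ht0 : (0:ℝ) ≤ t := ht₀.trans ht1
    set φ : ℝ → 𝕏 := fun s => X t s 0 with hφ
    have hφcont : ContinuousOn φ (Set.Icc 0 t) := by
      have : ContinuousOn ((fun p : ℝ × ℝ × 𝕏 => X p.1 p.2.1 p.2.2) ∘ (fun s => (t, s, (0:𝕏))))
          (Set.Icc 0 t) := by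
        apply hX_cont.comp (Continuous.continuousOn (by fun_prop))
        intro s hs
        exact ⟨hs.1, hs.2⟩
      exact this
    have hφint : IntegrableOn φ (Set.Icc 0 t) := hφcont.integrableOn_Icc
    set ψ₁ : ℝ → 𝕏 := fun s => if t₀ ≤ s then X t t₀ x₁ else φ s with hψ₁
    set ψ₂ : ℝ → 𝕏 := fun s => if t₀ ≤ s then X t t₀ x₂ else φ s with hψ₂
    have heq : ∀ (x : 𝕏) (s : ℝ), s ∈ Set.Icc 0 t →
        X t s ((Set.Icc t₀ (t₀ + δ)).indicator (fun u => X u t₀ x) s) =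
          (if t₀ ≤ s then X t t₀ x else φ s) := by
      intro x s hs
      by_cases hst : t₀ ≤ s
      · have hmem : s ∈ Set.Icc t₀ (t₀ + δ) := ⟨hst, hs.2.trans ht2⟩
        rw [Set.indicator_of_mem hmem, if_pos hst, ← hX_cocycle t₀ s t ht₀ hst hs.2]
      · have hmem : s ∉ Set.Icc t₀ (t₀ + δ) := fun h => hst h.1
        rw [Set.indicator_of_notMem hmem, if_neg hst]
    have hψint : ∀ (c : 𝕏), IntervalIntegrable (fun s => if t₀ ≤ s then c else φ s)
        MeasureTheory.volume 0 t := by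
      intro c
      rw [intervalIntegrable_iff, uIoc_of_le ht0]
      apply IntegrableOn.mono_set (t := Set.Ioo 0 t₀ ∪ Set.Icc t₀ t)
      · apply IntegrableOn.union
        · refine ((hφint.mono_set (Set.Ioo_subset_Icc_self.trans
            (Set.Icc_subset_Icc le_rfl ht1))).congr_fun (fun s hs => ?_) measurableSet_Ioo)
          simp [not_le.mpr hs.2]
        · refine ((integrableOn_const (C := c)
            measure_Icc_lt_top.ne).congr_fun (fun s hs => ?_) measurableSet_Icc)
          simp [hs.1]
      · intro s hs
        rcases le_or_gt t₀ s with h | h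
        · exact Or.inr ⟨h, hs.2⟩
        · exact Or.inl ⟨hs.1, h⟩
    have hint₁ := hψint (X t t₀ x₁)
    have hint₂ := hψint (X t t₀ x₂)
    have hIcc : Set.uIcc (0:ℝ) t = Set.Icc 0 t := Set.uIcc_of_le ht0
    have e₁ : (∫ s in (0:ℝ)..t, X t s (f₁ s)) = ∫ s in (0:ℝ)..t, ψ₁ s := by
      apply intervalIntegral.integral_congr
      rw [hIcc]
      intro s hs
      rw [hf₁]
      exact heq x₁ s hs
    have e₂ : (∫ s in (0:ℝ)..t, X t s (f₂ s)) = ∫ s in (0:ℝ)..t, ψ₂ s := by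
      apply intervalIntegral.integral_congr
      rw [hIcc]
      intro s hs
      rw [hf₂]
      exact heq x₂ s hs
    rw [e₁, e₂, ← intervalIntegral.integral_sub hint₁ hint₂]
    have e₃ : ∀ s : ℝ, ψ₁ s - ψ₂ s =
        (Set.Ici t₀).indicator (fun _ => X t t₀ x₁ - X t t₀ x₂) s := by
      intro s
      by_cases hst : t₀ ≤ s <;>
        simp [hψ₁, hψ₂, hst, Set.indicator_apply, Set.mem_Ici]
    simp_rw [show ∀ s : ℝ, (if t₀ ≤ s then X t t₀ x₁ else φ s) - (if t₀ ≤ s then X t t₀ x₂ else φ s) =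
        (Set.Ici t₀).indicator (fun _ => X t t₀ x₁ - X t t₀ x₂) s from e₃]
    rw [intervalIntegral.integral_of_le ht0, MeasureTheory.integral_indicator measurableSet_Ici]
    rw [MeasureTheory.setIntegral_const]
    congr 1
    rw [measureReal_def, Measure.restrict_apply measurableSet_Ici]
    have hvol : MeasureTheory.volume (Set.Ici t₀ ∩ Set.Ioc 0 t) = ENNReal.ofReal (t - t₀) := by
      apply le_antisymm
      · refine le_trans (measure_mono (fun s hs => ?_)) (le_of_eq (Real.volume_Icc))
        exact ⟨hs.1, hs.2.2⟩
      · refine le_trans (le_of_eq Real.volume_Ioc.symm) (measure_mono (fun s hs => ?_))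
        exact ⟨le_of_lt hs.1, lt_of_le_of_lt ht₀ hs.1, hs.2⟩
    rw [hvol, ENNReal.toReal_ofReal (sub_nonneg.2 ht1)]
  -- pointwise norm lower bound
  have hDnorm : ∀ t ∈ Set.Icc t₀ (t₀ + δ),
      (t - t₀) * (N / C) ≤
        ‖(∫ s in (0:ℝ)..t, X t s (f₁ s)) - (∫ s in (0:ℝ)..t, X t s (f₂ s))‖ := by
    intro t ht
    rw [hD t ht, norm_smul, Real.norm_of_nonneg (sub_nonneg.2 ht.1)]
    apply mul_le_mul_of_nonneg_left _ (sub_nonneg.2 ht.1)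
    rw [div_le_iff₀ hC, mul_comm]
    exact hN_le t ht.1 ht.2
  -- upper bound for eLpNorm (f₁ - f₂)
  have h2 : eLpNorm (f₁ - f₂) p μ ≤ ENNReal.ofReal (C * Dx * P) := by
    have hsub : f₁ - f₂ = (Set.Icc t₀ (t₀ + δ)).indicator (fun s => X s t₀ x₁ - X s t₀ x₂) := by
      funext s
      by_cases hs : s ∈ Set.Icc t₀ (t₀ + δ) <;>
        simp [hf₁, hf₂, Set.indicator_apply, hs]
    rw [hsub, eLpNorm_indicator_eq_eLpNorm_restrict measurableSet_Icc]
    have hbd : ∀ᵐ s ∂(μ.restrict (Set.Icc t₀ (t₀ + δ))), ‖X s t₀ x₁ - X s t₀ x₂‖ ≤ C * Dx :=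
      (ae_restrict_mem measurableSet_Icc).mono fun s hs => hstab t₀ s ht₀ hs.1 x₁ x₂
    refine (eLpNorm_le_of_ae_bound hbd).trans ?_
    rw [Measure.restrict_apply_univ, hvol_Icc,
      ENNReal.ofReal_rpow_of_pos hδ, ← ENNReal.ofReal_mul (by positivity),
      hP, one_div]
    exact ENNReal.ofReal_le_ofReal (le_of_eq (by ring))
  -- lower bound for the LHS
  have h3 : ENNReal.ofReal ((N / C) * δ * B / 2) ≤
      eLpNorm (fun t : ℝ =>
        (∫ s in (0:ℝ)..t, X t s (f₁ s)) - ∫ s in (0:ℝ)..t, X t s (f₂ s)) q μ := by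
    set DD : ℝ → 𝕏 := fun t : ℝ =>
      (∫ s in (0:ℝ)..t, X t s (f₁ s)) - ∫ s in (0:ℝ)..t, X t s (f₂ s) with hDD
    set k : ℝ := N / C with hk
    have hk0 : 0 ≤ k := by positivity
    set ν := MeasureTheory.volume.restrict (Set.Icc t₀ (t₀ + δ)) with hν
    have hmono : eLpNorm DD q ν ≤ eLpNorm DD q μ :=
      eLpNorm_mono_measure DD (Measure.restrict_mono hIcc_sub le_rfl)
    refine le_trans ?_ hmono
    by_cases hqt : q = ⊤
    · rw [hB, if_pos hqt, hqt, eLpNorm_exponent_top]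
      by_contra hlt
      push_neg at hlt
      have hae : ∀ᵐ a ∂ν, (‖DD a‖₊ : ℝ≥0∞) < ENNReal.ofReal (k * δ * 1 / 2) :=
        ae_lt_of_essSup_lt hlt
      have hae2 : ∀ᵐ a ∂ν, a ∉ Set.Icc (t₀ + δ/2) (t₀ + δ) := by
        refine hae.mono fun a ha hmem => absurd ha (not_lt.mpr ?_)
        have h1 : k * δ * 1 / 2 ≤ ‖DD a‖ := by
          have h2 := hDnorm a ⟨by linarith [hmem.1], hmem.2⟩
          have h3 : δ/2 * k ≤ (a - t₀) * k :=
            mul_le_mul_of_nonneg_right (by linarith [hmem.1]) hk0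
          linarith
        calc ENNReal.ofReal (k * δ * 1 / 2) ≤ ENNReal.ofReal ‖DD a‖ :=
              ENNReal.ofReal_le_ofReal h1
          _ = (‖DD a‖₊ : ℝ≥0∞) := ofReal_norm _
      have h0 := ae_iff.mp hae2
      simp only [not_not] at h0
      have hSsub : Set.Icc (t₀ + δ/2) (t₀ + δ) ⊆ Set.Icc t₀ (t₀ + δ) :=
        Set.Icc_subset_Icc (by linarith) le_rfl
      have hνS : ν (Set.Icc (t₀ + δ/2) (t₀ + δ)) = ENNReal.ofReal (δ/2) := by
        rw [hν, Measure.restrict_apply measurableSet_Icc,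
          Set.inter_eq_self_of_subset_left hSsub, Real.volume_Icc]
        congr 1; ring
      have hcontr : ν {a | a ∈ Set.Icc (t₀ + δ/2) (t₀ + δ)} = ENNReal.ofReal (δ/2) := by
        rw [Set.setOf_mem_eq]; exact hνS
      rw [h0] at hcontr
      exact absurd hcontr.symm (ne_of_gt (ENNReal.ofReal_pos.mpr (by linarith)))
    · have hq0 : q ≠ 0 := (lt_of_lt_of_le zero_lt_one hq).ne'
      set r : ℝ := q.toReal with hrdef
      have hr : 1 ≤ r := by
        rw [hrdef, ← ENNReal.toReal_one]
        exact ENNReal.toReal_mono hqt hq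
      have hr0 : 0 < r := lt_of_lt_of_le one_pos hr
      rw [hB, if_neg hqt]
      rw [eLpNorm_eq_lintegral_rpow_enorm_toReal hq0 hqt]
      set g : ℝ → ℝ := fun a => ((a - t₀) * k) ^ r with hg
      have hgcont : Continuous g := by
        have h1 : Continuous fun y : ℝ => y ^ r :=
          continuous_iff_continuousAt.mpr fun y =>
            Real.continuousAt_rpow_const y r (Or.inr hr0.le)
        exact h1.comp (by fun_prop)
      have hgint : IntegrableOn g (Set.Icc t₀ (t₀ + δ)) := hgcont.integrableOn_Icc
      have hgpos : 0 ≤ᵐ[ν] g :=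
        (ae_restrict_mem measurableSet_Icc).mono fun a ha =>
          Real.rpow_nonneg (mul_nonneg (sub_nonneg.2 ha.1) hk0) r
      have step1 : ENNReal.ofReal (∫ a in Set.Icc t₀ (t₀ + δ), g a) =
          ∫⁻ a, ENNReal.ofReal (g a) ∂ν :=
        ofReal_integral_eq_lintegral_ofReal hgint hgpos
      have step2 : ∫⁻ a, ENNReal.ofReal (g a) ∂ν ≤ ∫⁻ a, (‖DD a‖₊ : ℝ≥0∞) ^ r ∂ν := by
        refine lintegral_mono_ae ((ae_restrict_mem measurableSet_Icc).mono fun a ha => ?_)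
        have h1 : g a ≤ ‖DD a‖ ^ r :=
          Real.rpow_le_rpow (mul_nonneg (sub_nonneg.2 ha.1) hk0) (hDnorm a ha) hr0.le
        calc ENNReal.ofReal (g a) ≤ ENNReal.ofReal (‖DD a‖ ^ r) := ENNReal.ofReal_le_ofReal h1
          _ = ENNReal.ofReal ‖DD a‖ ^ r :=
              (ENNReal.ofReal_rpow_of_nonneg (norm_nonneg _) hr0.le).symm
          _ = (‖DD a‖₊ : ℝ≥0∞) ^ r := by simp only [ofReal_norm, enorm_eq_nnnorm]
      have step3 : (∫ a in Set.Icc t₀ (t₀ + δ), g a) = δ ^ (r+1) / (r+1) * k ^ r := by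
        rw [MeasureTheory.integral_Icc_eq_integral_Ioc,
          ← intervalIntegral.integral_of_le (by linarith : t₀ ≤ t₀ + δ)]
        have e1 := intervalIntegral.integral_comp_sub_right
          (a := t₀) (b := t₀ + δ) (fun u => (u * k) ^ r) t₀
        simp only [sub_self, add_sub_cancel_left] at e1
        rw [hg]
        rw [e1]
        have e2 : ∫ x in (0:ℝ)..δ, (x * k) ^ r = ∫ x in (0:ℝ)..δ, x ^ r * k ^ r := by
          apply intervalIntegral.integral_congr
          intro x hx
          rw [Set.uIcc_of_le hδ.le] at hx
          exact Real.mul_rpow hx.1 hk0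
        rw [e2, intervalIntegral.integral_mul_const,
          integral_rpow (Or.inl (by linarith : (-1:ℝ) < r)),
          Real.zero_rpow (by positivity : r + 1 ≠ 0)]
        ring
      have hIlb : ENNReal.ofReal (k * δ * δ ^ (1/r) / 2) ≤
          (∫⁻ a, (‖DD a‖₊ : ℝ≥0∞) ^ r ∂ν) ^ (1/r) := by
        have h4 : ENNReal.ofReal (δ ^ (r+1) / (r+1) * k ^ r) ≤
            ∫⁻ a, (‖DD a‖₊ : ℝ≥0∞) ^ r ∂ν := by
          rw [← step3, step1]; exact step2
        have h5 := ENNReal.rpow_le_rpow h4 (by positivity : (0:ℝ) ≤ 1/r)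
        refine le_trans ?_ h5
        rw [ENNReal.ofReal_rpow_of_nonneg (by positivity) (by positivity)]
        apply ENNReal.ofReal_le_ofReal
        have e3 : (δ ^ (r+1) / (r+1) * k ^ r) ^ (1/r) =
            δ ^ ((r+1) * (1/r)) * k / (r+1) ^ (1/r) := by
          rw [div_mul_eq_mul_div, Real.div_rpow (by positivity) (by positivity),
            Real.mul_rpow (by positivity) (by positivity),
            ← Real.rpow_mul hδ.le, ← Real.rpow_mul hk0,
            mul_one_div_cancel hr0.ne', Real.rpow_one]
        rw [e3]
        have e4 : (r+1) * (1/r) = 1 + 1/r := by field_simp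
        rw [e4, Real.rpow_add hδ, Real.rpow_one]
        calc k * δ * δ ^ (1/r) / 2 = δ * δ ^ (1/r) * k / 2 := by ring
          _ ≤ δ * δ ^ (1/r) * k / (r+1) ^ (1/r) :=
              div_le_div_of_nonneg_left (by positivity) (by positivity)
                (rpow_succ_div_le_two hr)
      rw [← hrdef]; exact hIlb
  -- combine
  have h1 := hadm_lip f₁ f₂ (hmem x₁) (hmem x₂)
  have hchain : ENNReal.ofReal ((N / C) * δ * B / 2) ≤
      ENNReal.ofReal (K * (C * Dx * P)) := by
    refine (h3.trans h1).trans ?_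
    rw [ENNReal.ofReal_mul hK.le]
    exact mul_le_mul_right h2 _
  have hreal : (N / C) * δ * B / 2 ≤ K * (C * Dx * P) :=
    (ENNReal.ofReal_le_ofReal_iff (by positivity)).mp hchain
  -- final arithmetic
  rw [div_mul_eq_mul_div, le_div_iff₀ (mul_pos hA_pos hB_pos)]
  have hP_eq : P = δ / A := by
    field_simp [hA_pos.ne'] at hAP ⊢
    linarith [hAP]
  rw [hP_eq] at hreal
  have h5 := mul_le_mul_of_nonneg_right hreal
    (le_of_lt (mul_pos (mul_pos two_pos hC) hA_pos))
  have e1 : (N / C * δ * B / 2) * (2 * C * A) = N * δ * B * A := by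
    field_simp
  have e2 : K * (C * Dx * (δ / A)) * (2 * C * A) = 2 * K * C ^ 2 * Dx * δ := by
    field_simp
  rw [e1, e2] at h5
  have h6 : N * (A * B) * δ ≤ (2 * K * C ^ 2 * Dx) * δ := by
    calc N * (A * B) * δ = N * δ * B * A := by ring
      _ ≤ 2 * K * C ^ 2 * Dx * δ := h5
      _ = (2 * K * C ^ 2 * Dx) * δ := by ring
  exact le_of_mul_le_mul_right h6 hδ
end
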